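/- arXiv:1602.06836 — 9 statements merged into one kernel-verified Lean document; each statement's English description precedes it below -/
import Mathlib

section
/- Let k ≥ 1 be an integer and let G be a k-tree that is not a complete graph. Then G has two non-adjacent k-simplicial vertices. -/
/-!
Induct along the simplicial ordering. The last vertex `x` is `k`-simplicial, and deleting it
leaves a `k`-tree `G'`. If `G'` is not complete, it has two non-adjacent `k`-simplicial vertices;
since the neighbourhood of `x` is a clique, `x` misses one of them, which then stays `k`-simplicial
in `G`. If `G'` is complete, it has at most `k + 1` vertices, while `x` has `k` neighbours in `G'`
and misses some vertex `y` of it; hence `G' = K_{k+1}` and `y` is `k`-simplicial in `G`.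
-/

open SimpleGraph

/-- The set of neighbors of `e i` among the earlier vertices `e j`, `j < i`. -/
def earlierNbrs {V : Type} (G : SimpleGraph V) {p : ℕ} (e : Fin p ≃ V) (i : Fin p) : Set V :=
  {v | ∃ j : Fin p, j < i ∧ v = e j ∧ G.Adj (e i) v}

/-- `e` is a `k`-simplicial ordering of the vertices of `G`. -/
def IsKSimplicialOrdering {V : Type} [Fintype V] (k : ℕ) (G : SimpleGraph V)
    (e : Fin (Fintype.card V) ≃ V) : Prop :=
  G.IsClique (⇑e '' {i | (i : ℕ) < k}) ∧
  ∀ i : Fin (Fintype.card V), k ≤ (i : ℕ) →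
    G.IsClique (earlierNbrs G e i) ∧ (earlierNbrs G e i).ncard = k

/-- A `k`-tree is a graph on at least `k` vertices admitting a `k`-simplicial ordering. -/
def IsKTree {V : Type} [Fintype V] (k : ℕ) (G : SimpleGraph V) : Prop :=
  k ≤ Fintype.card V ∧ ∃ e : Fin (Fintype.card V) ≃ V, IsKSimplicialOrdering k G e

/-- A `k`-simplicial vertex: a vertex of degree exactly `k` whose neighborhood is a clique. -/
def IsKSimplicialVertex {V : Type} (G : SimpleGraph V) (k : ℕ) (v : V) : Prop :=
  G.IsClique (G.neighborSet v) ∧ (G.neighborSet v).ncard = k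

open Function Set

section comap

variable {α β : Type} {f : α → β} {G : SimpleGraph β}

lemma isClique_comap_iff (hf : Injective f) {s : Set α} :
    (G.comap f).IsClique s ↔ G.IsClique (f '' s) := by
  constructor
  · rintro h _ ⟨a, ha, rfl⟩ _ ⟨b, hb, rfl⟩ hab
    exact h ha hb (ne_of_apply_ne f hab)
  · intro h a ha b hb hab
    exact h (mem_image_of_mem f ha) (mem_image_of_mem f hb) (hf.ne hab)

lemma image_neighborSet_comap (a : α) :
    f '' (G.comap f).neighborSet a = G.neighborSet (f a) ∩ range f := by
  ext w
  constructor
  · rintro ⟨b, hb, rfl⟩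
    exact ⟨hb, mem_range_self b⟩
  · rintro ⟨hw, b, rfl⟩
    exact ⟨b, hw, rfl⟩

lemma IsKSimplicialVertex.of_comap (hf : Injective f) {k : ℕ} {a : α}
    (h : IsKSimplicialVertex (G.comap f) k a) (hrange : G.neighborSet (f a) ⊆ range f) :
    IsKSimplicialVertex G k (f a) := by
  have hN : G.neighborSet (f a) = f '' (G.comap f).neighborSet a := by
    rw [image_neighborSet_comap, inter_eq_left.mpr hrange]
  rw [IsKSimplicialVertex, hN, ← isClique_comap_iff hf, ncard_image_of_injective _ hf]
  exact h

end comap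

lemma isKSimplicialVertex_top {α : Type} [Fintype α] {k : ℕ} (hα : Fintype.card α = k + 1)
    (a : α) : IsKSimplicialVertex (⊤ : SimpleGraph α) k a := by
  refine ⟨(isClique_univ.mpr rfl).subset (subset_univ _), ?_⟩
  rw [neighborSet_top, ncard_compl, ncard_singleton, Nat.card_eq_fintype_card, hα,
    Nat.add_sub_cancel]

def IsKSimplicialOrder {n : ℕ} (k : ℕ) (G : SimpleGraph (Fin n)) : Prop :=
  G.IsClique {i | (i : ℕ) < k} ∧
  ∀ i : Fin n, k ≤ (i : ℕ) →
    G.IsClique (G.neighborSet i ∩ Iio i) ∧ (G.neighborSet i ∩ Iio i).ncard = k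

lemma IsKSimplicialOrdering.comap {V : Type} [Fintype V] {k : ℕ} {G : SimpleGraph V}
    {e : Fin (Fintype.card V) ≃ V} (h : IsKSimplicialOrdering k G e) :
    IsKSimplicialOrder k (G.comap e) := by
  have hearlier : ∀ i, earlierNbrs G e i = e '' ((G.comap e).neighborSet i ∩ Iio i) := by
    intro i
    ext v
    constructor
    · rintro ⟨j, hj, rfl, hadj⟩
      exact ⟨j, ⟨hadj, hj⟩, rfl⟩
    · rintro ⟨j, ⟨hadj, hj⟩, rfl⟩
      exact ⟨j, hj, rfl, hadj⟩
  refine ⟨(isClique_comap_iff e.injective).mpr h.1, fun i hi => ?_⟩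
  obtain ⟨hclique, hcard⟩ := h.2 i hi
  rw [hearlier, ← isClique_comap_iff e.injective] at hclique
  rw [hearlier, ncard_image_of_injective _ e.injective] at hcard
  exact ⟨hclique, hcard⟩

namespace IsKSimplicialOrder

variable {n k : ℕ}

lemma lt_of_ne_top {G : SimpleGraph (Fin n)} (h : IsKSimplicialOrder k G) (hG : G ≠ ⊤) :
    k < n := by
  by_contra! hn
  refine hG (isClique_univ.mp (h.1.subset fun i _ => ?_))
  exact show (i : ℕ) < k by have := i.isLt; omega

lemma le_succ_of_eq_top {G : SimpleGraph (Fin n)} (h : IsKSimplicialOrder k G) (htop : G = ⊤) :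
    n ≤ k + 1 := by
  by_contra! hn
  have hcard := (h.2 ⟨k + 1, hn⟩ le_self_add).2
  have hIio : Iio (⟨k + 1, hn⟩ : Fin n) ⊆ (⊤ : SimpleGraph (Fin n)).neighborSet ⟨k + 1, hn⟩ :=
    fun j hj => by rw [neighborSet_top]; exact hj.ne
  rw [htop, inter_eq_right.mpr hIio, ncard_eq_toFinset_card', toFinset_Iio, Fin.card_Iio] at hcard
  simp at hcard

lemma exists_not_adj_last_of_comap_eq_top {G : SimpleGraph (Fin (n + 1))} (hG : G ≠ ⊤)
    (htop : G.comap Fin.castSucc = ⊤) : ∃ y : Fin n, ¬ G.Adj (Fin.last n) y.castSucc := by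
  by_contra! hall
  refine hG (isClique_univ.mp fun a _ b _ hab => ?_)
  induction a using Fin.lastCases with
  | last =>
    induction b using Fin.lastCases with
    | last => exact absurd rfl hab
    | cast b => exact hall b
  | cast a =>
    induction b using Fin.lastCases with
    | last => exact (hall a).symm
    | cast b =>
      have : (G.comap Fin.castSucc).Adj a b :=
        htop ▸ (top_adj _ _).mpr fun h => hab (congrArg _ h)
      exact this

lemma isKSimplicialVertex_last {G : SimpleGraph (Fin (n + 1))} (h : IsKSimplicialOrder k G)
    (hk : k ≤ n) : IsKSimplicialVertex G k (Fin.last n) := by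
  have hN : G.neighborSet (Fin.last n) ∩ Iio (Fin.last n) = G.neighborSet (Fin.last n) :=
    inter_eq_left.mpr fun w hw => Fin.lt_last_iff_ne_last.mpr hw.ne.symm
  rw [IsKSimplicialVertex, ← hN]
  exact h.2 (Fin.last n) hk

lemma comap_castSucc {G : SimpleGraph (Fin (n + 1))} (h : IsKSimplicialOrder k G) :
    IsKSimplicialOrder k (G.comap Fin.castSucc) := by
  have hinj := Fin.castSucc_injective n
  have hlower : ∀ i : Fin n, Fin.castSucc '' ((G.comap Fin.castSucc).neighborSet i ∩ Iio i) =
      G.neighborSet i.castSucc ∩ Iio i.castSucc := by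
    intro i
    have hIio : Iio i.castSucc ⊆ range Fin.castSucc := by
      rw [← Fin.image_castSucc_Iio]
      exact image_subset_range _ _
    rw [image_inter hinj, image_neighborSet_comap, Fin.image_castSucc_Iio, inter_assoc,
      inter_eq_right.mpr hIio]
  refine ⟨(isClique_comap_iff hinj).mpr (h.1.subset ?_), fun i hi => ?_⟩
  · rintro _ ⟨j, hj, rfl⟩
    exact hj
  obtain ⟨hclique, hcard⟩ := h.2 i.castSucc hi
  rw [← hlower, ← isClique_comap_iff hinj] at hclique
  rw [← hlower, ncard_image_of_injective _ hinj] at hcard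
  exact ⟨hclique, hcard⟩

lemma exists_isKSimplicialVertex_not_adj_last_of_comap_eq_top {G : SimpleGraph (Fin (n + 1))}
    (h : IsKSimplicialOrder k G) (hG : G ≠ ⊤) (htop : G.comap Fin.castSucc = ⊤) :
    ∃ u : Fin n, ¬ G.Adj (Fin.last n) u.castSucc ∧
      IsKSimplicialVertex (G.comap Fin.castSucc) k u := by
  obtain ⟨y, hy⟩ := exists_not_adj_last_of_comap_eq_top hG htop
  have hkn : k ≤ n := Nat.lt_succ_iff.mp (h.lt_of_ne_top hG)
  have hk : k < n := by
    have hsub : G.neighborSet (Fin.last n) ⊆ range Fin.castSucc \ {y.castSucc} :=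
      fun w hw => ⟨Fin.exists_castSucc_eq.mpr hw.ne.symm, fun hwy => hy (hwy ▸ hw)⟩
    have hle := ncard_le_ncard hsub
    rw [(h.isKSimplicialVertex_last hkn).2, ncard_sdiff_singleton_of_mem (mem_range_self y),
      ncard_range_of_injective (Fin.castSucc_injective n), Nat.card_eq_fintype_card,
      Fintype.card_fin] at hle
    have := y.pos
    omega
  have hcard : Fintype.card (Fin n) = k + 1 := by
    have := h.comap_castSucc.le_succ_of_eq_top htop
    rw [Fintype.card_fin]
    omega
  exact ⟨y, hy, htop ▸ isKSimplicialVertex_top hcard y⟩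

theorem exists_isKSimplicialVertex_pair_not_adj {G : SimpleGraph (Fin n)}
    (h : IsKSimplicialOrder k G) (hG : G ≠ ⊤) :
    ∃ x y, x ≠ y ∧ ¬ G.Adj x y ∧ IsKSimplicialVertex G k x ∧ IsKSimplicialVertex G k y := by
  induction n with
  | zero => exact absurd (h.lt_of_ne_top hG) (Nat.not_lt_zero k)
  | succ n ih =>
    have hkn : k ≤ n := Nat.lt_succ_iff.mp (h.lt_of_ne_top hG)
    have hx := h.isKSimplicialVertex_last hkn
    obtain ⟨u, hxu, hu⟩ : ∃ u : Fin n, ¬ G.Adj (Fin.last n) u.castSucc ∧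
        IsKSimplicialVertex (G.comap Fin.castSucc) k u := by
      by_cases htop : G.comap Fin.castSucc = ⊤
      · exact h.exists_isKSimplicialVertex_not_adj_last_of_comap_eq_top hG htop
      obtain ⟨u, v, huv, hnadj, hu, hv⟩ := ih h.comap_castSucc htop
      by_cases hxu : G.Adj (Fin.last n) u.castSucc
      · exact ⟨v, fun hxv => hnadj (hx.1 hxu hxv ((Fin.castSucc_injective n).ne huv)), hv⟩
      · exact ⟨u, hxu, hu⟩
    refine ⟨Fin.last n, u.castSucc, (Fin.castSucc_lt_last u).ne', hxu, hx,
      hu.of_comap (Fin.castSucc_injective n) fun w hw => ?_⟩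
    exact Fin.exists_castSucc_eq.mpr (by rintro rfl; exact hxu hw.symm)

end IsKSimplicialOrder

theorem ktree_two_nonadjacent_simplicial_general {V : Type} [Fintype V] (k : ℕ)
    (G : SimpleGraph V) (hG : IsKTree k G)
    (hnc : ¬ ∀ x y : V, x ≠ y → G.Adj x y) :
    ∃ x y : V, x ≠ y ∧ ¬ G.Adj x y ∧
      IsKSimplicialVertex G k x ∧ IsKSimplicialVertex G k y := by
  obtain ⟨-, e, he⟩ := hG
  have hne : G.comap e ≠ ⊤ := fun htop => hnc fun x y hxy => by
    have : (G.comap e).Adj (e.symm x) (e.symm y) :=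
      htop ▸ (top_adj _ _).mpr (e.symm.injective.ne hxy)
    simpa using this
  obtain ⟨x, y, hxy, hnadj, hx, hy⟩ := he.comap.exists_isKSimplicialVertex_pair_not_adj hne
  have hrange : ∀ v, G.neighborSet (e v) ⊆ range e := fun _ w _ => e.surjective w
  exact ⟨e x, e y, e.injective.ne hxy, hnadj, hx.of_comap e.injective (hrange x),
    hy.of_comap e.injective (hrange y)⟩

/-- A `k`-tree (`k ≥ 1`) that is not a complete graph has two non-adjacent
`k`-simplicial vertices. -/
theorem ktree_two_nonadjacent_simplicial {V : Type} [Fintype V] (k : ℕ) (hk : 1 ≤ k)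
    (G : SimpleGraph V) (hG : IsKTree k G)
    (hnc : ¬ ∀ x y : V, x ≠ y → G.Adj x y) :
    ∃ x y : V, x ≠ y ∧ ¬ G.Adj x y ∧
      IsKSimplicialVertex G k x ∧ IsKSimplicialVertex G k y :=
  ktree_two_nonadjacent_simplicial_general k G hG hnc
end

section
/- Let k ≥ 1 be an integer, let G be a k-tree, and let K be any k-clique of G. Then G admits a k-simplicial ordering whose basis is K, i.e., whose first k vertices are exactly the vertices of K. -/
open SimpleGraph

/-!
Induction on the length `n` of a prefix containing the clique `K`, rearranging only the first
`n` positions. Let `x` be the vertex at position `n`. If `x ∉ K`, the prefix shrinks. If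
`x ∈ K`, its earlier neighbourhood `N` is a `k`-clique with `N = (K \ {x}) ∪ {y}` for some
`y ∉ K`; by induction `N` can be made the basis, with `y` last in it, and moving `x` in front
of `y` makes `K` the basis: `y` then sees exactly `K` before it, and the vertices in between
are not adjacent to `x`, whose earlier neighbours all lie in `N`.
-/

section

open Set

variable {V : Type} {p : ℕ}

lemma earlierNbrs_eq_image_inter (G : SimpleGraph V) (e : Fin p ≃ V) (i : Fin p) :
    earlierNbrs G e i = e '' {j | (j : ℕ) < i} ∩ G.neighborSet (e i) := by
  ext v
  constructor
  · rintro ⟨j, hj, rfl, hadj⟩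
    exact ⟨⟨j, hj, rfl⟩, hadj⟩
  · rintro ⟨⟨j, hj, rfl⟩, hadj⟩
    exact ⟨j, hj, rfl, hadj⟩

lemma image_lt_eq_of_eqOn {e e' : Fin p ≃ V} {n : ℕ} (h : EqOn e' e {j | n ≤ (j : ℕ)}) :
    e' '' {j | (j : ℕ) < n} = e '' {j | (j : ℕ) < n} := by
  have hcompl : {j : Fin p | (j : ℕ) < n} = {j : Fin p | n ≤ (j : ℕ)}ᶜ := by
    ext j; simp
  rw [hcompl, e'.image_compl, e.image_compl, image_congr h]

lemma earlierNbrs_eq_of_eqOn (G : SimpleGraph V) {e e' : Fin p ≃ V} {n : ℕ}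
    (h : EqOn e' e {j | n ≤ (j : ℕ)}) {i : Fin p} (hi : n ≤ (i : ℕ)) :
    earlierNbrs G e' i = earlierNbrs G e i := by
  rw [earlierNbrs_eq_image_inter, earlierNbrs_eq_image_inter, h hi,
    image_lt_eq_of_eqOn (fun j (hj : (i : ℕ) ≤ j) => h (hi.trans hj))]

lemma ncard_image_lt_le (e : Fin p ≃ V) (n : ℕ) : (e '' {j | (j : ℕ) < n}).ncard ≤ n :=
  calc (e '' {j | (j : ℕ) < n}).ncard ≤ {j : Fin p | (j : ℕ) < n}.ncard := ncard_image_le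
    _ ≤ (Iio n).ncard := ncard_le_ncard_of_injOn Fin.val (fun _ hj => hj) Fin.val_injective.injOn
    _ = n := by simp

lemma exists_eqOn_apply_eq {e : Fin p ≃ V} {n : ℕ} {a : Fin p} (ha : (a : ℕ) < n) {y : V}
    (hy : y ∈ e '' {j | (j : ℕ) < n}) :
    ∃ e' : Fin p ≃ V, EqOn e' e {j | n ≤ (j : ℕ)} ∧ e' a = y := by
  obtain ⟨b, hb, rfl⟩ := hy
  refine ⟨(Equiv.swap b a).trans e, fun j (hj : n ≤ (j : ℕ)) => ?_, by simp⟩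
  rw [Equiv.trans_apply, Equiv.swap_apply_of_ne_of_ne] <;>
    · rintro rfl
      simp only [mem_ofPred_eq] at hb
      omega

lemma image_lt_succ_sdiff (e : Fin p ≃ V) (a : Fin p) :
    e '' {j | (j : ℕ) < a + 1} \ {e a} = e '' {j | (j : ℕ) < a} := by
  rw [← image_singleton, ← image_sdiff e.injective]
  congr 1
  ext j
  simp only [mem_sdiff, mem_ofPred_eq, mem_singleton_iff, Fin.ext_iff]
  omega

lemma val_cycleIcc {a m : Fin p} (ham : a ≤ m) (j : Fin p) :
    (Fin.cycleIcc a m j : ℕ) =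
      if (j : ℕ) < a ∨ (m : ℕ) < j then (j : ℕ) else if (j : ℕ) = m then (a : ℕ)
      else (j : ℕ) + 1 := by
  have : NeZero p := ⟨by omega⟩
  rcases lt_or_ge j a with hja | haj
  · rw [Fin.cycleIcc_of_lt hja, if_pos (Or.inl (show (j : ℕ) < a from hja))]
  rcases lt_trichotomy j m with hjm | rfl | hmj
  · rw [Fin.cycleIcc_of_ge_of_lt haj hjm, Fin.val_add_one_of_lt' (by omega),
      if_neg (by omega), if_neg (Fin.val_ne_of_ne hjm.ne)]
  · rw [Fin.cycleIcc_of_last ham, if_neg (by omega), if_pos rfl]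
  · rw [Fin.cycleIcc_of_gt hmj, if_pos (Or.inr (show (m : ℕ) < j from hmj))]

lemma val_cycleIcc_symm {a m j : Fin p} (haj : a < j) (hjm : j ≤ m) :
    ((Fin.cycleIcc a m).symm j : ℕ) = j - 1 := by
  have h := val_cycleIcc (haj.le.trans hjm) ((Fin.cycleIcc a m).symm j)
  rw [Equiv.apply_symm_apply] at h
  have : (a : ℕ) < j := haj
  have : (j : ℕ) ≤ m := hjm
  split_ifs at h <;> omega

lemma image_cycleIcc_symm_lt {a m : Fin p} {t : ℕ} (hat : (a : ℕ) < t) (htm : t ≤ m) :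
    (Fin.cycleIcc a m).symm '' {j | (j : ℕ) < t} = insert m {j : Fin p | (j : ℕ) < t - 1} := by
  ext j
  rw [Equiv.image_symm_eq_preimage, mem_preimage, mem_ofPred_eq, mem_insert_iff, mem_ofPred_eq,
    val_cycleIcc (show a ≤ m from Fin.le_def.mpr (by omega)), Fin.ext_iff]
  split_ifs <;> omega

lemma eqOn_cycleIcc_symm_trans (e : Fin p ≃ V) (a m : Fin p) :
    EqOn ((Fin.cycleIcc a m).symm.trans e) e {j | (m : ℕ) + 1 ≤ j} := fun j hj => by
  rw [Equiv.trans_apply, (Equiv.symm_apply_eq _).2 (Fin.cycleIcc_of_gt hj).symm]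

lemma earlierNbrs_cycleIcc_symm (G : SimpleGraph V) (e : Fin p ≃ V) {a m j : Fin p}
    (haj : a < j) (hjm : j ≤ m) :
    earlierNbrs G ((Fin.cycleIcc a m).symm.trans e) j =
      insert (e m) (e '' {i | (i : ℕ) < (Fin.cycleIcc a m).symm j}) ∩
        G.neighborSet (e ((Fin.cycleIcc a m).symm j)) := by
  rw [earlierNbrs_eq_image_inter, Equiv.coe_trans, image_comp, image_cycleIcc_symm_lt haj hjm,
    image_insert_eq, val_cycleIcc_symm haj hjm]
  rfl

lemma SimpleGraph.IsClique.sdiff_subset_earlierNbrs {G : SimpleGraph V} {e : Fin p ≃ V}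
    {K : Set V} (hK : G.IsClique K) {i : Fin p} (hi : e i ∈ K)
    (hKi : K ⊆ e '' {j | (j : ℕ) < i + 1}) :
    K \ {e i} ⊆ earlierNbrs G e i := by
  rintro v ⟨hvK, hvi⟩
  obtain ⟨j, hj, rfl⟩ := hKi hvK
  have hji : (j : ℕ) ≠ i := fun h => hvi (Fin.ext h ▸ rfl)
  simp only [mem_ofPred_eq] at hj
  exact ⟨j, Fin.lt_def.2 (by omega), rfl, hK hi hvK (Ne.symm hvi)⟩

lemma not_adj_of_earlierNbrs_eq {G : SimpleGraph V} {e : Fin p ≃ V} {k : ℕ} {m j : Fin p}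
    (hm : earlierNbrs G e m = e '' {i | (i : ℕ) < k}) (hkj : k ≤ (j : ℕ)) (hjm : j < m) :
    ¬ G.Adj (e m) (e j) := by
  intro h
  have hj : e j ∈ e '' {i | (i : ℕ) < k} := hm ▸ ⟨j, hjm, rfl, h⟩
  rw [e.injective.mem_set_image, mem_ofPred_eq] at hj
  omega

variable [Fintype V] {k : ℕ} {G : SimpleGraph V} {e : Fin (Fintype.card V) ≃ V}

lemma IsKSimplicialOrdering.of_eqOn {e' : Fin (Fintype.card V) ≃ V}
    (he : IsKSimplicialOrdering k G e) (h : EqOn e' e {j | k ≤ (j : ℕ)}) :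
    IsKSimplicialOrdering k G e' := by
  refine ⟨by rw [image_lt_eq_of_eqOn h]; exact he.1, fun i hi => ?_⟩
  rw [earlierNbrs_eq_of_eqOn G h hi]
  exact he.2 i hi

/-- `(Fin.cycleIcc a m).symm.trans e` lists the vertices of `e` in the order
`e 0, …, e (a - 1), e m, e a, e (a + 1), …, e (m - 1), e (m + 1), …`. -/
lemma IsKSimplicialOrdering.cycleIcc_symm_trans (he : IsKSimplicialOrdering k G e)
    {a m : Fin (Fintype.card V)} (ha : (a : ℕ) + 1 = k) (hm : k ≤ (m : ℕ))
    (hxm : earlierNbrs G e m = e '' {j | (j : ℕ) < k}) :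
    IsKSimplicialOrdering k G ((Fin.cycleIcc a m).symm.trans e) ∧
      (Fin.cycleIcc a m).symm.trans e '' {j | (j : ℕ) < k} =
        insert (e m) (e '' {j | (j : ℕ) < k} \ {e a}) := by
  set σ := (Fin.cycleIcc a m).symm
  set B := e '' {j | (j : ℕ) < k}
  have hBa : B \ {e a} = e '' {j | (j : ℕ) < a} := by
    rw [← image_lt_succ_sdiff e a, ha]
  have hbasis : σ.trans e '' {j | (j : ℕ) < k} = insert (e m) (B \ {e a}) := by
    rw [Equiv.coe_trans, image_comp, image_cycleIcc_symm_lt (by omega) hm, image_insert_eq, hBa,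
      show k - 1 = a by omega]
  have hadj : ∀ v ∈ B, G.Adj (e m) v := by
    rw [← hxm, earlierNbrs_eq_image_inter]
    exact fun v hv => hv.2
  have hclique : G.IsClique (insert (e m) B) :=
    isClique_insert.2 ⟨he.1, fun v hv _ => hadj v hv⟩
  have hBcard : B.ncard = k := hxm ▸ (he.2 m hm).2
  have hmB : e m ∉ B := fun h => G.irrefl (hadj _ h)
  have haB : e a ∈ B := ⟨a, by simp only [mem_ofPred_eq]; omega, rfl⟩
  refine ⟨⟨hbasis ▸ hclique.subset (insert_subset_insert sdiff_subset), fun i hi => ?_⟩,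
    hbasis⟩
  rcases lt_or_ge m i with hmi | him
  · rw [earlierNbrs_eq_of_eqOn G (eqOn_cycleIcc_symm_trans e a m) hmi]
    exact he.2 i hi
  have hai : a < i := Fin.lt_def.2 (by omega)
  rw [earlierNbrs_cycleIcc_symm G e hai him]
  have hσi : (σ i : ℕ) = i - 1 := val_cycleIcc_symm hai him
  rcases hi.eq_or_lt with hik | hki
  · have hσa : σ i = a := Fin.ext (by omega)
    have hprev : e '' {j | (j : ℕ) < a} ∩ G.neighborSet (e a) = B \ {e a} := by
      rw [← hBa]
      exact inter_eq_left.2 fun v hv => he.1 haB hv.1 (Ne.symm hv.2)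
    rw [hσa, insert_inter_of_mem (show e m ∈ G.neighborSet (e a) from
      (hadj _ haB).symm), hprev]
    refine ⟨hclique.subset (insert_subset_insert sdiff_subset), ?_⟩
    rw [ncard_insert_of_notMem (fun h => hmB h.1), ncard_sdiff_singleton_of_mem haB, hBcard]
    omega
  · have hnadj : e m ∉ G.neighborSet (e (σ i)) := fun h =>
      not_adj_of_earlierNbrs_eq hxm (by omega) (by omega) h.symm
    rw [insert_inter_of_notMem hnadj, ← earlierNbrs_eq_image_inter]
    exact he.2 (σ i) (by omega)

lemma basis_eq_of_subset_image_lt {n : ℕ} (hn : n ≤ k) {K : Set V} (hKcard : K.ncard = k)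
    (hKn : K ⊆ e '' {j | (j : ℕ) < n}) : e '' {j | (j : ℕ) < k} = K := by
  have hK : K = e '' {j | (j : ℕ) < n} :=
    eq_of_subset_of_ncard_le hKn (by rw [hKcard]; exact (ncard_image_lt_le e n).trans hn)
  have hsub : e '' {j | (j : ℕ) < n} ⊆ e '' {j | (j : ℕ) < k} :=
    image_mono fun j (hj : (j : ℕ) < n) => hj.trans_le hn
  rw [hK]
  exact (eq_of_subset_of_ncard_le hsub (by rw [← hK, hKcard]; exact ncard_image_lt_le e k)).symm

lemma IsKSimplicialOrdering.exists_exchange (he : IsKSimplicialOrdering k G e)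
    {m : Fin (Fintype.card V)} (hm : k ≤ (m : ℕ))
    (hxm : earlierNbrs G e m = e '' {j | (j : ℕ) < k}) {y : V}
    (hy : y ∈ e '' {j | (j : ℕ) < k}) :
    ∃ e' : Fin (Fintype.card V) ≃ V, IsKSimplicialOrdering k G e' ∧
      e' '' {j | (j : ℕ) < k} = insert (e m) (e '' {j | (j : ℕ) < k} \ {y}) ∧
      EqOn e' e {j | (m : ℕ) + 1 ≤ j} := by
  obtain ⟨b, hb, -⟩ := id hy
  simp only [mem_ofPred_eq] at hb
  let a : Fin (Fintype.card V) := ⟨k - 1, by omega⟩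
  have ha : (a : ℕ) + 1 = k := by simp only [a]; omega
  obtain ⟨e₁, he₁e, he₁a⟩ := exists_eqOn_apply_eq (show (a : ℕ) < k by omega) hy
  have hbasis₁ := image_lt_eq_of_eqOn he₁e
  obtain ⟨he₂, hbasis₂⟩ := (he.of_eqOn he₁e).cycleIcc_symm_trans ha hm
    (by rw [earlierNbrs_eq_of_eqOn G he₁e hm, hxm, hbasis₁])
  refine ⟨_, he₂, by rw [hbasis₂, he₁e hm, hbasis₁, he₁a], fun j hj => ?_⟩
  rw [eqOn_cycleIcc_symm_trans e₁ a m hj]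
  exact he₁e (show k ≤ (j : ℕ) by simp only [mem_ofPred_eq] at hj; omega)

lemma IsKSimplicialOrdering.exists_basis_eq_of_subset (he : IsKSimplicialOrdering k G e) (n : ℕ)
    {K : Set V} (hK : G.IsClique K) (hKcard : K.ncard = k) (hKn : K ⊆ e '' {j | (j : ℕ) < n}) :
    ∃ e' : Fin (Fintype.card V) ≃ V, IsKSimplicialOrdering k G e' ∧
      e' '' {j | (j : ℕ) < k} = K ∧ EqOn e' e {j | n ≤ (j : ℕ)} := by
  induction n generalizing K with
  | zero =>
    exact ⟨e, he, basis_eq_of_subset_image_lt (Nat.zero_le k) hKcard hKn, fun _ _ => rfl⟩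
  | succ n ih =>
    by_cases hKn' : K ⊆ e '' {j | (j : ℕ) < n}
    · obtain ⟨e', he', hbasis, heq⟩ := ih hK hKcard hKn'
      exact ⟨e', he', hbasis, fun j (hj : n + 1 ≤ (j : ℕ)) => heq (Nat.le_of_succ_le hj)⟩
    obtain ⟨x, hxK, hxn⟩ := not_subset.1 hKn'
    obtain ⟨i, hi, rfl⟩ := hKn hxK
    simp only [mem_ofPred_eq] at hi
    have hin : (i : ℕ) = n := by
      by_contra h
      exact hxn ⟨i, by simp only [mem_ofPred_eq]; omega, rfl⟩
    rcases lt_or_ge n k with hnk | hkn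
    · exact ⟨e, he, basis_eq_of_subset_image_lt hnk hKcard hKn, fun _ _ => rfl⟩
    obtain ⟨hNclique, hNcard⟩ := he.2 i (by omega)
    have hKN : K \ {e i} ⊆ earlierNbrs G e i := hK.sdiff_subset_earlierNbrs hxK (hin ▸ hKn)
    have hKx : (K \ {e i}).ncard = k - 1 := by rw [ncard_sdiff_singleton_of_mem hxK, hKcard]
    have hk : 0 < k := hKcard ▸ (ncard_pos).2 ⟨_, hxK⟩
    obtain ⟨y, hyN, hyK⟩ := exists_mem_notMem_of_ncard_lt_ncard (s := K \ {e i})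
      (t := earlierNbrs G e i) (by omega)
    have hNn : earlierNbrs G e i ⊆ e '' {j | (j : ℕ) < n} := by
      rw [earlierNbrs_eq_image_inter, ← hin]
      exact inter_subset_left
    obtain ⟨e₁, he₁, hbasis₁, heq₁⟩ := ih hNclique hNcard hNn
    obtain ⟨e₂, he₂, hbasis₂, heq₂⟩ := he₁.exists_exchange (m := i) (by omega)
      (by rw [earlierNbrs_eq_of_eqOn G heq₁ hin.ge, hbasis₁]) (by rw [hbasis₁]; exact hyN)
    have hNy : earlierNbrs G e i \ {y} = K \ {e i} :=
      (eq_of_subset_of_ncard_le (subset_sdiff_singleton hKN hyK)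
        (by rw [ncard_sdiff_singleton_of_mem hyN, hNcard, hKx])).symm
    refine ⟨e₂, he₂, ?_, fun j (hj : n + 1 ≤ (j : ℕ)) => ?_⟩
    · rw [hbasis₂, hbasis₁, heq₁ hin.ge, hNy, insert_sdiff_singleton, insert_eq_of_mem hxK]
    · exact (heq₂ (by simp only [mem_ofPred_eq]; omega)).trans (heq₁ (Nat.le_of_succ_le hj))

end

theorem ktree_any_clique_basis_general {V : Type} [Fintype V] (k : ℕ)
    (G : SimpleGraph V) (hG : IsKTree k G)
    (K : Set V) (hK : G.IsClique K) (hKcard : K.ncard = k) :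
    ∃ e : Fin (Fintype.card V) ≃ V,
      IsKSimplicialOrdering k G e ∧ ⇑e '' {i | (i : ℕ) < k} = K := by
  obtain ⟨-, e, he⟩ := hG
  obtain ⟨e', he', hbasis, -⟩ := he.exists_basis_eq_of_subset (Fintype.card V) hK hKcard
    fun v _ => ⟨e.symm v, (e.symm v).isLt, e.apply_symm_apply v⟩
  exact ⟨e', he', hbasis⟩

/-- Any `k`-clique `K` of a `k`-tree `G` (`k ≥ 1`) can be taken as the basis of a
`k`-simplicial ordering of `G`: there is a `k`-simplicial ordering whose first `k`
vertices are exactly the vertices of `K`. -/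
theorem ktree_any_clique_basis {V : Type} [Fintype V] (k : ℕ) (hk : 1 ≤ k)
    (G : SimpleGraph V) (hG : IsKTree k G)
    (K : Set V) (hK : G.IsClique K) (hKcard : K.ncard = k) :
    ∃ e : Fin (Fintype.card V) ≃ V,
      IsKSimplicialOrdering k G e ∧ ⇑e '' {i | (i : ℕ) < k} = K :=
  ktree_any_clique_basis_general k G hG K hK hKcard
end

section
/- Let k ≥ 1 be an integer, let G be a k-tree, and let K be any k-clique of G. Then every connected component of the graph G − K obtained by deleting the vertices of K contains exactly one vertex that is complete to K. -/
/-!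
Induct along a `k`-simplicial ordering: for every prefix `A` and every `k`-clique `K ⊆ A`,
each vertex of `A \ K` reaches, inside `A \ K`, exactly one vertex complete to `K`.
The added vertex `x` has a `k`-clique `N` of earlier neighbours, so a path through `x` can be
shortcut inside `N` and adding `x` merges no old components of `G[A] - K`.
If `x ∈ K`, then `K \ {x} ⊆ N`, and `N \ K` is a single vertex `y`: every vertex complete to `K`
is adjacent to `x`, hence equals `y`, and a vertex `w ∉ N` reaches `y` through the vertex complete
to `N` that the induction hypothesis, applied to the clique `N`, provides in its component.
If `x ∉ K`, then `x` is complete to `K` only when `K = N`, and then `x` is isolated in `G - K`.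
-/

open SimpleGraph

namespace SimpleGraph

variable {V : Type*} {G : SimpleGraph V}

/-- Note that `G.ReachableIn S u u` holds even for `u ∉ S`. -/
def ReachableIn (G : SimpleGraph V) (S : Set V) : V → V → Prop :=
  Relation.ReflTransGen fun a b => a ∈ S ∧ b ∈ S ∧ G.Adj a b

namespace ReachableIn

variable {S T : Set V} {u v w x : V}

theorem head (hu : u ∈ S) (hv : v ∈ S) (huv : G.Adj u v) (h : G.ReachableIn S v w) :
    G.ReachableIn S u w :=
  Relation.ReflTransGen.head ⟨hu, hv, huv⟩ h

theorem tail (h : G.ReachableIn S u v) (hv : v ∈ S) (hw : w ∈ S) (hvw : G.Adj v w) :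
    G.ReachableIn S u w :=
  Relation.ReflTransGen.tail h ⟨hv, hw, hvw⟩

theorem symm (h : G.ReachableIn S u v) : G.ReachableIn S v u := by
  induction h with
  | refl => exact .refl
  | tail _ hbc ih => exact head hbc.2.1 hbc.1 hbc.2.2.symm ih

theorem mono (hST : S ⊆ T) (h : G.ReachableIn S u v) : G.ReachableIn T u v :=
  Relation.ReflTransGen.mono (fun _ _ h => ⟨hST h.1, hST h.2.1, h.2.2⟩) u v h

theorem eq_of_forall_not_adj (h : G.ReachableIn S u v) (hu : ∀ a ∈ S, ¬ G.Adj u a) :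
    v = u := by
  rcases Relation.ReflTransGen.cases_head h with rfl | ⟨a, ⟨-, ha, hua⟩, -⟩
  · rfl
  · exact absurd hua (hu a ha)

theorem sdiff_singleton (hx : G.IsClique (G.neighborSet x ∩ S)) (h : G.ReachableIn S u v)
    (hu : u ≠ x) (hv : v ≠ x) : G.ReachableIn (S \ {x}) u v := by
  suffices ∀ u, G.ReachableIn S u v → (u ≠ x → G.ReachableIn (S \ {x}) u v) ∧
      (u = x → ∀ a ∈ G.neighborSet x ∩ S, G.ReachableIn (S \ {x}) a v) from
    (this u h).1 hu
  intro u h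
  induction h using Relation.ReflTransGen.head_induction_on with
  | refl => exact ⟨fun _ => .refl, fun h => absurd h hv⟩
  | @head a c hac _ ih =>
    obtain ⟨ha, hc, hadj⟩ := hac
    refine ⟨fun hax => ?_, fun hax b hb => ?_⟩
    · by_cases hcx : c = x
      · exact ih.2 hcx a ⟨hcx ▸ hadj.symm, ha⟩
      · exact head ⟨ha, hax⟩ ⟨hc, hcx⟩ hadj (ih.1 hcx)
    · subst hax
      have hcx : c ≠ a := hadj.ne.symm
      by_cases hbc : b = c
      · exact hbc ▸ ih.1 hcx
      · exact head ⟨hb.2, hb.1.ne.symm⟩ ⟨hc, hcx⟩ (hx hb ⟨hadj, hc⟩ hbc) (ih.1 hcx)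

end ReachableIn

theorem reachableIn_iff_reachable_induce {S : Set V} {u v : S} :
    G.ReachableIn S u v ↔ (G.induce S).Reachable u v := by
  constructor
  · intro h
    suffices ∀ w, G.ReachableIn S u w → ∀ hw : w ∈ S, (G.induce S).Reachable u ⟨w, hw⟩ from
      this v h v.2
    intro w h
    induction h with
    | refl => exact fun _ => .rfl
    | tail _ hbc ih =>
      exact fun _ => (ih hbc.1).trans (induce_adj.2 hbc.2.2).reachable
  · rintro ⟨p⟩
    induction p with
    | nil => exact .refl
    | cons h _ ih => exact ReachableIn.head (Subtype.prop _) (Subtype.prop _) h ih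

end SimpleGraph

variable {V : Type*} {G : SimpleGraph V}

structure IsKSimplicialOver (k : ℕ) (G : SimpleGraph V) (A : Set V) (x : V) : Prop where
  notMem : x ∉ A
  isClique : G.IsClique (G.neighborSet x ∩ A)
  ncard_eq : (G.neighborSet x ∩ A).ncard = k

def ExistsCompleteReachable (k : ℕ) (G : SimpleGraph V) (A : Set V) : Prop :=
  ∀ K ⊆ A, G.IsClique K → K.ncard = k → ∀ w ∈ A \ K,
    ∃ v ∈ A \ K, K ⊆ G.neighborSet v ∧ G.ReachableIn (A \ K) w v

def UniqueCompleteReachable (k : ℕ) (G : SimpleGraph V) (A : Set V) : Prop :=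
  ∀ K ⊆ A, G.IsClique K → K.ncard = k → ∀ v₁ ∈ A \ K, ∀ v₂ ∈ A \ K,
    K ⊆ G.neighborSet v₁ → K ⊆ G.neighborSet v₂ → G.ReachableIn (A \ K) v₁ v₂ → v₁ = v₂

theorem sdiff_singleton_subset_neighborSet_inter_of_isClique {A K : Set V} {x : V}
    (hK : G.IsClique K) (hKA : K ⊆ insert x A) (hxK : x ∈ K) :
    K \ {x} ⊆ G.neighborSet x ∩ A :=
  fun _ ⟨hu, hux⟩ => ⟨hK hxK hu (Ne.symm hux), (hKA hu).resolve_left hux⟩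

section Finite

variable [Finite V] {k : ℕ} {A K : Set V}

theorem existsCompleteReachable_of_ncard_le (hA : A.ncard ≤ k) :
    ExistsCompleteReachable k G A := by
  intro K hKA _ hKcard w hw
  rw [Set.eq_of_subset_of_ncard_le hKA (hKcard ▸ hA), Set.sdiff_self] at hw
  exact hw.elim

theorem uniqueCompleteReachable_of_ncard_le (hA : A.ncard ≤ k) :
    UniqueCompleteReachable k G A := by
  intro K hKA _ hKcard v₁ hv₁
  rw [Set.eq_of_subset_of_ncard_le hKA (hKcard ▸ hA), Set.sdiff_self] at hv₁
  exact hv₁.elim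

namespace IsKSimplicialOver

variable {x : V} (hx : IsKSimplicialOver k G A x)
include hx

theorem exists_neighborSet_inter_sdiff_eq_singleton (hK : G.IsClique K) (hKA : K ⊆ insert x A)
    (hKcard : K.ncard = k) (hxK : x ∈ K) : ∃ y, (G.neighborSet x ∩ A) \ K = {y} := by
  have hsub := sdiff_singleton_subset_neighborSet_inter_of_isClique hK hKA hxK
  have hk : 0 < k := hKcard ▸ (Set.ncard_pos).2 ⟨x, hxK⟩
  have hxN : x ∉ G.neighborSet x ∩ A := fun h => G.loopless.irrefl x h.1
  have hdiff : (G.neighborSet x ∩ A) \ K = (G.neighborSet x ∩ A) \ (K \ {x}) := by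
    rw [Set.sdiff_sdiff_right, Set.inter_singleton_eq_empty.2 hxN, Set.union_empty]
  rw [← Set.ncard_eq_one, hdiff, Set.ncard_sdiff hsub, hx.ncard_eq,
    Set.ncard_sdiff_singleton_of_mem hxK, hKcard]
  omega

theorem eq_neighborSet_inter (hKA : K ⊆ insert x A) (hKcard : K.ncard = k) (hxK : x ∉ K)
    (hKx : K ⊆ G.neighborSet x) : K = G.neighborSet x ∩ A :=
  Set.eq_of_subset_of_ncard_le
    (fun u hu => ⟨hKx hu, (hKA hu).resolve_left (ne_of_mem_of_not_mem hu hxK)⟩)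
    (by rw [hx.ncard_eq, hKcard])

theorem existsCompleteReachable_insert (ih : ExistsCompleteReachable k G A) :
    ExistsCompleteReachable k G (insert x A) := by
  intro K hKA hK hKcard w ⟨hwA, hwK⟩
  by_cases hxK : x ∈ K
  · obtain ⟨y, hy⟩ := hx.exists_neighborSet_inter_sdiff_eq_singleton hK hKA hKcard hxK
    have hyN : y ∈ (G.neighborSet x ∩ A) \ K := hy ▸ rfl
    have hKN := sdiff_singleton_subset_neighborSet_inter_of_isClique hK hKA hxK
    have hyS : y ∈ insert x A \ K := ⟨Or.inr hyN.1.2, hyN.2⟩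
    have hyK : K ⊆ G.neighborSet y := by
      intro u hu
      by_cases hux : u = x
      · exact hux ▸ hyN.1.1.symm
      · exact hx.isClique hyN.1 (hKN ⟨hu, hux⟩) (ne_of_mem_of_not_mem hu hyN.2).symm
    have hsub : A \ (G.neighborSet x ∩ A) ⊆ insert x A \ K := fun u ⟨huA, huN⟩ =>
      ⟨Or.inr huA, fun huK => huN (hKN ⟨huK, ne_of_mem_of_not_mem huA hx.notMem⟩)⟩
    refine ⟨y, hyS, hyK, ?_⟩
    have hwA' : w ∈ A := hwA.resolve_left (ne_of_mem_of_not_mem hxK hwK).symm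
    by_cases hwN : w ∈ G.neighborSet x ∩ A
    · obtain rfl : w = y := by rw [← Set.mem_singleton_iff, ← hy]; exact ⟨hwN, hwK⟩
      exact .refl
    · obtain ⟨v, hv, hvN, hwv⟩ :=
        ih _ Set.inter_subset_right hx.isClique hx.ncard_eq w ⟨hwA', hwN⟩
      exact (hwv.mono hsub).tail (hsub hv) hyS (hvN hyN.1)
  · have hKA' : K ⊆ A := fun u hu => (hKA hu).resolve_left (ne_of_mem_of_not_mem hu hxK)
    have hsub : A \ K ⊆ insert x A \ K := Set.sdiff_subset_sdiff_left (Set.subset_insert x A)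
    rcases hwA with rfl | hwA
    · by_cases hNK : G.neighborSet w ∩ A ⊆ K
      · have hKN : K = G.neighborSet w ∩ A :=
          (Set.eq_of_subset_of_ncard_le hNK (by rw [hx.ncard_eq, hKcard])).symm
        exact ⟨w, ⟨Or.inl rfl, hwK⟩, fun u hu => (hKN ▸ hu).1, .refl⟩
      · obtain ⟨a, haN, haK⟩ := Set.not_subset.1 hNK
        obtain ⟨v, hv, hvK, hav⟩ := ih K hKA' hK hKcard a ⟨haN.2, haK⟩
        exact ⟨v, hsub hv, hvK,
          (hav.mono hsub).head ⟨Or.inl rfl, hwK⟩ ⟨Or.inr haN.2, haK⟩ haN.1⟩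
    · obtain ⟨v, hv, hvK, hwv⟩ := ih K hKA' hK hKcard w ⟨hwA, hwK⟩
      exact ⟨v, hsub hv, hvK, hwv.mono hsub⟩

theorem uniqueCompleteReachable_insert (ih : UniqueCompleteReachable k G A) :
    UniqueCompleteReachable k G (insert x A) := by
  intro K hKA hK hKcard v₁ hv₁ v₂ hv₂ hv₁K hv₂K h
  by_cases hxK : x ∈ K
  · obtain ⟨y, hy⟩ := hx.exists_neighborSet_inter_sdiff_eq_singleton hK hKA hKcard hxK
    have hmem : ∀ v ∈ insert x A \ K, K ⊆ G.neighborSet v → v = y := by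
      intro v ⟨hvA, hvK⟩ hvK'
      rw [← Set.mem_singleton_iff, ← hy]
      exact ⟨⟨(hvK' hxK).symm, hvA.resolve_left (ne_of_mem_of_not_mem hxK hvK).symm⟩, hvK⟩
    rw [hmem v₁ hv₁ hv₁K, hmem v₂ hv₂ hv₂K]
  · have hKA' : K ⊆ A := fun u hu => (hKA hu).resolve_left (ne_of_mem_of_not_mem hu hxK)
    have hx_isolated : K ⊆ G.neighborSet x → ∀ a ∈ insert x A \ K, ¬ G.Adj x a := by
      intro hKx a ⟨haA, haK⟩ hxa
      rw [hx.eq_neighborSet_inter hKA hKcard hxK hKx] at haK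
      exact haK ⟨hxa, haA.resolve_left hxa.ne'⟩
    by_cases hv₁x : v₁ = x
    · subst hv₁x
      exact (h.eq_of_forall_not_adj (hx_isolated hv₁K)).symm
    by_cases hv₂x : v₂ = x
    · subst hv₂x
      exact h.symm.eq_of_forall_not_adj (hx_isolated hv₂K)
    have hS : (insert x A \ K) \ {x} = A \ K := by
      rw [Set.sdiff_sdiff_comm, Set.insert_sdiff_self_of_notMem hx.notMem]
    have hclique : G.IsClique (G.neighborSet x ∩ (insert x A \ K)) :=
      hx.isClique.subset fun _ hu => Set.mem_inter hu.1 (hu.2.1.resolve_left hu.1.ne')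
    refine ih K hKA' hK hKcard v₁ ?_ v₂ ?_ hv₁K hv₂K ?_ <;> rw [← hS]
    · exact ⟨hv₁, hv₁x⟩
    · exact ⟨hv₂, hv₂x⟩
    · exact h.sdiff_singleton hclique hv₁x hv₂x

end IsKSimplicialOver

end Finite

section InitialSegment

variable {V : Type*} {p : ℕ} (e : Fin p ≃ V)

def initialSegment (m : ℕ) : Set V := e '' {i | (i : ℕ) < m}

theorem initialSegment_succ {m : ℕ} (hm : m < p) :
    initialSegment e (m + 1) = insert (e ⟨m, hm⟩) (initialSegment e m) := by
  ext v
  simp only [initialSegment, Set.mem_image, Set.mem_ofPred_eq, Set.mem_insert_iff,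
    Nat.lt_succ_iff_lt_or_eq]
  constructor
  · rintro ⟨i, hi | hi, rfl⟩
    · exact Or.inr ⟨i, hi, rfl⟩
    · exact Or.inl (congrArg e (Fin.ext hi))
  · rintro (rfl | ⟨i, hi, rfl⟩)
    · exact ⟨⟨m, hm⟩, Or.inr rfl, rfl⟩
    · exact ⟨i, Or.inl hi, rfl⟩

theorem notMem_initialSegment {m : ℕ} (hm : m < p) : e ⟨m, hm⟩ ∉ initialSegment e m := by
  rintro ⟨i, hi, hie⟩
  obtain rfl := e.injective hie
  exact (lt_irrefl m hi).elim

theorem ncard_initialSegment {m : ℕ} (hm : m ≤ p) : (initialSegment e m).ncard = m := by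
  rw [initialSegment, Set.ncard_image_of_injective _ e.injective, ← Fin.range_castLE hm,
    Set.ncard_range_of_injective (Fin.castLE_injective hm), Nat.card_eq_fintype_card,
    Fintype.card_fin]

theorem initialSegment_self : initialSegment e p = Set.univ :=
  Set.eq_univ_of_forall fun v => ⟨e.symm v, (e.symm v).isLt, e.apply_symm_apply v⟩

end InitialSegment

theorem earlierNbrs_eq_neighborSet_inter {V : Type} (G : SimpleGraph V) {p : ℕ} (e : Fin p ≃ V)
    (i : Fin p) : earlierNbrs G e i = G.neighborSet (e i) ∩ initialSegment e i := by
  ext v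
  constructor
  · rintro ⟨j, hj, rfl, hadj⟩
    exact ⟨hadj, j, hj, rfl⟩
  · rintro ⟨hadj, j, hj, rfl⟩
    exact ⟨j, hj, rfl, hadj⟩

namespace IsKSimplicialOrdering

variable {V : Type} [Fintype V] {k : ℕ} {G : SimpleGraph V} {e : Fin (Fintype.card V) ≃ V}

theorem isKSimplicialOver (he : IsKSimplicialOrdering k G e) {m : ℕ} (hkm : k ≤ m)
    (hm : m < Fintype.card V) : IsKSimplicialOver k G (initialSegment e m) (e ⟨m, hm⟩) := by
  obtain ⟨hclique, hcard⟩ := he.2 ⟨m, hm⟩ hkm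
  rw [earlierNbrs_eq_neighborSet_inter] at hclique hcard
  exact ⟨notMem_initialSegment e hm, hclique, hcard⟩

theorem induction_univ (he : IsKSimplicialOrdering k G e) (hkV : k ≤ Fintype.card V)
    {P : Set V → Prop} (base : P (initialSegment e k))
    (step : ∀ A x, IsKSimplicialOver k G A x → P A → P (insert x A)) : P Set.univ := by
  suffices ∀ m, k ≤ m → m ≤ Fintype.card V → P (initialSegment e m) by
    simpa only [initialSegment_self] using this _ hkV le_rfl
  intro m hkm
  induction m, hkm using Nat.le_induction with
  | base => exact fun _ => base
  | succ m hkm ih =>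
    intro hm
    rw [initialSegment_succ e hm]
    exact step _ _ (he.isKSimplicialOver hkm hm) (ih (Nat.le_of_succ_le hm))

end IsKSimplicialOrdering

namespace IsKTree

variable {V : Type} [Fintype V] {k : ℕ} {G : SimpleGraph V}

theorem existsCompleteReachable_univ (hG : IsKTree k G) :
    ExistsCompleteReachable k G Set.univ :=
  let ⟨hkV, e, he⟩ := hG
  he.induction_univ hkV (existsCompleteReachable_of_ncard_le (ncard_initialSegment e hkV).le)
    fun _ _ hx ih => hx.existsCompleteReachable_insert ih

theorem uniqueCompleteReachable_univ (hG : IsKTree k G) :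
    UniqueCompleteReachable k G Set.univ :=
  let ⟨hkV, e, he⟩ := hG
  he.induction_univ hkV (uniqueCompleteReachable_of_ncard_le (ncard_initialSegment e hkV).le)
    fun _ _ hx ih => hx.uniqueCompleteReachable_insert ih

end IsKTree

theorem ktree_component_complete_vertex_general {V : Type} [Fintype V] (k : ℕ)
    (G : SimpleGraph V) (hG : IsKTree k G)
    (K : Set V) (hK : G.IsClique K) (hKcard : K.ncard = k) :
    ∀ C : (G.induce Kᶜ).ConnectedComponent,
      ∃! v : ↥Kᶜ, v ∈ C.supp ∧ ∀ u ∈ K, G.Adj ↑v u := by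
  have hKc : Set.univ \ K = Kᶜ := (Set.compl_eq_univ_sdiff K).symm
  intro C
  obtain ⟨w, rfl⟩ := C.exists_rep
  obtain ⟨v, hv, hvK, hwv⟩ :=
    hG.existsCompleteReachable_univ K (Set.subset_univ K) hK hKcard w ⟨Set.mem_univ _, w.2⟩
  rw [hKc] at hv hwv
  have hwv : (G.induce Kᶜ).Reachable w ⟨v, hv⟩ := reachableIn_iff_reachable_induce.1 hwv
  refine ⟨⟨v, hv⟩, ⟨ConnectedComponent.sound hwv.symm, hvK⟩, fun v' ⟨hv'C, hv'K⟩ => ?_⟩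
  have hv'v : (G.induce Kᶜ).Reachable v' ⟨v, hv⟩ := (ConnectedComponent.exact hv'C).trans hwv
  refine Subtype.ext (hG.uniqueCompleteReachable_univ K (Set.subset_univ K) hK hKcard
    v' ⟨Set.mem_univ _, v'.2⟩ v ⟨Set.mem_univ _, hv⟩ hv'K hvK ?_)
  rw [hKc]
  exact reachableIn_iff_reachable_induce.2 hv'v

/-- For any `k`-clique `K` of a `k`-tree `G` (`k ≥ 1`), every connected component of
`G - K` contains exactly one vertex that is complete to `K`. -/
theorem ktree_component_complete_vertex {V : Type} [Fintype V] (k : ℕ) (hk : 1 ≤ k)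
    (G : SimpleGraph V) (hG : IsKTree k G)
    (K : Set V) (hK : G.IsClique K) (hKcard : K.ncard = k) :
    ∀ C : (G.induce Kᶜ).ConnectedComponent,
      ∃! v : ↥Kᶜ, v ∈ C.supp ∧ ∀ u ∈ K, G.Adj ↑v u :=
  ktree_component_complete_vertex_general k G hG K hK hKcard
end

section
/- Let k ≥ 1 be an integer, let G be a k-tree that contains a Hamiltonian path, and let K be any k-clique of G. Then the graph G − K obtained by deleting the vertices of K has at most k + 1 connected components, and at most k + 1 vertices of G − K are complete to K. -/
/-!
Removing the `k` vertices of `K` cuts a Hamiltonian path into at most `k + 1` segments, each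
inside a single component of `G - K`. In a `k`-tree the earlier neighbours of every vertex form a
clique, so a shortest path never rises above its endpoints; a path in `G - K` between two vertices
complete to `K` would then give some vertex `k + 1` earlier neighbours. Hence such vertices lie in
distinct components.
-/

open SimpleGraph

namespace SimpleGraph

variable {V α : Type*} {G : SimpleGraph V} {f : V → α}

def IsPerfectEliminationRank [LT α] (G : SimpleGraph V) (f : V → α) : Prop :=
  ∀ ⦃v a b⦄, G.Adj v a → G.Adj v b → f a < f v → f b < f v → a ≠ b → G.Adj a b

theorem IsPerfectEliminationRank.induce [LT α] (h : G.IsPerfectEliminationRank f) (s : Set V) :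
    (G.induce s).IsPerfectEliminationRank (fun x ↦ f x) :=
  fun _ _ _ hva hvb ha hb hab ↦ h hva hvb ha hb (Subtype.coe_ne_coe.mpr hab)

/-- A shortest path never rises above its endpoints: at a highest interior vertex its two
path-neighbours would be adjacent, giving a shortcut. -/
theorem IsPerfectEliminationRank.exists_walk_support_le_max [LinearOrder α]
    (h : G.IsPerfectEliminationRank f) (hf : f.Injective) {a b : V} (hab : G.Reachable a b) :
    ∃ q : G.Walk a b, ∀ v ∈ q.support, f v ≤ max (f a) (f b) := by
  obtain ⟨p, hp, hlen⟩ := hab.exists_path_of_dist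
  refine ⟨p, fun v hv ↦ ?_⟩
  by_contra! hv_high
  obtain ⟨i, hi, hi_max⟩ :=
    (Finset.range (p.length + 1)).exists_max_image (f ∘ p.getVert) ⟨0, by simp⟩
  rw [Finset.mem_range] at hi
  have hi_high : max (f a) (f b) < f (p.getVert i) := by
    obtain ⟨j, rfl, hj⟩ := Walk.mem_support_iff_exists_getVert.mp hv
    exact hv_high.trans_le (hi_max j (by simp; omega))
  have hi_pos : i ≠ 0 := by rintro rfl; simp at hi_high
  have hi_lt : i < p.length := by
    refine lt_of_le_of_ne (by omega) ?_
    rintro rfl; simp at hi_high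
  have lower {j : ℕ} (hj : j ≤ p.length) (hji : j ≠ i) : f (p.getVert j) < f (p.getVert i) :=
    (hi_max j (by simp; omega)).lt_of_ne fun hfj ↦
      hji (hp.getVert_injOn hj (by simp; omega) (hf hfj))
  have hpred : G.Adj (p.getVert i) (p.getVert (i - 1)) := by
    simpa [Nat.sub_add_cancel (Nat.one_le_iff_ne_zero.mpr hi_pos)] using
      (p.adj_getVert_succ (i := i - 1) (by omega)).symm
  have hshortcut : G.Adj (p.getVert (i - 1)) (p.getVert (i + 1)) :=
    h hpred (p.adj_getVert_succ hi_lt) (lower (by omega) (by omega)) (lower (by omega) (by omega))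
      fun heq ↦ by have := hp.getVert_injOn (by simp; omega) (by simp; omega) heq; omega
  have := G.dist_le ((p.take (i - 1)).append (.cons hshortcut (p.drop (i + 1))))
  simp only [Walk.length_append, Walk.take_length, Walk.length_cons, Walk.drop_length] at this
  omega

end SimpleGraph

section KSimplicialOrdering

variable {V : Type} {G : SimpleGraph V}

theorem mem_earlierNbrs_iff {p : ℕ} {e : Fin p ≃ V} {i : Fin p} {v : V} :
    v ∈ earlierNbrs G e i ↔ e.symm v < i ∧ G.Adj (e i) v := by
  constructor
  · rintro ⟨j, hj, rfl, hadj⟩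
    simpa using ⟨hj, hadj⟩
  · rintro ⟨hv, hadj⟩
    exact ⟨e.symm v, hv, by simp, hadj⟩

theorem earlierNbrs_subset_image_Iio {p : ℕ} (e : Fin p ≃ V) (i : Fin p) :
    earlierNbrs G e i ⊆ e '' Set.Iio i :=
  fun v hv ↦ ⟨e.symm v, (mem_earlierNbrs_iff.mp hv).1, by simp⟩

namespace IsKSimplicialOrdering

variable [Fintype V] {k : ℕ} {e : Fin (Fintype.card V) ≃ V}

theorem isClique_earlierNbrs (he : IsKSimplicialOrdering k G e) (i : Fin (Fintype.card V)) :
    G.IsClique (earlierNbrs G e i) := by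
  by_cases hi : k ≤ (i : ℕ)
  · exact (he.2 i hi).1
  · refine he.1.subset ((earlierNbrs_subset_image_Iio e i).trans (Set.image_mono fun j hj ↦ ?_))
    exact (show (j : ℕ) < i from hj).trans (not_le.mp hi)

theorem ncard_earlierNbrs_le (he : IsKSimplicialOrdering k G e) (i : Fin (Fintype.card V)) :
    (earlierNbrs G e i).ncard ≤ k := by
  by_cases hi : k ≤ (i : ℕ)
  · exact (he.2 i hi).2.le
  · calc (earlierNbrs G e i).ncard ≤ (e '' Set.Iio i).ncard :=
          Set.ncard_le_ncard (earlierNbrs_subset_image_Iio e i)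
      _ = i := by
          rw [Set.ncard_image_of_injective _ e.injective, ← Finset.coe_Iio, Set.ncard_coe_finset,
            Fin.card_Iio]
      _ ≤ k := by omega

theorem isPerfectEliminationRank (he : IsKSimplicialOrdering k G e) :
    G.IsPerfectEliminationRank e.symm := by
  intro v a b hva hvb ha hb hab
  exact he.isClique_earlierNbrs (e.symm v) (mem_earlierNbrs_iff.mpr (by simpa using ⟨ha, hva⟩))
    (mem_earlierNbrs_iff.mpr (by simpa using ⟨hb, hvb⟩)) hab

variable {K : Set V}

/-- Let `z` be the latest vertex of `K ∪ {x}`. If `z = x`, then `K` and the first step of a path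
from `x` to `y` staying below `x` are `k + 1` earlier neighbours of `x`; otherwise `x`, `y` and
`K \ {z}` are `k + 1` earlier neighbours of `z`. -/
theorem not_reachable_induce_compl_of_lt (he : IsKSimplicialOrdering k G e) (hK : G.IsClique K)
    (hKcard : K.ncard = k) {x y : V} (hx : x ∉ K) (hy : y ∉ K) (hyx : e.symm y < e.symm x)
    (hxK : ∀ u ∈ K, G.Adj x u) (hyK : ∀ u ∈ K, G.Adj y u) :
    ¬ (G.induce Kᶜ).Reachable ⟨x, hx⟩ ⟨y, hy⟩ := by
  intro hreach
  obtain ⟨q, hq⟩ := (he.isPerfectEliminationRank.induce Kᶜ).exists_walk_support_le_max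
    (e.symm.injective.comp Subtype.val_injective) hreach
  obtain ⟨z, hz, hz_max⟩ :=
    (insert x K).exists_max_image e.symm (K.toFinite.insert x) (Set.insert_nonempty x K)
  have hK_lt {t : V} (ht : t ∈ K) (htz : t ≠ z) : e.symm t < e.symm z :=
    (hz_max t (Set.mem_insert_of_mem x ht)).lt_of_ne (e.symm.injective.ne htz)
  suffices k < (earlierNbrs G e (e.symm z)).ncard from
    (he.ncard_earlierNbrs_le _).not_gt this
  rcases hz with rfl | hzK
  · have hq_nil : ¬ q.Nil := Walk.not_nil_of_ne fun h ↦ hyx.ne (by simp_all)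
    have hsnd_lt : e.symm q.snd < e.symm z := by
      refine (hq _ (q.getVert_mem_support 1)).trans_eq (max_eq_left hyx.le) |>.lt_of_ne ?_
      exact e.symm.injective.ne (G.ne_of_adj (q.adj_snd hq_nil)).symm
    calc k < (insert q.snd.1 K).ncard := by
          rw [Set.ncard_insert_of_notMem q.snd.2, hKcard]; omega
      _ ≤ _ := Set.ncard_le_ncard fun t ht ↦ by
        rcases ht with rfl | ht
        · exact mem_earlierNbrs_iff.mpr (by simpa using ⟨hsnd_lt, q.adj_snd hq_nil⟩)
        · have htz : t ≠ z := by rintro rfl; exact hx ht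
          exact mem_earlierNbrs_iff.mpr (by simpa using ⟨hK_lt ht htz, hxK t ht⟩)
  · have hxz : e.symm x < e.symm z :=
      (hz_max x (Set.mem_insert x K)).lt_of_ne (e.symm.injective.ne (by rintro rfl; exact hx hzK))
    have hxy : x ≠ y := by rintro rfl; exact hyx.ne rfl
    calc k < (insert x (insert y (K \ {z}))).ncard := by
          rw [Set.ncard_insert_of_notMem (by simp [hxy, hx]),
            Set.ncard_insert_of_notMem (by simp [hy]), Set.ncard_sdiff_singleton_of_mem hzK, hKcard]
          have : 0 < k := hKcard ▸ (Set.ncard_pos).mpr ⟨z, hzK⟩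
          omega
      _ ≤ _ := Set.ncard_le_ncard fun t ht ↦ by
        rcases ht with rfl | rfl | ⟨htK, htz⟩
        · exact mem_earlierNbrs_iff.mpr (by simpa using ⟨hxz, (hxK z hzK).symm⟩)
        · exact mem_earlierNbrs_iff.mpr (by simpa using ⟨hyx.trans hxz, (hyK z hzK).symm⟩)
        · exact mem_earlierNbrs_iff.mpr
            (by simpa using ⟨hK_lt htK htz, hK hzK htK (Ne.symm htz)⟩)

theorem not_reachable_induce_compl (he : IsKSimplicialOrdering k G e) (hK : G.IsClique K)
    (hKcard : K.ncard = k) {x y : V} (hx : x ∉ K) (hy : y ∉ K) (hxy : x ≠ y)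
    (hxK : ∀ u ∈ K, G.Adj x u) (hyK : ∀ u ∈ K, G.Adj y u) :
    ¬ (G.induce Kᶜ).Reachable ⟨x, hx⟩ ⟨y, hy⟩ := by
  rcases (e.symm.injective.ne hxy).lt_or_gt with hxy | hyx
  · exact fun h ↦ he.not_reachable_induce_compl_of_lt hK hKcard hy hx hxy hyK hxK h.symm
  · exact he.not_reachable_induce_compl_of_lt hK hKcard hx hy hyx hxK hyK

theorem ncard_completeTo_le_card_connectedComponent (he : IsKSimplicialOrdering k G e)
    (hK : G.IsClique K) (hKcard : K.ncard = k) :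
    {v : V | v ∉ K ∧ ∀ u ∈ K, G.Adj v u}.ncard ≤
      Nat.card (G.induce Kᶜ).ConnectedComponent := by
  rw [← Nat.card_coe_set_eq]
  refine Nat.card_le_card_of_injective
    (fun w ↦ (G.induce Kᶜ).connectedComponentMk ⟨w, w.2.1⟩) fun a b hab ↦ Subtype.ext ?_
  by_contra hne
  exact he.not_reachable_induce_compl hK hKcard a.2.1 b.2.1 hne a.2.2 b.2.2
    (ConnectedComponent.eq.mp hab)

end IsKSimplicialOrdering

end KSimplicialOrdering

theorem List.Nodup.countP_mem_le_ncard {V : Type*} {l : List V} (hl : l.Nodup) {S : Set V}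
    [DecidablePred (· ∈ S)] (hS : S.Finite) : l.countP (· ∈ S) ≤ S.ncard := by
  classical
  rw [List.countP_eq_length_filter, ← List.toFinset_card_of_nodup (hl.filter _),
    ← Set.ncard_coe_finset]
  exact Set.ncard_le_ncard (fun x hx ↦ (by simpa using hx : x ∈ l ∧ x ∈ S).2) hS

namespace SimpleGraph.Walk

variable {V : Type*} {G : SimpleGraph V}

/-- A walk can only pass into a new component of `G - S` right after visiting `S`. -/
theorem encard_connectedComponentMk_image_le (S : Set V) [DecidablePred (· ∈ S)] {u v : V}
    (p : G.Walk u v) :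
    ((G.induce Sᶜ).connectedComponentMk '' {x | x.1 ∈ p.support}).encard ≤
      p.support.tail.countP (· ∈ S) + 1 := by
  induction p with
  | nil =>
    refine Set.encard_le_one_iff.mpr ?_
    rintro _ _ ⟨x, hx, rfl⟩ ⟨y, hy, rfl⟩
    rw [Set.mem_ofPred_eq, support_nil, List.mem_singleton] at hx hy
    exact congrArg _ (Subtype.ext (hx.trans hy.symm))
  | @cons a b c hab p ih =>
    have htail : p.support.tail.countP (· ∈ S) ≤ p.support.countP (· ∈ S) :=
      (List.tail_sublist _).countP_le
    by_cases hstay : a ∈ S ∨ b ∉ S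
    · refine (Set.encard_le_encard ?_).trans (ih.trans (by simpa using htail))
      rintro _ ⟨x, hx, rfl⟩
      rcases List.mem_cons.mp hx with hxa | hxp
      · have hb : b ∉ S := hstay.resolve_left (hxa ▸ x.2)
        refine ⟨⟨b, hb⟩, p.start_mem_support, ConnectedComponent.sound ?_⟩
        exact Adj.reachable (show G.Adj b x from hxa ▸ hab.symm)
      · exact ⟨x, hxp, rfl⟩
    · push Not at hstay
      obtain ⟨ha, hb⟩ := hstay
      have hcount :
          (cons hab p).support.tail.countP (· ∈ S) = p.support.tail.countP (· ∈ S) + 1 := by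
        conv_lhs => rw [support_cons, List.tail_cons, ← p.cons_tail_support]
        exact List.countP_cons_of_pos (by simpa using hb)
      calc _ ≤ (insert ((G.induce Sᶜ).connectedComponentMk ⟨a, ha⟩)
              ((G.induce Sᶜ).connectedComponentMk '' {x | x.1 ∈ p.support})).encard := by
            refine Set.encard_le_encard ?_
            rintro _ ⟨x, hx, rfl⟩
            rcases List.mem_cons.mp hx with hxa | hxp
            · exact Or.inl (congrArg _ (Subtype.ext hxa))
            · exact Or.inr ⟨x, hxp, rfl⟩
        _ ≤ (p.support.tail.countP (· ∈ S) + 1 : ℕ∞) + 1 :=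
            (Set.encard_insert_le _ _).trans (by gcongr)
        _ = _ := by rw [hcount]; push_cast; ring

theorem IsHamiltonian.card_connectedComponent_induce_compl_le [Finite V] [DecidableEq V]
    {u v : V} {p : G.Walk u v} (hp : p.IsHamiltonian) (S : Set V) :
    Nat.card (G.induce Sᶜ).ConnectedComponent ≤ S.ncard + 1 := by
  classical
  have hcover : (G.induce Sᶜ).connectedComponentMk '' {x | x.1 ∈ p.support} = Set.univ :=
    Set.eq_univ_of_forall fun C ↦ C.ind fun x ↦ ⟨x, hp.mem_support x, rfl⟩
  have hcount : p.support.tail.countP (· ∈ S) ≤ S.ncard :=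
    (List.tail_sublist _).countP_le.trans
      (hp.isPath.support_nodup.countP_mem_le_ncard S.toFinite)
  have := encard_connectedComponentMk_image_le S p
  rw [hcover, Set.encard_univ, ENat.card_eq_coe_natCard] at this
  have hle : (Nat.card (G.induce Sᶜ).ConnectedComponent : ℕ∞) ≤ S.ncard + 1 :=
    this.trans (by gcongr)
  exact_mod_cast hle

end SimpleGraph.Walk

theorem ktree_hamiltonian_components_general {V : Type} [Fintype V] [DecidableEq V] (k : ℕ)
    (G : SimpleGraph V) (hG : IsKTree k G)
    (hham : ∃ (u v : V) (p : G.Walk u v), p.IsHamiltonian)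
    (K : Set V) (hK : G.IsClique K) (hKcard : K.ncard = k) :
    Nat.card (G.induce Kᶜ).ConnectedComponent ≤ k + 1 ∧
    {v : V | v ∉ K ∧ ∀ u ∈ K, G.Adj v u}.ncard ≤ k + 1 := by
  obtain ⟨-, e, he⟩ := hG
  obtain ⟨u, v, p, hp⟩ := hham
  have hcomponents : Nat.card (G.induce Kᶜ).ConnectedComponent ≤ k + 1 :=
    hKcard ▸ hp.card_connectedComponent_induce_compl_le K
  exact ⟨hcomponents,
    (he.ncard_completeTo_le_card_connectedComponent hK hKcard).trans hcomponents⟩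

/-- If `G` is a `k`-tree (`k ≥ 1`) containing a Hamiltonian path and `K` is any
`k`-clique of `G`, then `G - K` has at most `k + 1` connected components and at most
`k + 1` vertices of `G - K` are complete to `K`. -/
theorem ktree_hamiltonian_components {V : Type} [Fintype V] [DecidableEq V] (k : ℕ) (hk : 1 ≤ k)
    (G : SimpleGraph V) (hG : IsKTree k G)
    (hham : ∃ (u v : V) (p : G.Walk u v), p.IsHamiltonian)
    (K : Set V) (hK : G.IsClique K) (hKcard : K.ncard = k) :
    Nat.card (G.induce Kᶜ).ConnectedComponent ≤ k + 1 ∧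
    {v : V | v ∉ K ∧ ∀ u ∈ K, G.Adj v u}.ncard ≤ k + 1 :=
  ktree_hamiltonian_components_general k G hG hham K hK hKcard
end

section
/- Let G be an interval graph with n vertices, let k ≥ 2 be the maximum clique size of G, and suppose that in the left ordering of G every vertex other than the last is adjacent to its successor. Then there is a set S of at least n^{1/(k−1)} vertices of G such that, in the induced left ordering of S, every vertex of S other than the last is adjacent in G to its successor, and no vertex of S other than the first and the last of the induced left ordering is simplicial in the induced subgraph G[S]. -/
open SimpleGraph

/-- `l, r` form an interval representation of `G`: each vertex `v` corresponds to the
interval `[l v, r v]`, all `2n` endpoints are pairwise distinct, and two distinct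
vertices are adjacent exactly when their intervals intersect. -/
def IsIntervalRep {V : Type} (G : SimpleGraph V) (l r : V → ℝ) : Prop :=
  (∀ v, l v ≤ r v) ∧
  (∀ v w, l v = l w → v = w) ∧
  (∀ v w, r v = r w → v = w) ∧
  (∀ v w, l v ≠ r w) ∧
  (∀ v w, v ≠ w → (G.Adj v w ↔ l v ≤ r w ∧ l w ≤ r v))

/-- The maximum clique size of `G` is `k`. -/
def MaxCliqueSize {V : Type} (G : SimpleGraph V) (k : ℕ) : Prop :=
  (∃ S : Finset V, G.IsNClique k S) ∧ ∀ (m : ℕ) (S : Finset V), G.IsNClique m S → m ≤ k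

/-- In the left ordering (ordering by `l`) induced on `S`, every vertex of `S` other
than the last is adjacent to its successor: any two elements of `S` that are
consecutive in the left ordering of `S` are adjacent in `G`. -/
def ConsecAdjOn {V : Type} (G : SimpleGraph V) (l : V → ℝ) (S : Set V) : Prop :=
  ∀ v ∈ S, ∀ w ∈ S, l v < l w → (∀ u ∈ S, ¬(l v < l u ∧ l u < l w)) → G.Adj v w

/-!
Call `S` a snake if, in its left ordering, consecutive vertices are adjacent and vertices two
apart are not; then the two neighbours of an inner vertex of `S` witness that it is not
simplicial in `G[S]`. It remains to see that if all cliques have at most `k + 1` vertices and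
all snakes at most `m`, then `n ≤ m ^ k`. The greedy chain from the leftmost vertex, which
always jumps to the neighbour with the largest left endpoint, is a snake. The vertices strictly
between two consecutive chain vertices `v`, `w` again have consecutive vertices adjacent, and
every clique among them extends by `v` or by `w`, so has at most `k` vertices. By induction
`n ≤ m + (m - 1) * m ^ (k - 1) ≤ m ^ k`.
-/

open Finset

variable {V : Type} {G : SimpleGraph V} {l r : V → ℝ}

theorem IsIntervalRep.injective (hrep : IsIntervalRep G l r) : Function.Injective l :=
  hrep.2.1

theorem IsIntervalRep.left_le_right_of_adj (hrep : IsIntervalRep G l r) {v w : V}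
    (h : G.Adj v w) : l v ≤ r w :=
  ((hrep.2.2.2.2 v w h.ne).1 h).1

theorem IsIntervalRep.isClique_of_forall_mem_Icc (hrep : IsIntervalRep G l r) {C : Set V}
    {t : ℝ} (h : ∀ c ∈ C, t ∈ Set.Icc (l c) (r c)) : G.IsClique C :=
  fun v hv w hw hvw =>
    (hrep.2.2.2.2 v w hvw).2 ⟨(h v hv).1.trans (h w hw).2, (h w hw).1.trans (h v hv).2⟩

/-- Helly property of intervals. -/
theorem IsIntervalRep.mem_Icc_of_isClique (hrep : IsIntervalRep G l r) {C : Set V}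
    (hC : G.IsClique C) {c₀ : V} (hc₀ : c₀ ∈ C) (hmax : ∀ c ∈ C, l c ≤ l c₀) {c : V}
    (hc : c ∈ C) : l c₀ ∈ Set.Icc (l c) (r c) := by
  refine ⟨hmax c hc, ?_⟩
  rcases eq_or_ne c c₀ with rfl | hne
  · exact hrep.1 c
  · exact hrep.left_le_right_of_adj (hC hc₀ hc hne.symm)

/-- If the common point `l c₀` of `C` is at most `r v`, the interval of `v` contains it;
otherwise every interval of `C` contains `l w ≤ r v`. -/
theorem IsIntervalRep.isClique_insert_or_isClique_insert [DecidableEq V]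
    (hrep : IsIntervalRep G l r) {C : Finset V} (hC : G.IsClique (C : Set V)) {v w : V}
    (hvw : G.Adj v w) (hbetween : ∀ c ∈ C, l v < l c ∧ l c < l w) :
    G.IsClique (↑(insert v C) : Set V) ∨ G.IsClique (↑(insert w C) : Set V) := by
  rcases C.eq_empty_or_nonempty with rfl | hne
  · simp
  obtain ⟨c₀, hc₀, hmax⟩ := C.exists_max_image l hne
  have hcommon : ∀ c ∈ C, l c₀ ∈ Set.Icc (l c) (r c) := fun c hc =>
    hrep.mem_Icc_of_isClique hC hc₀ hmax hc
  rw [coe_insert, coe_insert]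
  rcases le_or_gt (l c₀) (r v) with h | h
  · refine Or.inl (hrep.isClique_of_forall_mem_Icc (t := l c₀) ?_)
    rintro c (rfl | hc)
    · exact ⟨(hbetween c₀ hc₀).1.le, h⟩
    · exact hcommon c hc
  · refine Or.inr (hrep.isClique_of_forall_mem_Icc (t := l w) ?_)
    rintro c (rfl | hc)
    · exact ⟨le_rfl, hrep.1 c⟩
    · exact ⟨(hbetween c hc).2.le,
        (hrep.left_le_right_of_adj hvw.symm).trans (h.trans_le (hcommon c hc).2).le⟩

theorem IsIntervalRep.clique_card_le_of_between (hrep : IsIntervalRep G l r)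
    {A : Finset V} {k : ℕ} (hclique : ∀ C ⊆ A, G.IsClique (C : Set V) → #C ≤ k + 1)
    {v w : V} (hv : v ∈ A) (hw : w ∈ A) (hvw : G.Adj v w) :
    ∀ C ⊆ A.filter (fun u => l v < l u ∧ l u < l w), G.IsClique (C : Set V) → #C ≤ k := by
  classical
  intro C hCB hC
  have hbetween : ∀ c ∈ C, l v < l c ∧ l c < l w := fun c hc => (mem_filter.1 (hCB hc)).2
  have hCA : C ⊆ A := hCB.trans (filter_subset _ _)
  have hextend : ∀ u ∈ A, u ∉ C → G.IsClique (↑(insert u C) : Set V) → #C ≤ k :=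
    fun u hu huC h => by
      have := hclique _ (insert_subset hu hCA) h
      rw [card_insert_of_notMem huC] at this
      omega
  rcases hrep.isClique_insert_or_isClique_insert hC hvw hbetween with h | h
  · exact hextend v hv (fun hvC => (hbetween v hvC).1.false) h
  · exact hextend w hw (fun hwC => (hbetween w hwC).2.false) h

def IsLeftSucc (l : V → ℝ) (S : Finset V) (v w : V) : Prop :=
  v ∈ S ∧ w ∈ S ∧ l v < l w ∧ ∀ u ∈ S, ¬(l v < l u ∧ l u < l w)

theorem exists_isLeftSucc_of_lt {S : Finset V} {x u : V} (hx : x ∈ S) (hu : u ∈ S)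
    (hxu : l x < l u) : ∃ w, IsLeftSucc l S x w := by
  obtain ⟨w, hw, hmin⟩ :=
    (S.filter fun y => l x < l y).exists_min_image l ⟨u, mem_filter.2 ⟨hu, hxu⟩⟩
  rw [mem_filter] at hw
  exact ⟨w, hx, hw.1, hw.2, fun y hy hyw => (hmin y (mem_filter.2 ⟨hy, hyw.1⟩)).not_gt hyw.2⟩

theorem exists_isLeftSucc_of_gt {S : Finset V} {x u : V} (hx : x ∈ S) (hu : u ∈ S)
    (hux : l u < l x) : ∃ v, IsLeftSucc l S v x := by
  obtain ⟨v, hv, hmax⟩ :=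
    (S.filter fun y => l y < l x).exists_max_image l ⟨u, mem_filter.2 ⟨hu, hux⟩⟩
  rw [mem_filter] at hv
  exact ⟨v, hv.1, hx, hv.2, fun y hy hvy => (hmax y (mem_filter.2 ⟨hy, hvy.2⟩)).not_gt hvy.1⟩

theorem IsLeftSucc.of_insert [DecidableEq V] (hl : Function.Injective l) {X : Finset V}
    {x w v u : V} (hw : w ∈ X) (hmin : ∀ y ∈ X, l w ≤ l y) (hxw : l x < l w)
    (h : IsLeftSucc l (insert x X) v u) : (v = x ∧ u = w) ∨ IsLeftSucc l X v u := by
  obtain ⟨hv, hu, hvu, hgap⟩ := h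
  have huX : u ∈ X := by
    refine (mem_insert.1 hu).resolve_left ?_
    rintro rfl
    rcases mem_insert.1 hv with rfl | hvX
    · exact hvu.false
    · exact ((hmin v hvX).trans_lt (hvu.trans hxw)).false
  rcases mem_insert.1 hv with rfl | hvX
  · refine Or.inl ⟨rfl, hl (le_antisymm ?_ (hmin u huX))⟩
    exact not_lt.1 fun hwu => hgap w (mem_insert_of_mem hw) ⟨hxw, hwu⟩
  · exact Or.inr ⟨hvX, huX, hvu, fun y hy => hgap y (mem_insert_of_mem hy)⟩

theorem ConsecAdjOn.adj {S : Finset V} (hS : ConsecAdjOn G l ↑S) {v w : V}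
    (hvw : IsLeftSucc l S v w) : G.Adj v w :=
  hS v hvw.1 w hvw.2.1 hvw.2.2.1 hvw.2.2.2

theorem ConsecAdjOn.filter_between {A : Finset V} (hA : ConsecAdjOn G l ↑A) (a b : ℝ) :
    ConsecAdjOn G l ↑(A.filter fun u => a < l u ∧ l u < b) := by
  intro v hv w hw hvw hgap
  rw [mem_coe, mem_filter] at hv hw
  refine hA v hv.1 w hw.1 hvw fun u hu huvw => hgap u ?_ huvw
  exact mem_filter.2 ⟨hu, hv.2.1.trans huvw.1, huvw.2.trans hw.2.2⟩

def IsSnake (G : SimpleGraph V) (l : V → ℝ) (S : Finset V) : Prop :=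
  ConsecAdjOn G l ↑S ∧ ∀ u v w, IsLeftSucc l S u v → IsLeftSucc l S v w → ¬G.Adj u w

theorem isSnake_empty : IsSnake G l ∅ :=
  ⟨fun v hv => by simp at hv, fun u v w huv => by simp [IsLeftSucc] at huv⟩

theorem isSnake_of_clique_card_le_two {A : Finset V}
    (hclique : ∀ C ⊆ A, G.IsClique (C : Set V) → #C ≤ 2) (hA : ConsecAdjOn G l ↑A) :
    IsSnake G l A := by
  classical
  refine ⟨hA, fun u v w huv hvw huw => ?_⟩
  have htriangle : G.IsNClique 3 {u, v, w} :=
    SimpleGraph.is3Clique_triple_iff.2 ⟨hA.adj huv, huw, hA.adj hvw⟩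
  have := hclique _ (by simp [insert_subset_iff, huv.1, huv.2.1, hvw.2.1]) htriangle.isClique
  rw [htriangle.card_eq] at this
  omega

theorem IsSnake.not_isClique_neighborSet {S : Finset V} (hS : IsSnake G l S) {x u w : V}
    (hx : x ∈ S) (hu : u ∈ S) (hw : w ∈ S) (hux : l u < l x) (hxw : l x < l w) :
    ¬(G.induce (S : Set V)).IsClique ((G.induce (S : Set V)).neighborSet ⟨x, hx⟩) := by
  obtain ⟨p, hp⟩ := exists_isLeftSucc_of_gt hx hu hux
  obtain ⟨s, hs⟩ := exists_isLeftSucc_of_lt hx hw hxw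
  have hps : (⟨p, hp.1⟩ : (S : Set V)) ≠ ⟨s, hs.2.1⟩ := fun h =>
    (hp.2.2.1.trans (congrArg l (congrArg Subtype.val h) ▸ hs.2.2.1)).false
  have hpx : (⟨p, hp.1⟩ : (S : Set V)) ∈ (G.induce (S : Set V)).neighborSet ⟨x, hx⟩ :=
    (hS.1.adj hp).symm
  have hxs : (⟨s, hs.2.1⟩ : (S : Set V)) ∈ (G.induce (S : Set V)).neighborSet ⟨x, hx⟩ :=
    hS.1.adj hs
  exact fun hclique => hS.2 p x s hp hs (hclique hpx hxs hps)

def IsGreedyChain (G : SimpleGraph V) (l : V → ℝ) (A X : Finset V) : Prop :=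
  ∀ v w, IsLeftSucc l X v w → G.Adj v w ∧ ∀ u ∈ A, G.Adj v u → l u ≤ l w

theorem IsGreedyChain.isSnake {A X : Finset V} (hX : IsGreedyChain G l A X) (hXA : X ⊆ A) :
    IsSnake G l X :=
  ⟨fun v hv w hw hvw hgap => (hX v w ⟨hv, hw, hvw, hgap⟩).1,
    fun u v w huv hvw huw => ((hX u v huv).2 w (hXA hvw.2.1) huw).not_gt hvw.2.2.1⟩

theorem exists_isGreedyChain (hl : Function.Injective l) {A : Finset V}
    (hA : ConsecAdjOn G l ↑A) {top : V} (htop : top ∈ A) (hle_top : ∀ a ∈ A, l a ≤ l top)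
    {x : V} (hx : x ∈ A) :
    ∃ X ⊆ A, x ∈ X ∧ top ∈ X ∧ (∀ y ∈ X, l x ≤ l y) ∧ IsGreedyChain G l A X := by
  classical
  induction hN : #(A.filter fun a => l x < l a) using Nat.strong_induction_on generalizing x
    with | _ N ih =>
  rcases eq_or_ne x top with rfl | hxtop
  · refine ⟨{x}, singleton_subset_iff.2 hx, mem_singleton_self x, mem_singleton_self x,
      fun y hy => by rw [mem_singleton.1 hy], fun v w hvw => ?_⟩
    rw [mem_singleton.1 hvw.1, mem_singleton.1 hvw.2.1] at hvw
    exact hvw.2.2.1.false.elim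
  obtain ⟨s, hs⟩ := exists_isLeftSucc_of_lt hx htop ((hle_top x hx).lt_of_ne (hl.ne hxtop))
  have hsN : s ∈ A.filter (G.Adj x) := mem_filter.2 ⟨hs.2.1, hA.adj hs⟩
  obtain ⟨w, hw, hmax⟩ := (A.filter (G.Adj x)).exists_max_image l ⟨s, hsN⟩
  rw [mem_filter] at hw
  have hxw : l x < l w := hs.2.2.1.trans_le (hmax s hsN)
  have hfewer : #(A.filter fun a => l w < l a) < N := by
    refine hN ▸ card_lt_card ((ssubset_iff_of_subset fun a ha => ?_).2
      ⟨w, mem_filter.2 ⟨hw.1, hxw⟩, fun h => (mem_filter.1 h).2.false⟩)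
    rw [mem_filter] at ha ⊢
    exact ⟨ha.1, hxw.trans ha.2⟩
  obtain ⟨X, hXA, hwX, htopX, hwle, hX⟩ := ih _ hfewer hw.1 rfl
  refine ⟨insert x X, insert_subset hx hXA, mem_insert_self x X, mem_insert_of_mem htopX,
    fun y hy => ?_, fun v u hvu => ?_⟩
  · rcases mem_insert.1 hy with rfl | hy
    · exact le_rfl
    · exact hxw.le.trans (hwle y hy)
  · rcases hvu.of_insert hl hwX hwle hxw with ⟨rfl, rfl⟩ | hvu
    · exact ⟨hw.2, fun a ha hxa => hmax a (mem_filter.2 ⟨ha, hxa⟩)⟩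
    · exact hX v u hvu

/-- The elements of `A` strictly between `v` and its successor in `X`. -/
noncomputable def gapAfter (l : V → ℝ) (A X : Finset V) (v : V) : Finset V :=
  A.filter fun a => l v < l a ∧ ∀ x ∈ X, l v < l x → l a < l x

theorem gapAfter_subset {A X : Finset V} {v w : V} (hvw : IsLeftSucc l X v w) :
    gapAfter l A X v ⊆ A.filter fun a => l v < l a ∧ l a < l w := by
  intro a ha
  rw [gapAfter, mem_filter] at ha
  exact mem_filter.2 ⟨ha.1, ha.2.1, ha.2.2 w hvw.2.1 hvw.2.2.1⟩

theorem subset_union_biUnion_gapAfter [DecidableEq V] (hl : Function.Injective l)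
    {A X : Finset V} {bot top : V} (hbot : bot ∈ X) (htop : top ∈ X)
    (hbot_le : ∀ a ∈ A, l bot ≤ l a) (hle_top : ∀ a ∈ A, l a ≤ l top) :
    A ⊆ X ∪ (X.erase top).biUnion (gapAfter l A X) := by
  intro a ha
  by_cases haX : a ∈ X
  · exact mem_union_left _ haX
  have hne : ∀ x ∈ X, l x ≠ l a := fun x hx h => haX (hl h ▸ hx)
  obtain ⟨v, hv, hmax⟩ := (X.filter fun x => l x < l a).exists_max_image l
    ⟨bot, mem_filter.2 ⟨hbot, (hbot_le a ha).lt_of_ne (hne bot hbot)⟩⟩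
  rw [mem_filter] at hv
  refine mem_union_right _ (mem_biUnion.2 ⟨v, mem_erase.2 ⟨?_, hv.1⟩,
    mem_filter.2 ⟨ha, hv.2, fun x hx hvx => ?_⟩⟩)
  · rintro rfl
    exact (hle_top a ha).not_gt hv.2
  · exact (hne x hx).lt_or_gt.resolve_left fun hxa =>
      (hmax x (mem_filter.2 ⟨hx, hxa⟩)).not_gt hvx

theorem add_sub_one_mul_pow_le_pow_succ {m k : ℕ} (hk : 1 ≤ k) :
    m + (m - 1) * m ^ k ≤ m ^ (k + 1) := by
  rcases m with _ | m
  · simp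
  · have := Nat.le_self_pow (by omega : k ≠ 0) (m + 1)
    rw [pow_succ, Nat.add_sub_cancel]
    nlinarith

theorem card_le_pow_of_forall_isSnake_card_le (hrep : IsIntervalRep G l r)
    {k : ℕ} (hk : 1 ≤ k) {A : Finset V}
    (hclique : ∀ C ⊆ A, G.IsClique (C : Set V) → #C ≤ k + 1) (hA : ConsecAdjOn G l ↑A)
    {m : ℕ} (hm : ∀ S ⊆ A, IsSnake G l S → #S ≤ m) : #A ≤ m ^ k := by
  classical
  induction k, hk using Nat.le_induction generalizing A with
  | base => simpa using hm A subset_rfl (isSnake_of_clique_card_le_two hclique hA)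
  | succ k hk ih =>
    rcases A.eq_empty_or_nonempty with rfl | hne
    · simp
    obtain ⟨top, htop, hle_top⟩ := A.exists_max_image l hne
    obtain ⟨bot, hbot, hbot_le⟩ := A.exists_min_image l hne
    obtain ⟨X, hXA, hbotX, htopX, -, hX⟩ :=
      exists_isGreedyChain hrep.injective hA htop hle_top hbot
    have hgap : ∀ v ∈ X.erase top, #(gapAfter l A X v) ≤ m ^ k := by
      intro v hv
      have hvA := hXA (mem_of_mem_erase hv)
      obtain ⟨w, hvw⟩ := exists_isLeftSucc_of_lt (mem_of_mem_erase hv) htopX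
        ((hle_top v hvA).lt_of_ne (hrep.injective.ne (ne_of_mem_erase hv)))
      refine (card_le_card (gapAfter_subset hvw)).trans (ih ?_ (hA.filter_between _ _) ?_)
      · exact hrep.clique_card_le_of_between hclique hvA (hXA hvw.2.1) (hX v w hvw).1
      · exact fun S hS => hm S (hS.trans (filter_subset _ _))
    calc #A ≤ #(X ∪ (X.erase top).biUnion (gapAfter l A X)) :=
          card_le_card (subset_union_biUnion_gapAfter hrep.injective hbotX htopX hbot_le hle_top)
      _ ≤ #X + ∑ v ∈ X.erase top, #(gapAfter l A X v) :=
          (card_union_le _ _).trans (Nat.add_le_add_left card_biUnion_le _)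
      _ ≤ m + (m - 1) * m ^ k := by
          have hXm : #X ≤ m := hm X hXA (hX.isSnake hXA)
          refine Nat.add_le_add hXm ((sum_le_card_nsmul _ _ _ hgap).trans ?_)
          rw [card_erase_of_mem htopX, smul_eq_mul]
          exact Nat.mul_le_mul_right _ (Nat.sub_le_sub_right hXm 1)
      _ ≤ m ^ (k + 1) := add_sub_one_mul_pow_le_pow_succ hk

/-- Lemma 10 (paper): an interval graph on `n` vertices with maximum clique size
`k ≥ 2`, in which each vertex of the left ordering is adjacent to its successor,
contains an induced subgraph (given by its vertex set `S`) on at least `n^(1/(k-1))`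
vertices in which each vertex is adjacent to its successor in the induced left
ordering and no vertex is simplicial except the first and the last. -/
theorem interval_no_simplicial_subgraph {V : Type} [Fintype V]
    (G : SimpleGraph V) (l r : V → ℝ) (hrep : IsIntervalRep G l r)
    (n : ℕ) (hn : Fintype.card V = n)
    (k : ℕ) (hk : 2 ≤ k) (hmax : MaxCliqueSize G k)
    (hconsec : ConsecAdjOn G l Set.univ) :
    ∃ S : Set V,
      (n : ℝ) ^ ((1 : ℝ) / ((k : ℝ) - 1)) ≤ (S.ncard : ℝ) ∧
      ConsecAdjOn G l S ∧
      ∀ x : ↥S, (∃ u ∈ S, l u < l (x : V)) → (∃ u ∈ S, l (x : V) < l u) →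
        ¬ (G.induce S).IsClique ((G.induce S).neighborSet x) := by
  classical
  obtain ⟨j, rfl⟩ : ∃ j, k = j + 1 := ⟨k - 1, by omega⟩
  obtain ⟨S, hS, hSmax⟩ := ((univ : Finset V).powerset.filter (IsSnake G l)).exists_max_image
    card ⟨∅, mem_filter.2 ⟨empty_mem_powerset _, isSnake_empty⟩⟩
  have hSnake : IsSnake G l S := (mem_filter.1 hS).2
  have hcard : n ≤ #S ^ j := by
    rw [← hn, ← card_univ]
    refine card_le_pow_of_forall_isSnake_card_le hrep (by omega)
      (fun C _ hC => hmax.2 _ C ⟨hC, rfl⟩) (by simpa using hconsec) fun S' _ hS' => ?_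
    exact hSmax S' (mem_filter.2 ⟨mem_powerset.2 (subset_univ _), hS'⟩)
  refine ⟨S, ?_, hSnake.1, fun x ⟨u, hu, hux⟩ ⟨w, hw, hxw⟩ =>
    hSnake.not_isClique_neighborSet x.2 hu hw hux hxw⟩
  rw [Set.ncard_coe_finset, Nat.cast_add, Nat.cast_one, add_sub_cancel_right, one_div]
  calc (n : ℝ) ^ (j : ℝ)⁻¹ ≤ ((#S : ℝ) ^ j) ^ (j : ℝ)⁻¹ :=
        Real.rpow_le_rpow (by positivity) (by exact_mod_cast hcard) (by positivity)
    _ = #S := Real.pow_rpow_inv_natCast (by positivity) (by omega)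
end

section
/- Let G be an interval graph with n vertices, let k ≥ 2 be the maximum clique size of G, suppose that in the left ordering of G every vertex other than the last is adjacent to its successor, and suppose that no vertex of G is simplicial except possibly the first and the last vertex of the left ordering. Then G contains an induced path of size at least (n/k)^{1/(k−1)}. -/
open SimpleGraph

/-- `G` contains an induced path on `m` vertices. -/
def HasInducedPathOfSize {V : Type} (G : SimpleGraph V) (m : ℕ) : Prop :=
  ∃ S : Set V, S.ncard = m ∧ Nonempty ((G.induce S) ≃g pathGraph m)

lemma induced_path_of_seq {V : Type} (G : SimpleGraph V) (m : ℕ) (f : Fin m → V)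
    (hinj : Function.Injective f)
    (hadj : ∀ i j : Fin m, G.Adj (f i) (f j) ↔ ((i : ℕ) + 1 = j ∨ (j : ℕ) + 1 = i)) :
    HasInducedPathOfSize G m := by
  refine ⟨Set.range f, ?_, ⟨⟨(Equiv.ofInjective f hinj).symm, ?_⟩⟩⟩
  · rw [← Set.image_univ, Set.ncard_image_of_injective _ hinj, Set.ncard_univ,
      Nat.card_eq_fintype_card, Fintype.card_fin]
  · intro a b
    rw [pathGraph_adj, ← hadj]
    rw [Equiv.apply_ofInjective_symm hinj a, Equiv.apply_ofInjective_symm hinj b]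
    rfl

noncomputable def gstep {V : Type} (l r : V → ℝ) (S : Finset V) (x : V) : V :=
  if h : (S.filter fun w => l w ≤ r x).Nonempty then
    ((S.filter fun w => l w ≤ r x).exists_max_image r h).choose
  else x

lemma gstep_spec {V : Type} (l r : V → ℝ) (S : Finset V) (x : V)
    (hle : ∀ v : V, l v ≤ r v) (hx : x ∈ S) :
    gstep l r S x ∈ S ∧ l (gstep l r S x) ≤ r x ∧
      ∀ w ∈ S, l w ≤ r x → r w ≤ r (gstep l r S x) := by
  have hne : (S.filter fun w => l w ≤ r x).Nonempty :=
    ⟨x, Finset.mem_filter.2 ⟨hx, hle x⟩⟩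
  rw [gstep, dif_pos hne]
  obtain ⟨hmem, hmax⟩ := ((S.filter fun w => l w ≤ r x).exists_max_image r hne).choose_spec
  obtain ⟨h1, h2⟩ := Finset.mem_filter.1 hmem
  exact ⟨h1, h2, fun w hw hlw => hmax w (Finset.mem_filter.2 ⟨hw, hlw⟩)⟩

noncomputable def gseq {V : Type} (l r : V → ℝ) (S : Finset V) (v0 : V) : ℕ → V
  | 0 => v0
  | j + 1 => gstep l r S (gseq l r S v0 j)

/-- Key counting lemma: any `l`-contiguous set with clique number at most `κ` has at most
`κ * M^(κ-1)` vertices, where `M` bounds all induced path sizes of `G`. -/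
lemma count_lemma {V : Type} [Fintype V] (G : SimpleGraph V) (l r : V → ℝ)
    (hrep : IsIntervalRep G l r) (hconsec : ConsecAdjOn G l Set.univ)
    (M : ℕ) (hM1 : 1 ≤ M) (hMmax : ∀ m, HasInducedPathOfSize G m → m ≤ M) :
    ∀ κ : ℕ, ∀ S : Finset V,
      (∀ v ∈ S, ∀ w ∈ S, ∀ u : V, l v ≤ l u → l u ≤ l w → u ∈ S) →
      (∀ T : Finset V, T ⊆ S → G.IsClique (T : Set V) → T.card ≤ κ) →
      S.card ≤ κ * M ^ (κ - 1) := by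
  classical
  obtain ⟨hle, hlinj, hrinj, hlr, hadjiff⟩ := hrep
  intro κ
  induction κ with
  | zero =>
    intro S _ hbound
    rcases S.eq_empty_or_nonempty with h | ⟨v, hv⟩
    · simp [h]
    · exfalso
      have h1 : ({v} : Finset V).card ≤ 0 := hbound {v} (by simpa using hv) (by simp)
      simp at h1
  | succ κ IH =>
    intro S hcontig hbound
    rcases S.eq_empty_or_nonempty with h | hS
    · simp [h]
    obtain ⟨v0, hv0S, hv0min⟩ := S.exists_min_image l hS
    set g : ℕ → V := gseq l r S v0 with hg
    have hg0 : g 0 = v0 := rfl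
    have hgsucc : ∀ j, g (j + 1) = gstep l r S (g j) := fun j => rfl
    -- basic invariants
    have hmem : ∀ j, g j ∈ S := by
      intro j
      induction j with
      | zero => exact hv0S
      | succ j ih => rw [hgsucc]; exact (gstep_spec l r S (g j) hle ih).1
    have hcand : ∀ j, l (g (j + 1)) ≤ r (g j) := by
      intro j; rw [hgsucc]; exact (gstep_spec l r S (g j) hle (hmem j)).2.1
    have hmax' : ∀ j, ∀ w ∈ S, l w ≤ r (g j) → r w ≤ r (g (j + 1)) := by
      intro j; rw [hgsucc]; exact (gstep_spec l r S (g j) hle (hmem j)).2.2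
    have hmono : ∀ j, r (g j) ≤ r (g (j + 1)) := fun j => hmax' j (g j) (hmem j) (hle _)
    have hmono' : ∀ i j, i ≤ j → r (g i) ≤ r (g j) :=
      fun i j hij => monotone_nat_of_le_succ hmono hij
    -- a fixed point exists
    have hex : ∃ j, g (j + 1) = g j := by
      by_contra hc
      push_neg at hc
      have hsm : StrictMono (fun j => r (g j)) := by
        apply strictMono_nat_of_lt_succ
        intro j
        refine lt_of_le_of_ne (hmono j) fun he => hc j (hrinj _ _ he.symm)
      have hginj : Function.Injective g := fun a b hab => hsm.injective (by rw [hab])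
      obtain ⟨x, y, hxy, hfxy⟩ := Finite.exists_ne_map_eq_of_infinite g
      exact hxy (hginj hfxy)
    set J := Nat.find hex with hJdef
    have hJ : g (J + 1) = g J := Nat.find_spec hex
    have hJmin : ∀ i, i < J → g (i + 1) ≠ g i := fun i hi => Nat.find_min hex hi
    have hstrict : ∀ i j, i < j → j ≤ J → r (g i) < r (g j) := by
      intro i j hij hjJ
      have h1 : r (g i) < r (g (i + 1)) :=
        lt_of_le_of_ne (hmono i) fun he => hJmin i (by omega) (hrinj _ _ he.symm)
      exact lt_of_lt_of_le h1 (hmono' (i + 1) j (by omega))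
    have hginj : ∀ i j, i ≤ J → j ≤ J → g i = g j → i = j := by
      intro i j hi hj hgij
      rcases lt_trichotomy i j with h | h | h
      · exact absurd (congrArg r hgij) (ne_of_lt (hstrict i j h hj))
      · exact h
      · exact absurd (congrArg r hgij.symm) (ne_of_lt (hstrict j i h hi))
    have hfix : ∀ w ∈ S, l w ≤ r (g J) → r w ≤ r (g J) := by
      intro w hw hlw
      have := hmax' J w hw hlw
      rwa [hJ] at this
    -- coverage
    have hcover : ∀ v ∈ S, l v ≤ r (g J) := by
      by_contra hc
      push_neg at hc
      obtain ⟨v', hv'S, hv'⟩ := hc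
      have hUne : (S.filter fun v => r (g J) < l v).Nonempty :=
        ⟨v', Finset.mem_filter.2 ⟨hv'S, hv'⟩⟩
      obtain ⟨v, hvU, hvmin⟩ := (S.filter fun v => r (g J) < l v).exists_min_image l hUne
      obtain ⟨hvS, hvgt⟩ := Finset.mem_filter.1 hvU
      have hTne : (S.filter fun w => l w < l v).Nonempty :=
        ⟨g J, Finset.mem_filter.2 ⟨hmem J, lt_of_le_of_lt (hle _) hvgt⟩⟩
      obtain ⟨w, hwT, hwmax⟩ := (S.filter fun w => l w < l v).exists_max_image l hTne
      obtain ⟨hwS, hwlt⟩ := Finset.mem_filter.1 hwT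
      have hadjwv : G.Adj w v := by
        refine hconsec w (Set.mem_univ w) v (Set.mem_univ v) hwlt ?_
        rintro u - ⟨h1, h2⟩
        have huS : u ∈ S := hcontig w hwS v hvS u h1.le h2.le
        have huT : u ∈ S.filter fun w => l w < l v := Finset.mem_filter.2 ⟨huS, h2⟩
        exact absurd (hwmax u huT) (not_le.2 h1)
      have hwv : w ≠ v := fun he => absurd (congrArg l he) (ne_of_lt hwlt)
      have hlvrw : l v ≤ r w := ((hadjiff w v hwv).1 hadjwv).2
      have hwle : l w ≤ r (g J) := by
        by_contra hcc
        push_neg at hcc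
        have : w ∈ S.filter fun v => r (g J) < l v := Finset.mem_filter.2 ⟨hwS, hcc⟩
        exact absurd (hvmin w this) (not_le.2 hwlt)
      have := hfix w hwS hwle
      linarith
    -- far vertices of the greedy sequence are nonadjacent
    have hfar : ∀ i j, i + 2 ≤ j → j ≤ J → r (g i) < l (g j) := by
      have hbase : ∀ i, i + 2 ≤ J → r (g i) < l (g (i + 2)) := by
        intro i hi
        by_contra hcc
        push_neg at hcc
        have h1 : r (g (i + 2)) ≤ r (g (i + 1)) := hmax' i (g (i + 2)) (hmem _) hcc
        have h2 : r (g (i + 1)) < r (g (i + 2)) := hstrict (i + 1) (i + 2) (by omega) hi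
        linarith
      intro i j hij hjJ
      have h1 : r (g (j - 2)) < l (g (j - 2 + 2)) := hbase (j - 2) (by omega)
      rw [show j - 2 + 2 = j from by omega] at h1
      exact lt_of_le_of_lt (hmono' i (j - 2) (by omega)) h1
    have hadjconsec : ∀ i, i < J → G.Adj (g i) (g (i + 1)) := by
      intro i hi
      have hne : g i ≠ g (i + 1) := fun he => by
        have := hginj i (i + 1) (by omega) (by omega) he; omega
      refine (hadjiff (g i) (g (i + 1)) hne).2 ⟨?_, hcand i⟩
      exact le_trans (hle _) (hmono i)
    -- the greedy sequence is an induced path, hence J + 1 ≤ M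
    have hJM : J + 1 ≤ M := by
      refine hMmax (J + 1) (induced_path_of_seq G (J + 1) (fun i => g i) ?_ ?_)
      · intro i j hij
        exact Fin.ext (hginj i j (by omega) (by omega) hij)
      · intro i j
        constructor
        · intro hadj
          by_contra hcc
          push_neg at hcc
          obtain ⟨hc1, hc2⟩ := hcc
          rcases lt_trichotomy (i : ℕ) (j : ℕ) with h | h | h
          · have hij2 : (i : ℕ) + 2 ≤ (j : ℕ) := by omega
            have := hfar i j hij2 (by omega)
            have := ((hadjiff _ _ hadj.ne).1 hadj).2
            linarith
          · exact hadj.ne (congrArg g h)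
          · have hij2 : (j : ℕ) + 2 ≤ (i : ℕ) := by omega
            have := hfar j i hij2 (by omega)
            have := ((hadjiff _ _ hadj.ne).1 hadj).1
            linarith
        · intro h
          rcases h with h | h
          · have := hadjconsec i (by omega)
            rwa [show (i : ℕ) + 1 = (j : ℕ) from h] at this
          · have := hadjconsec j (by omega)
            rw [show (j : ℕ) + 1 = (i : ℕ) from h] at this
            exact this.symm
    -- the blocks
    set A : ℕ → Finset V :=
      fun j => S.filter fun v => l v ≤ r (g j) ∧ ∀ i, i < j → r (g i) < l v with hA
    have hAcover : S ⊆ (Finset.range (J + 1)).biUnion A := by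
      intro v hv
      have hexj : ∃ j, l v ≤ r (g j) := ⟨J, hcover v hv⟩
      set j := Nat.find hexj with hjdef
      have hjJ : j ≤ J := Nat.find_min' hexj (hcover v hv)
      refine Finset.mem_biUnion.2 ⟨j, Finset.mem_range.2 (by omega), ?_⟩
      refine Finset.mem_filter.2 ⟨hv, Nat.find_spec hexj, ?_⟩
      intro i hi
      have := Nat.find_min hexj hi
      push_neg at this
      exact this
    -- bound on each block with index ≥ 1
    have hAbound : ∀ j, j + 1 ≤ J → (A (j + 1)).card ≤ κ * M ^ (κ - 1) := by
      intro j hjJ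
      refine IH (A (j + 1)) ?_ ?_
      · intro v hv w hw u h1 h2
        obtain ⟨hvS, hv1, hv2⟩ := Finset.mem_filter.1 hv
        obtain ⟨hwS, hw1, hw2⟩ := Finset.mem_filter.1 hw
        refine Finset.mem_filter.2 ⟨hcontig v hvS w hwS u h1 h2, le_trans h2 hw1, ?_⟩
        intro i hi
        exact lt_of_lt_of_le (hv2 i hi) h1
      · intro T hT hclique
        have hgnot : g (j + 1) ∉ A (j + 1) := by
          intro hmem'
          obtain ⟨-, -, h2⟩ := Finset.mem_filter.1 hmem'
          exact absurd (hcand j) (not_le.2 (h2 j (by omega)))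
        have hgT : g (j + 1) ∉ T := fun h => hgnot (hT h)
        have hclique' : G.IsClique ((insert (g (j + 1)) T : Finset V) : Set V) := by
          rw [Finset.coe_insert]
          refine hclique.insert ?_
          intro b hb hbne
          obtain ⟨hbS, hb1, hb2⟩ := Finset.mem_filter.1 (hT hb)
          refine (hadjiff (g (j + 1)) b hbne).2 ⟨?_, hb1⟩
          have h3 : r (g j) < l b := hb2 j (by omega)
          exact le_trans (hcand j) (le_trans h3.le (hle b))
        have hsub : insert (g (j + 1)) T ⊆ S := by
          intro x hx
          rcases Finset.mem_insert.1 hx with h | h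
          · rw [h]; exact hmem _
          · exact Finset.mem_filter.1 (hT h) |>.1
        have := hbound _ hsub hclique'
        rw [Finset.card_insert_of_notMem hgT] at this
        omega
    -- bound on block 0
    have hA0 : (A 0).card ≤ κ * M ^ (κ - 1) + 1 := by
      have hv0A : v0 ∈ A 0 := Finset.mem_filter.2 ⟨hv0S, by rw [hg0]; exact hle v0,
        fun i hi => absurd hi (by omega)⟩
      have hB : ((A 0).erase v0).card ≤ κ * M ^ (κ - 1) := by
        refine IH ((A 0).erase v0) ?_ ?_
        · intro v hv w hw u h1 h2
          obtain ⟨hvne, hvA⟩ := Finset.mem_erase.1 hv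
          obtain ⟨hwne, hwA⟩ := Finset.mem_erase.1 hw
          obtain ⟨hvS, hv1, -⟩ := Finset.mem_filter.1 hvA
          obtain ⟨hwS, hw1, -⟩ := Finset.mem_filter.1 hwA
          have huS : u ∈ S := hcontig v hvS w hwS u h1 h2
          have huA : u ∈ A 0 := Finset.mem_filter.2 ⟨huS, le_trans h2 hw1,
            fun i hi => absurd hi (by omega)⟩
          refine Finset.mem_erase.2 ⟨?_, huA⟩
          intro he
          have hlv0v : l v0 < l v :=
            lt_of_le_of_ne (hv0min v hvS) fun heq => hvne (hlinj v0 v heq).symm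
          rw [he] at h1
          exact absurd h1 (not_le.2 hlv0v)
        · intro T hT hclique
          have hv0T : v0 ∉ T := fun h => (Finset.mem_erase.1 (hT h)).1 rfl
          have hclique' : G.IsClique ((insert v0 T : Finset V) : Set V) := by
            rw [Finset.coe_insert]
            refine hclique.insert ?_
            intro b hb hbne
            obtain ⟨-, hbA⟩ := Finset.mem_erase.1 (hT hb)
            obtain ⟨hbS, hb1, -⟩ := Finset.mem_filter.1 hbA
            have hb1' : l b ≤ r v0 := by rwa [hg0] at hb1
            exact (hadjiff v0 b hbne).2
              ⟨le_trans (hv0min b hbS) (hle b), hb1'⟩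
          have hsub : insert v0 T ⊆ S := by
            intro x hx
            rcases Finset.mem_insert.1 hx with h | h
            · rw [h]; exact hv0S
            · exact Finset.mem_filter.1 (Finset.mem_erase.1 (hT h)).2 |>.1
          have := hbound _ hsub hclique'
          rw [Finset.card_insert_of_notMem hv0T] at this
          omega
      calc (A 0).card = ((A 0).erase v0).card + 1 := by
            rw [Finset.card_erase_of_mem hv0A]
            have : 1 ≤ (A 0).card := Finset.card_pos.2 ⟨v0, hv0A⟩
            omega
        _ ≤ κ * M ^ (κ - 1) + 1 := by omega
    -- total count
    have hsum : S.card ≤ ∑ j ∈ Finset.range (J + 1), (A j).card :=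
      le_trans (Finset.card_le_card hAcover) (Finset.card_biUnion_le)
    have htot : S.card ≤ 1 + (J + 1) * (κ * M ^ (κ - 1)) := by
      have h1 : ∑ j ∈ Finset.range (J + 1), (A j).card
          = (∑ j ∈ Finset.range J, (A (j + 1)).card) + (A 0).card :=
        Finset.sum_range_succ' _ J
      have h2 : ∑ j ∈ Finset.range J, (A (j + 1)).card ≤ J * (κ * M ^ (κ - 1)) := by
        calc ∑ j ∈ Finset.range J, (A (j + 1)).card
            ≤ ∑ _j ∈ Finset.range J, κ * M ^ (κ - 1) := by
              refine Finset.sum_le_sum ?_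
              intro j hj
              have hj' := Finset.mem_range.1 hj
              exact hAbound j (by omega)
          _ = J * (κ * M ^ (κ - 1)) := by rw [Finset.sum_const, Finset.card_range, smul_eq_mul]
      calc S.card ≤ ∑ j ∈ Finset.range (J + 1), (A j).card := hsum
        _ = (∑ j ∈ Finset.range J, (A (j + 1)).card) + (A 0).card := h1
        _ ≤ J * (κ * M ^ (κ - 1)) + (κ * M ^ (κ - 1) + 1) := Nat.add_le_add h2 hA0
        _ = 1 + (J + 1) * (κ * M ^ (κ - 1)) := by ring
    -- final arithmetic
    have hfin : 1 + (J + 1) * (κ * M ^ (κ - 1)) ≤ (κ + 1) * M ^ κ := by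
      have hMκ : 1 ≤ M ^ κ := Nat.one_le_pow _ _ (by omega)
      rcases Nat.eq_zero_or_pos κ with h0 | hpos
      · subst h0; simpa using hMκ
      · have hκ1 : κ - 1 + 1 = κ := by omega
        have h4 : M * (κ * M ^ (κ - 1)) = κ * M ^ κ := by
          obtain ⟨κ', rfl⟩ : ∃ κ', κ = κ' + 1 := ⟨κ - 1, by omega⟩
          simp only [Nat.add_sub_cancel, pow_succ]
          ring
        calc 1 + (J + 1) * (κ * M ^ (κ - 1))
            ≤ 1 + M * (κ * M ^ (κ - 1)) :=
              Nat.add_le_add_left (Nat.mul_le_mul hJM le_rfl) 1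
          _ = 1 + κ * M ^ κ := by rw [h4]
          _ ≤ M ^ κ + κ * M ^ κ := Nat.add_le_add_right hMκ _
          _ = (κ + 1) * M ^ κ := by ring
    calc S.card ≤ 1 + (J + 1) * (κ * M ^ (κ - 1)) := htot
      _ ≤ (κ + 1) * M ^ κ := hfin
      _ = (κ + 1) * M ^ (κ + 1 - 1) := by norm_num

/-- Lemma 11 (paper): an interval graph on `n` vertices with maximum clique size
`k ≥ 2`, in which each vertex of the left ordering is adjacent to its successor and
in which no vertex is simplicial except possibly the first and the last vertex of the
left ordering, contains an induced path of size at least `(n / k)^(1/(k-1))`. -/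
theorem interval_induced_path_of_no_simplicial {V : Type} [Fintype V]
    (G : SimpleGraph V) (l r : V → ℝ) (hrep : IsIntervalRep G l r)
    (n : ℕ) (hn : Fintype.card V = n)
    (k : ℕ) (hk : 2 ≤ k) (hmax : MaxCliqueSize G k)
    (hconsec : ConsecAdjOn G l Set.univ)
    (hnosimp : ∀ v : V, (∃ u : V, l u < l v) → (∃ u : V, l v < l u) →
      ¬ G.IsClique (G.neighborSet v)) :
    ∃ m : ℕ, HasInducedPathOfSize G m ∧
      ((n : ℝ) / (k : ℝ)) ^ ((1 : ℝ) / ((k : ℝ) - 1)) ≤ (m : ℝ) := by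
  classical
  have hk2 : (2 : ℝ) ≤ (k : ℝ) := by exact_mod_cast hk
  have hkpos : (0 : ℝ) < (k : ℝ) := by linarith
  have hk1pos : (0 : ℝ) < (k : ℝ) - 1 := by linarith
  rcases Nat.eq_zero_or_pos n with hn0 | hnpos
  · -- empty graph
    subst hn0
    have hempty : IsEmpty V := Fintype.card_eq_zero_iff.1 hn
    refine ⟨0, ⟨(∅ : Set V), by simp, ⟨⟨Equiv.equivOfIsEmpty _ _, ?_⟩⟩⟩, ?_⟩
    · intro a b
      exact isEmptyElim a
    · have h0 : ((1 : ℝ) / ((k : ℝ) - 1)) ≠ 0 := by positivity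
      rw [Nat.cast_zero, zero_div, Real.zero_rpow h0]
  · -- nonempty graph
    have hne : Nonempty V := Fintype.card_pos_iff.1 (hn ▸ hnpos)
    obtain ⟨v⟩ := hne
    have hsize_le_n : ∀ m, HasInducedPathOfSize G m → m ≤ n := by
      rintro m ⟨S, hS, -⟩
      have h1 : S.ncard ≤ (Set.univ : Set V).ncard :=
        Set.ncard_le_ncard (Set.subset_univ S) Set.finite_univ
      rw [hS, Set.ncard_univ, Nat.card_eq_fintype_card, hn] at h1
      exact h1
    have hpath1 : HasInducedPathOfSize G 1 := by
      refine induced_path_of_seq G 1 (fun _ => v) (fun a b _ => Subsingleton.elim a b) ?_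
      intro i j
      have hi : (i : ℕ) = 0 := by omega
      have hj : (j : ℕ) = 0 := by omega
      simp [hi, hj]
    set M := Nat.findGreatest (HasInducedPathOfSize G) n with hM
    have hM1 : 1 ≤ M := Nat.le_findGreatest (by omega) hpath1
    have hMmax : ∀ m, HasInducedPathOfSize G m → m ≤ M :=
      fun m hm => Nat.le_findGreatest (hsize_le_n m hm) hm
    have hMP : HasInducedPathOfSize G M := Nat.findGreatest_spec (by omega : 1 ≤ n) hpath1
    have hcount : (Finset.univ : Finset V).card ≤ k * M ^ (k - 1) := by
      refine count_lemma G l r hrep hconsec M hM1 hMmax k Finset.univ ?_ ?_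
      · intro _ _ _ _ u _ _; exact Finset.mem_univ u
      · intro T _ hclique
        exact hmax.2 T.card T ⟨hclique, rfl⟩
    rw [Finset.card_univ, hn] at hcount
    refine ⟨M, hMP, ?_⟩
    have hMpos : (0 : ℝ) ≤ (M : ℝ) := by positivity
    have hcast : ((k - 1 : ℕ) : ℝ) = (k : ℝ) - 1 := by
      have : 1 ≤ k := by omega
      push_cast [this]
      ring
    have hstep : (n : ℝ) / (k : ℝ) ≤ (M : ℝ) ^ ((k : ℝ) - 1) := by
      have h1 : (n : ℝ) ≤ (k : ℝ) * (M : ℝ) ^ (k - 1 : ℕ) := by exact_mod_cast hcount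
      have h2 : (M : ℝ) ^ ((k : ℝ) - 1) = (M : ℝ) ^ (k - 1 : ℕ) := by
        rw [← hcast, Real.rpow_natCast]
      rw [h2, div_le_iff₀ hkpos]
      linarith
    calc ((n : ℝ) / (k : ℝ)) ^ ((1 : ℝ) / ((k : ℝ) - 1))
        ≤ ((M : ℝ) ^ ((k : ℝ) - 1)) ^ ((1 : ℝ) / ((k : ℝ) - 1)) := by
          apply Real.rpow_le_rpow (by positivity) hstep (by positivity)
      _ = (M : ℝ) := by
          rw [← Real.rpow_mul hMpos, mul_one_div, div_self (ne_of_gt hk1pos), Real.rpow_one]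
end

section
/- Let k ≥ 2 be an integer and let G be an interval graph with n vertices whose maximum clique size is k, such that G contains a Hamiltonian path and n ≥ (k+2)!. Then G contains an induced path of size at least ((log(n/(k+2)!)/log(k+2))^{1/(k−1)} / k)^{1/(k−1)}; in particular, there is a constant c_k > 0 depending only on k such that G contains an induced path of size at least c_k (log n)^{1/(k−1)²}. -/
open SimpleGraph

/-!
Read the Hamiltonian path as a chain of overlapping intervals and let `m` be the largest size of
an induced path. Starting from the interval with the leftmost left end and always jumping to the
overlapping interval that reaches furthest right gives a path `P` along which right endpoints
increase, so a chord `p_i p_j` with `j ≥ i + 2` would contradict the choice of `p_(i+1)`. Thus `P`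
is induced, `|P| ≤ m`, and its intervals cover every left endpoint. Hence every vertex either contains an endpoint of some
`p ∈ P` (at most `2k` vertices per `p`, as the intervals through a point form a clique) or is
nested strictly inside some `p ∈ P`. The intervals nested in `p` all meet `p`, so they have clique
number at most `k - 1`; and the Hamiltonian path visits them in at most `2k + 1` runs, since it can
only leave a run through an interval containing an endpoint of `p`. Each run is again an interval
graph with a Hamiltonian path, so induction on `k` gives `n ≤ (k + 2)! (2m)^k`, which implies both
bounds.
-/

open Finset
open scoped Nat

theorem List.IsChain.iff_of_forall_rel_iff {α : Type*} {R : α → α → Prop} {π : α → Prop}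
    {L : List α} (hL : L.IsChain R) (hR : ∀ x ∈ L, ∀ y ∈ L, R x y → (π x ↔ π y))
    {a b : α} (ha : a ∈ L) (hb : b ∈ L) : π a ↔ π b := by
  have key := (List.IsChain.iff_mem.mp hL).induction
    (fun x => π x ↔ π (L.head (List.ne_nil_of_mem ha))) L
    (fun x y ⟨hx, hy, hxy⟩ h => (hR x hx y hy hxy).symm.trans h) (fun _ => Iff.rfl)
  exact (key a ha).trans (key b hb).symm

theorem List.Nodup.length_filter_mem {α : Type*} [DecidableEq α] {L : List α}
    (hL : L.Nodup) {S : Finset α} (hS : S ⊆ L.toFinset) : (L.filter (· ∈ S)).length = #S := by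
  rw [← List.toFinset_card_of_nodup (hL.filter _), List.toFinset_filter]
  simp only [decide_eq_true_eq, Finset.filter_mem_eq_inter, Finset.inter_eq_right.mpr hS]

section Runs

variable {α : Type*} {R : α → α → Prop} {p q : α → Prop} [DecidablePred p] [DecidablePred q]
  {N : ℕ}

theorem List.length_filter_le_add_length_takeWhile (hexit : ∀ a b, R a b → ¬ p a → p b → q a) :
    ∀ {L : List α}, L.IsChain R → (∀ t, t <:+: L → (∀ x ∈ t, p x) → t.length ≤ N) →
      (L.filter (p ·)).length ≤ N * (L.filter (q ·)).length + (L.takeWhile (p ·)).length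
  | [], _, _ => by simp
  | a :: L, hL, hrun => by
    have ih := List.length_filter_le_add_length_takeWhile hexit hL.of_cons
      (fun t ht => hrun t (List.infix_cons ht))
    have hq : (L.filter (q ·)).length ≤ ((a :: L).filter (q ·)).length :=
      ((List.sublist_cons_self a L).filter _).length_le
    by_cases ha : p a
    · rw [List.filter_cons_of_pos (by simpa using ha), List.takeWhile_cons_of_pos
        (by simpa using ha), List.length_cons, List.length_cons]
      linarith [Nat.mul_le_mul_left N hq]
    · have htake : (L.takeWhile (p ·)).length ≤ N :=
        hrun _ (List.infix_cons (List.takeWhile_prefix _).isInfix)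
          (fun x hx => by simpa using List.mem_takeWhile_imp hx)
      rw [List.filter_cons_of_neg (by simpa using ha), List.takeWhile_cons_of_neg
        (by simpa using ha), List.length_nil, Nat.add_zero]
      rcases L with _ | ⟨b, L⟩
      · simp
      by_cases hb : p b
      · have hqa : q a := hexit a b (List.isChain_cons_cons.mp hL).1 ha hb
        rw [List.filter_cons_of_pos (p := (q ·)) (by simpa using hqa), List.length_cons,
          Nat.mul_succ]
        omega
      · rw [List.takeWhile_cons_of_neg (by simpa using hb), List.length_nil, Nat.add_zero] at ih
        exact ih.trans (Nat.mul_le_mul_left _ hq)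

theorem List.length_filter_le_of_isChain (hexit : ∀ a b, R a b → ¬ p a → p b → q a)
    {L : List α} (hL : L.IsChain R) (hrun : ∀ t, t <:+: L → (∀ x ∈ t, p x) → t.length ≤ N) :
    (L.filter (p ·)).length ≤ N * (1 + (L.filter (q ·)).length) := by
  have htake : (L.takeWhile (p ·)).length ≤ N :=
    hrun _ (List.takeWhile_prefix _).isInfix (fun x hx => by simpa using List.mem_takeWhile_imp hx)
  have := List.length_filter_le_add_length_takeWhile hexit hL hrun
  rw [Nat.mul_add, Nat.mul_one]
  omega

end Runs

namespace IntervalGraph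

section Intervals

variable {V : Type*} {l r : V → ℝ}

def Overlaps (l r : V → ℝ) (v w : V) : Prop := l v ≤ r w ∧ l w ≤ r v

theorem Overlaps.symm {v w : V} (h : Overlaps l r v w) : Overlaps l r w v := ⟨h.2, h.1⟩

def IsChordless (l r : V → ℝ) (C : List V) : Prop :=
  C.Nodup ∧ ∀ (i j : ℕ) (hi : i < C.length) (hj : j < C.length), i < j →
    (Overlaps l r C[i] C[j] ↔ i + 1 = j)

def GreedyStep (l r : V → ℝ) (L : List V) (a b : V) : Prop :=
  Overlaps l r a b ∧ r a < r b ∧ ∀ u ∈ L, Overlaps l r a u → r u ≤ r b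

theorem isChordless_of_isChain_greedyStep {L P : List V} (hP : P.IsChain (GreedyStep l r L))
    (hPL : ∀ p ∈ P, p ∈ L) : IsChordless l r P := by
  have hmono : P.Pairwise (fun a b => r a < r b) := (hP.imp fun _ _ h => h.2.1).pairwise
  refine ⟨hmono.imp fun h heq => h.ne (congrArg r heq), fun i j hi hj hij => ⟨fun hov => ?_, ?_⟩⟩
  · by_contra hne
    have hnext := (List.isChain_iff_getElem.mp hP i (by omega)).2.2 _
      (hPL _ (List.getElem_mem hj)) hov
    exact hnext.not_gt (List.pairwise_iff_getElem.mp hmono (i + 1) j (by omega) hj (by omega))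
  · rintro rfl
    exact (List.isChain_iff_getElem.mp hP i hj).1

theorem exists_mem_le_le_of_isChain :
    ∀ {a : V} {P : List V}, (a :: P).IsChain (Overlaps l r) → ∀ {x : ℝ}, l a ≤ x →
      x ≤ r ((a :: P).getLast (List.cons_ne_nil a P)) → ∃ p ∈ a :: P, l p ≤ x ∧ x ≤ r p
  | a, [], _, _, h₁, h₂ => ⟨a, List.mem_singleton_self a, h₁, h₂⟩
  | a, b :: P, hP, x, h₁, h₂ => by
    by_cases hx : x ≤ r a
    · exact ⟨a, List.mem_cons_self, h₁, hx⟩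
    · obtain ⟨hab, hP'⟩ := List.isChain_cons_cons.mp hP
      obtain ⟨p, hp, hpx⟩ := exists_mem_le_le_of_isChain hP' (hab.2.trans (not_le.mp hx).le)
        (by simpa using h₂)
      exact ⟨p, List.mem_cons_of_mem a hp, hpx⟩

section Spine

variable (hlr : ∀ v, l v ≤ r v)
include hlr

theorem exists_overlaps_lt_of_isChain {L : List V} (hL : L.IsChain (Overlaps l r)) {v w : V}
    (hv : v ∈ L) (hw : w ∈ L) (hvw : r v < r w) : ∃ u ∈ L, Overlaps l r v u ∧ r v < r u := by
  by_contra! h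
  have hcross : ∀ x ∈ L, ∀ y ∈ L, Overlaps l r x y → r x ≤ r v → r y ≤ r v := by
    intro x _ y hy hxy hx
    by_contra! hyv
    exact hyv.not_ge (h y hy ⟨(hlr v).trans hyv.le, hxy.2.trans hx⟩)
  have := hL.iff_of_forall_rel_iff (π := fun x => r x ≤ r v)
    (fun x hx y hy hxy => ⟨hcross x hx y hy hxy, hcross y hy x hx hxy.symm⟩) hv hw
  exact hvw.not_ge (this.mp le_rfl)

theorem exists_isChain_greedyStep {L : List V} (hL : L.IsChain (Overlaps l r)) {v : V}
    (hv : v ∈ L) : ∃ P : List V, (v :: P).IsChain (GreedyStep l r L) ∧ (∀ p ∈ P, p ∈ L) ∧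
      ∀ w ∈ L, r w ≤ r ((v :: P).getLast (List.cons_ne_nil v P)) := by
  classical
  induction hN : #{w ∈ L.toFinset | r v < r w} using Nat.strong_induction_on generalizing v with
  | _ N ih =>
    by_cases hmax : ∀ w ∈ L, r w ≤ r v
    · exact ⟨[], List.isChain_singleton v, by simp, hmax⟩
    push Not at hmax
    obtain ⟨w, hw, hvw⟩ := hmax
    obtain ⟨u₀, hu₀, hvu₀, hru₀⟩ := exists_overlaps_lt_of_isChain hlr hL hv hw hvw
    obtain ⟨u, hu, humax⟩ := Finset.exists_max_image {x ∈ L.toFinset | Overlaps l r v x} r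
      ⟨u₀, by simpa [hu₀] using hvu₀⟩
    simp only [Finset.mem_filter, List.mem_toFinset] at hu humax
    have hvu : r v < r u := hru₀.trans_le (humax u₀ ⟨hu₀, hvu₀⟩)
    have hfewer : #{x ∈ L.toFinset | r u < r x} < N := by
      rw [← hN]
      refine Finset.card_lt_card <| (Finset.ssubset_iff_of_subset <|
        Finset.monotone_filter_right _ fun x _ hx => hvu.trans hx).mpr ⟨u, ?_, by simp⟩
      simpa [hu.1] using hvu
    obtain ⟨P, hP, hPL, hlast⟩ := ih _ hfewer hu.1 rfl
    refine ⟨u :: P, List.isChain_cons_cons.mpr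
      ⟨⟨hu.2, hvu, fun x hx hvx => humax x ⟨hx, hvx⟩⟩, hP⟩, ?_, ?_⟩
    · simpa [hu.1] using hPL
    · simpa using hlast

theorem exists_isChordless_cover {L : List V} (hL : L.IsChain (Overlaps l r)) :
    ∃ P : List V, IsChordless l r P ∧ (∀ p ∈ P, p ∈ L) ∧
      ∀ a ∈ L, ∃ p ∈ P, l p ≤ l a ∧ l a ≤ r p := by
  obtain rfl | hne := eq_or_ne L []
  · exact ⟨[], ⟨List.nodup_nil, by simp⟩, by simp, by simp⟩
  classical
  obtain ⟨v, hv, hvmin⟩ := L.toFinset.exists_min_image l (List.toFinset_nonempty_iff L |>.mpr hne)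
  rw [List.mem_toFinset] at hv
  obtain ⟨P, hP, hPL, hlast⟩ := exists_isChain_greedyStep hlr hL hv
  refine ⟨v :: P, isChordless_of_isChain_greedyStep hP ?_, ?_, fun a ha => ?_⟩
  · simpa [hv] using hPL
  · simpa [hv] using hPL
  · exact exists_mem_le_le_of_isChain (hP.imp fun _ _ h => h.1)
      (hvmin a (List.mem_toFinset.mpr ha)) ((hlr a).trans (hlast a ha))

end Spine

section Counting

noncomputable def stab (l r : V → ℝ) (A : Finset V) (x : ℝ) : Finset V :=
  {v ∈ A | l v ≤ x ∧ x ≤ r v}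

noncomputable def nestedIn (l r : V → ℝ) (A : Finset V) (p : V) : Finset V :=
  {a ∈ A | l p < l a ∧ r a < r p}

noncomputable def endpointStab [DecidableEq V] (l r : V → ℝ) (A : Finset V) (p : V) : Finset V :=
  stab l r A (l p) ∪ stab l r A (r p)

variable [DecidableEq V]

theorem card_endpointStab_le {A : Finset V} {k : ℕ} (hA : ∀ x, #(stab l r A x) ≤ k) (p : V) :
    #(endpointStab l r A p) ≤ 2 * k :=
  (card_union_le _ _).trans (by linarith [hA (l p), hA (r p)])

theorem mem_endpointStab_of_overlaps {A : Finset V} {p a b : V} (ha : a ∈ A)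
    (ha' : a ∉ nestedIn l r A p) (hb : b ∈ nestedIn l r A p) (hab : Overlaps l r a b) :
    a ∈ endpointStab l r A p := by
  simp only [nestedIn, endpointStab, stab, Finset.mem_union, Finset.mem_filter] at *
  by_cases hap : l a ≤ l p
  · exact .inl ⟨ha, hap, hb.2.1.le.trans hab.2⟩
  · exact .inr ⟨ha, hab.1.trans hb.2.2.le, not_lt.mp fun h => ha' ⟨ha, not_le.mp hap, h⟩⟩

theorem mem_endpointStab_or_mem_nestedIn (hlr : ∀ v, l v ≤ r v) {A : Finset V} {p a : V}
    (ha : a ∈ A) (h₁ : l p ≤ l a) (h₂ : l a ≤ r p) :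
    a ∈ endpointStab l r A p ∨ a ∈ nestedIn l r A p := by
  simp only [nestedIn, endpointStab, stab, Finset.mem_union, Finset.mem_filter]
  rcases h₁.eq_or_lt with h | h
  · exact .inl (.inl ⟨ha, h.ge, h ▸ hlr a⟩)
  by_cases hr : r a < r p
  · exact .inr ⟨ha, h, hr⟩
  · exact .inl (.inr ⟨ha, h₂, not_lt.mp hr⟩)

theorem card_stab_le_of_subset_nestedIn {A S : Finset V} {p : V} {k : ℕ} (hp : p ∈ A)
    (hS : S ⊆ nestedIn l r A p) (hA : ∀ x, #(stab l r A x) ≤ k + 1) (x : ℝ) :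
    #(stab l r S x) ≤ k := by
  obtain hempty | ⟨b, hb⟩ := (stab l r S x).eq_empty_or_nonempty
  · simp [hempty]
  have hpS : p ∉ S := fun h => lt_irrefl _ (Finset.mem_filter.mp (hS h)).2.1
  have hbp := (Finset.mem_filter.mp (hS (Finset.mem_filter.mp hb).1)).2
  have hbx := (Finset.mem_filter.mp hb).2
  have hsub : insert p (stab l r S x) ⊆ stab l r A x :=
    Finset.insert_subset (Finset.mem_filter.mpr ⟨hp, hbp.1.le.trans hbx.1, hbx.2.trans hbp.2.le⟩)
      (Finset.filter_subset_filter _ (hS.trans (Finset.filter_subset _ _)))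
  have := (card_le_card hsub).trans (hA x)
  rw [Finset.card_insert_of_notMem (s := stab l r S x) fun h => hpS (Finset.mem_filter.mp h).1]
    at this
  omega

theorem card_nestedIn_le {L : List V} (hnd : L.Nodup) (hL : L.IsChain (Overlaps l r)) {k N : ℕ}
    (hA : ∀ x, #(stab l r L.toFinset x) ≤ k) (p : V)
    (hrun : ∀ t, t <:+: L → (∀ x ∈ t, x ∈ nestedIn l r L.toFinset p) → t.length ≤ N) :
    #(nestedIn l r L.toFinset p) ≤ N * (1 + 2 * k) := by
  have hexit : ∀ a b, (a ∈ L ∧ b ∈ L ∧ Overlaps l r a b) → a ∉ nestedIn l r L.toFinset p →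
      b ∈ nestedIn l r L.toFinset p → a ∈ endpointStab l r L.toFinset p :=
    fun a b ⟨ha, _, hab⟩ ha' hb =>
      mem_endpointStab_of_overlaps (List.mem_toFinset.mpr ha) ha' hb hab
  have := List.length_filter_le_of_isChain hexit (List.IsChain.iff_mem.mp hL) hrun
  rw [hnd.length_filter_mem (S := nestedIn l r L.toFinset p) (Finset.filter_subset _ _),
    hnd.length_filter_mem (S := endpointStab l r L.toFinset p)
      (Finset.union_subset (Finset.filter_subset _ _) (Finset.filter_subset _ _))] at this
  exact this.trans (Nat.mul_le_mul_left _ (by linarith [card_endpointStab_le hA p]))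

theorem length_le_of_forall_isChordless_length_le (hlr : ∀ v, l v ≤ r v) (m : ℕ) :
    ∀ (k : ℕ) {L : List V}, L.Nodup → L.IsChain (Overlaps l r) →
      (∀ x, #(stab l r L.toFinset x) ≤ k) →
      (∀ C, IsChordless l r C → (∀ c ∈ C, c ∈ L) → C.length ≤ m) →
      L.length ≤ (k + 2)! * (2 * m) ^ k
  | 0, [], _, _, _, _ => by simp
  | 0, v :: L, _, _, hA, _ => by
    have hv : v ∈ stab l r (v :: L).toFinset (l v) := by simp [stab, hlr v]
    exact absurd (Finset.card_pos.mpr ⟨v, hv⟩) (by simpa using hA (l v))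
  | k + 1, L, hnd, hL, hA, hm => by
    obtain ⟨P, hP, hPL, hcover⟩ := exists_isChordless_cover hlr hL
    set A := L.toFinset
    set B := (k + 2)! * (2 * m) ^ k with hB
    have hnested : ∀ p ∈ P, #(nestedIn l r A p) ≤ B * (1 + 2 * (k + 1)) := fun p hp =>
      card_nestedIn_le hnd hL hA p fun t ht htp =>
        length_le_of_forall_isChordless_length_le hlr m k (hnd.sublist ht.sublist) (hL.infix ht)
          (card_stab_le_of_subset_nestedIn (List.mem_toFinset.mpr (hPL p hp))
            (fun x hx => htp x (List.mem_toFinset.mp hx)) hA)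
          fun C hC hCt => hm C hC fun c hc => ht.subset (hCt c hc)
    have hcover' : A ⊆ P.toFinset.biUnion fun p => endpointStab l r A p ∪ nestedIn l r A p := by
      intro a ha
      obtain ⟨p, hp, h₁, h₂⟩ := hcover a (List.mem_toFinset.mp ha)
      exact Finset.mem_biUnion.mpr ⟨p, List.mem_toFinset.mpr hp,
        Finset.mem_union.mpr (mem_endpointStab_or_mem_nestedIn hlr ha h₁ h₂)⟩
    have hPm : #P.toFinset ≤ m := (List.toFinset_card_le P).trans (hm P hP hPL)
    calc L.length = #A := (List.toFinset_card_of_nodup hnd).symm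
      _ ≤ ∑ p ∈ P.toFinset, #(endpointStab l r A p ∪ nestedIn l r A p) :=
        (card_le_card hcover').trans card_biUnion_le
      _ ≤ #P.toFinset * (2 * (k + 1) + B * (1 + 2 * (k + 1))) := by
        rw [← smul_eq_mul]
        exact Finset.sum_le_card_nsmul _ _ _ fun p hp => (card_union_le _ _).trans
          (add_le_add (card_endpointStab_le hA p) (hnested p (List.mem_toFinset.mp hp)))
      _ ≤ m * (2 * (k + 1) + B * (1 + 2 * (k + 1))) := Nat.mul_le_mul_right _ hPm
      _ ≤ (k + 1 + 2)! * (2 * m) ^ (k + 1) := by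
        rcases Nat.eq_zero_or_pos m with rfl | hm0
        · simp
        have hkB : k + 2 ≤ B := (Nat.self_le_factorial _).trans
          (Nat.le_mul_of_pos_right _ (Nat.one_le_pow _ _ (by omega)))
        have hsucc : (k + 1 + 2)! * (2 * m) ^ (k + 1) = 2 * m * (k + 3) * B := by
          rw [hB, show k + 1 + 2 = (k + 2) + 1 by ring, Nat.factorial_succ, pow_succ]
          ring
        rw [hsucc]
        nlinarith

end Counting

end Intervals

section Graph

variable {V : Type} {l r : V → ℝ} {G : SimpleGraph V}

theorem hasInducedPathOfSize_of_isChordless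
    (hadj : ∀ v w, v ≠ w → (G.Adj v w ↔ Overlaps l r v w)) {C : List V}
    (hC : IsChordless l r C) : HasInducedPathOfSize G C.length := by
  classical
  let e : Fin C.length ≃ {x // x ∈ C} := List.Nodup.getEquiv C hC.1
  have key : ∀ (i j : ℕ) (hi : i < C.length) (hj : j < C.length), i < j →
      (G.Adj C[i] C[j] ↔ i + 1 = j) := fun i j hi hj hij =>
    (hadj _ _ fun h => hij.ne (hC.1.getElem_inj_iff.mp h)).trans (hC.2 i j hi hj hij)
  refine ⟨{x | x ∈ C}, ?_,
    ⟨(⟨e, fun {i j} => ?_⟩ : pathGraph C.length ≃g G.induce {x | x ∈ C}).symm⟩⟩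
  · rw [← List.coe_toFinset, Set.ncard_coe_finset, List.toFinset_card_of_nodup hC.1]
  · change G.Adj (e i) (e j) ↔ _
    rw [List.Nodup.getEquiv_apply_coe, List.Nodup.getEquiv_apply_coe, pathGraph_adj]
    rcases lt_trichotomy i j with h | rfl | h
    · rw [List.get_eq_getElem, List.get_eq_getElem, key i j i.2 j.2 h]
      omega
    · simp
    · rw [G.adj_comm, List.get_eq_getElem, List.get_eq_getElem, key j i j.2 i.2 h]
      omega

theorem exists_isChordless_forall_length_le [Fintype V] (l r : V → ℝ) :
    ∃ C, IsChordless l r C ∧ ∀ D, IsChordless l r D → D.length ≤ C.length := by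
  classical
  have hnil : ∃ C, IsChordless l r C ∧ C.length = 0 := ⟨[], ⟨List.nodup_nil, by simp⟩, rfl⟩
  obtain ⟨C, hC, hlen⟩ := Nat.findGreatest_spec
    (P := fun n => ∃ C, IsChordless l r C ∧ C.length = n) (Nat.zero_le (Fintype.card V)) hnil
  exact ⟨C, hC, fun D hD => hlen ▸ Nat.le_findGreatest hD.1.length_le_card ⟨D, hD, rfl⟩⟩

theorem isClique_stab (hadj : ∀ v w, v ≠ w → (G.Adj v w ↔ Overlaps l r v w)) (A : Finset V)
    (x : ℝ) : G.IsClique (stab l r A x : Set V) := by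
  intro a ha b hb hab
  simp only [stab, Finset.coe_filter, Set.mem_ofPred_eq] at ha hb
  exact (hadj a b hab).mpr ⟨ha.2.1.trans hb.2.2, hb.2.1.trans ha.2.2⟩

theorem card_le_of_isPath_support [Fintype V] (hlr : ∀ v, l v ≤ r v)
    (hadj : ∀ v w, v ≠ w → (G.Adj v w ↔ Overlaps l r v w)) {k : ℕ}
    (hclique : ∀ (j : ℕ) (S : Finset V), G.IsNClique j S → j ≤ k) {u v : V} {p : G.Walk u v}
    (hp : p.IsPath) (hall : ∀ w, w ∈ p.support) {m : ℕ}
    (hm : ∀ C, IsChordless l r C → C.length ≤ m) :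
    Fintype.card V ≤ (k + 2)! * (2 * m) ^ k := by
  classical
  have huniv : p.support.toFinset = Finset.univ :=
    Finset.eq_univ_of_forall fun w => by simp [hall w]
  have := length_le_of_forall_isChordless_length_le hlr m k hp.support_nodup
    (p.isChain_adj_support.imp fun a b h => (hadj a b h.ne).mp h)
    (fun x => hclique _ _ ⟨isClique_stab hadj _ x, rfl⟩) fun C hC _ => hm C hC
  rwa [← List.toFinset_card_of_nodup hp.support_nodup, huniv, Finset.card_univ] at this

end Graph

end IntervalGraph

theorem rpow_one_div_div_rpow_one_div_le {a c m t : ℝ} (ha : 0 ≤ a) (hc : 0 < c) (hm : 0 ≤ m)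
    (ht : 0 < t) (h : a ≤ (c * m ^ t) ^ t) : (a ^ (1 / t) / c) ^ (1 / t) ≤ m := by
  rw [one_div, Real.rpow_inv_le_iff_of_pos (by positivity) hm ht, div_le_iff₀ hc,
    Real.rpow_inv_le_iff_of_pos ha (by positivity) ht, mul_comm]
  exact h

theorem logb_div_logb_rpow_le_of_le_two_pow {k m : ℕ} (hk : 2 ≤ k) (hm : 1 ≤ m) {x b : ℝ}
    (hx : 1 ≤ x) (hxm : x ≤ 2 ^ (k * m)) (hb : 2 ≤ b) :
    ((Real.logb 2 x / Real.logb 2 b) ^ (1 / ((k : ℝ) - 1)) / k) ^ (1 / ((k : ℝ) - 1)) ≤ m := by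
  have hk' : (2 : ℝ) ≤ k := by exact_mod_cast hk
  have hm' : (1 : ℝ) ≤ m := by exact_mod_cast hm
  have hlogx : 0 ≤ Real.logb 2 x := Real.logb_nonneg one_lt_two hx
  have hlogb : 1 ≤ Real.logb 2 b := by
    rw [← Real.logb_self_eq_one one_lt_two]
    exact Real.logb_le_logb_of_le one_lt_two two_pos hb
  have hlogxm : Real.logb 2 x ≤ k * m := by
    calc Real.logb 2 x ≤ Real.logb 2 ((2 : ℝ) ^ (k * m)) :=
          Real.logb_le_logb_of_le one_lt_two (by linarith) hxm
      _ = k * m := by simp [Real.logb_pow]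
  have hmt : m ≤ (m : ℝ) ^ ((k : ℝ) - 1) := Real.self_le_rpow_of_one_le hm' (by linarith)
  have hkmt : 1 ≤ k * (m : ℝ) ^ ((k : ℝ) - 1) := by nlinarith
  apply rpow_one_div_div_rpow_one_div_le (div_nonneg hlogx (by linarith)) (by linarith)
    (by linarith) (by linarith)
  calc Real.logb 2 x / Real.logb 2 b ≤ Real.logb 2 x := div_le_self hlogx hlogb
    _ ≤ k * m := hlogxm
    _ ≤ k * (m : ℝ) ^ ((k : ℝ) - 1) := by gcongr
    _ ≤ (k * (m : ℝ) ^ ((k : ℝ) - 1)) ^ ((k : ℝ) - 1) :=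
        Real.self_le_rpow_of_one_le hkmt (by linarith)

theorem logb_rpow_le_of_le_mul_two_pow {k m : ℕ} (hk : 2 ≤ k) (hm : 1 ≤ m) {F x : ℝ}
    (hF : 1 ≤ F) (hx : 2 ≤ x) (hxm : x ≤ F * 2 ^ (k * m)) :
    1 / (Real.logb 2 F + k) * Real.logb 2 x ^ (1 / ((k : ℝ) - 1) ^ 2) ≤ m := by
  have hk' : (2 : ℝ) ≤ k := by exact_mod_cast hk
  have hm' : (1 : ℝ) ≤ m := by exact_mod_cast hm
  have hlogF : 0 ≤ Real.logb 2 F := Real.logb_nonneg one_lt_two hF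
  have hlogx : 1 ≤ Real.logb 2 x := by
    rw [← Real.logb_self_eq_one one_lt_two]
    exact Real.logb_le_logb_of_le one_lt_two two_pos hx
  have hexp : 1 / ((k : ℝ) - 1) ^ 2 ≤ 1 := by
    rw [div_le_one (by nlinarith)]
    nlinarith
  rw [div_mul_eq_mul_div, one_mul, div_le_iff₀ (by positivity)]
  calc Real.logb 2 x ^ (1 / ((k : ℝ) - 1) ^ 2) ≤ Real.logb 2 x :=
        Real.rpow_le_self_of_one_le hlogx hexp
    _ ≤ Real.logb 2 (F * 2 ^ (k * m)) := Real.logb_le_logb_of_le one_lt_two (by linarith) hxm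
    _ = Real.logb 2 F + k * m := by
        rw [Real.logb_mul (by positivity) (by positivity)]
        simp [Real.logb_pow]
    _ ≤ m * (Real.logb 2 F + k) := by nlinarith

/-- Theorem 12 (paper): let `k ≥ 2`. Every interval graph on `n ≥ (k+2)!` vertices
with maximum clique size `k` containing a Hamiltonian path contains an induced path of
size at least `((log (n/(k+2)!) / log (k+2))^(1/(k-1)) / k)^(1/(k-1))`; in particular
there is a constant `c_k > 0`, depending only on `k`, such that such a graph contains
an induced path of size at least `c_k (log n)^(1/(k-1)²)` (logarithms in base 2). -/
theorem interval_graph_induced_path (k : ℕ) (hk : 2 ≤ k) :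
    ∃ c : ℝ, 0 < c ∧
      ∀ (V : Type) [Fintype V] (G : SimpleGraph V) (l r : V → ℝ),
        IsIntervalRep G l r →
        ∀ n : ℕ, Fintype.card V = n → Nat.factorial (k + 2) ≤ n →
        MaxCliqueSize G k →
        (∃ (u v : V) (p : G.Walk u v), p.IsPath ∧ ∀ w : V, w ∈ p.support) →
        (∃ m : ℕ, HasInducedPathOfSize G m ∧
          ((Real.logb 2 ((n : ℝ) / (Nat.factorial (k + 2))) / Real.logb 2 (k + 2))
              ^ ((1 : ℝ) / ((k : ℝ) - 1)) / (k : ℝ)) ^ ((1 : ℝ) / ((k : ℝ) - 1))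
            ≤ (m : ℝ)) ∧
        (∃ m : ℕ, HasInducedPathOfSize G m ∧
          c * (Real.logb 2 (n : ℝ)) ^ ((1 : ℝ) / (((k : ℝ) - 1) ^ 2)) ≤ (m : ℝ)) := by
  have hF : (1 : ℝ) ≤ (k + 2)! := by exact_mod_cast (k + 2).factorial_pos
  have hlogF : 0 ≤ Real.logb 2 (k + 2)! := Real.logb_nonneg one_lt_two hF
  -- the bound `n ≤ (k + 2)! * 2 ^ (k * m)` below gives `log n ≤ log (k + 2)! + k * m`
  refine ⟨1 / (Real.logb 2 (k + 2)! + k), by positivity, ?_⟩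
  rintro V _ G l r ⟨hlr, -, -, -, hadj⟩ n rfl hn ⟨-, hclique⟩ ⟨u, v, p, hp, hall⟩
  obtain ⟨C, hC, hCmax⟩ := IntervalGraph.exists_isChordless_forall_length_le l r
  have hpath := IntervalGraph.hasInducedPathOfSize_of_isChordless hadj hC
  have hbound := IntervalGraph.card_le_of_isPath_support hlr hadj hclique hp hall hCmax
  have h24 : 24 ≤ Fintype.card V := (Nat.factorial_le (by omega : 4 ≤ k + 2)).trans hn
  have hm : 1 ≤ C.length := by
    by_contra! h
    simp [Nat.lt_one_iff.mp h, zero_pow (by omega : k ≠ 0)] at hbound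
    omega
  have hcard : (Fintype.card V : ℝ) ≤ (k + 2)! * 2 ^ (k * C.length) := by
    exact_mod_cast hbound.trans <| Nat.mul_le_mul_left _ <|
      (Nat.pow_le_pow_left (Nat.mul_le_pow (by norm_num) _) k).trans_eq (by ring)
  refine ⟨⟨_, hpath, logb_div_logb_rpow_le_of_le_two_pow hk hm ?_ ?_ (by linarith)⟩,
    ⟨_, hpath, logb_rpow_le_of_le_mul_two_pow hk hm hF (by exact_mod_cast (by omega)) hcard⟩⟩
  · rw [le_div_iff₀ (by positivity), one_mul]
    exact_mod_cast hn
  · rw [div_le_iff₀ (by positivity), mul_comm]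
    exact hcard
end

section
/- For every integer i ≥ 0 there exists a 2-tree G on n = 3·2^i vertices that contains a Hamiltonian path and in which every induced path has size at most 2(i + 1). -/
/-!
Start from a triangle and double repeatedly. Given a 2-tree `G` on `Fin n` containing the
path `0, 1, …, n-1`, attach one new vertex to each edge of that path, adjacent to both of its
ends, and one more to the last edge. Interleaving the new vertices with the old ones along the
path gives a 2-tree on `Fin (2n)` that contains the path `0, 1, …, 2n-1`. Every new vertex is
simplicial, so it can only be an end of an induced path. Removing the two ends of an induced
path of the new graph leaves an induced path of the old one, so each doubling raises the bound
on induced paths by at most 2.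
-/

open SimpleGraph

namespace SimpleGraph

variable {U V W : Type}

lemma IsClique.image_embedding {G : SimpleGraph V} {H : SimpleGraph W} {s : Set V}
    (h : G.IsClique s) (f : G ↪g H) : H.IsClique (f '' s) := by
  rintro _ ⟨a, ha, rfl⟩ _ ⟨b, hb, rfl⟩ hne
  exact f.map_adj_iff.2 (h ha hb (ne_of_apply_ne f hne))

lemma nonempty_embedding_of_range_subset {G : SimpleGraph V} {G' : SimpleGraph W}
    {H : SimpleGraph U} (φ : H ↪g G') (ι : G ↪g G') (h : Set.range φ ⊆ Set.range ι) :
    Nonempty (H ↪g G) := by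
  choose ψ hψ using fun x => h ⟨x, rfl⟩
  refine ⟨⟨⟨ψ, fun x y hxy => φ.injective (by rw [← hψ x, ← hψ y, hxy])⟩, fun {x y} => ?_⟩⟩
  change G.Adj (ψ x) (ψ y) ↔ H.Adj x y
  rw [← ι.map_adj_iff, hψ, hψ, φ.map_adj_iff]

lemma le_two_of_embedding_top {m : ℕ} (φ : pathGraph m ↪g (⊤ : SimpleGraph V)) : m ≤ 2 := by
  by_contra! hm
  have := (φ.map_adj_iff (v := ⟨0, by omega⟩) (w := ⟨2, by omega⟩)).1 (by simp [φ.injective.eq_iff])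
  simp [pathGraph_adj] at this

def pathGraphInnerEmbedding (n : ℕ) : pathGraph n ↪g pathGraph (n + 2) where
  toFun j := ⟨j + 1, by omega⟩
  inj' _ _ h := by simpa [Fin.ext_iff] using h
  map_rel_iff' {a b} := by
    change (pathGraph (n + 2)).Adj ⟨a + 1, _⟩ ⟨b + 1, _⟩ ↔ _
    simp [pathGraph_adj]

@[simp]
lemma pathGraphInnerEmbedding_val {n : ℕ} (j : Fin n) :
    (pathGraphInnerEmbedding n j : ℕ) = j + 1 := rfl

lemma not_isClique_neighborSet_pathGraphInnerEmbedding {H : SimpleGraph W} {n : ℕ}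
    (φ : pathGraph (n + 2) ↪g H) (j : Fin n) :
    ¬ H.IsClique (H.neighborSet (φ (pathGraphInnerEmbedding n j))) := by
  intro h
  have := h (x := φ ⟨j, by omega⟩) (y := φ ⟨j + 2, by omega⟩)
    (by simp [φ.map_adj_iff, pathGraph_adj]) (by simp [φ.map_adj_iff, pathGraph_adj])
    (by simp [Fin.ext_iff, φ.injective.eq_iff])
  simp [φ.map_adj_iff, pathGraph_adj] at this
  omega

lemma exists_isPath_forall_mem_support_of_pathGraph_le {n : ℕ} {G : SimpleGraph (Fin n)}
    (h : pathGraph n ≤ G) (hn : 0 < n) :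
    ∃ (u v : Fin n) (p : G.Walk u v), p.IsPath ∧ ∀ w, w ∈ p.support := by
  have hne : List.finRange n ≠ [] := by simpa using hn.ne'
  have hchain : (List.finRange n).IsChain G.Adj := by
    rw [← List.ofFn_id, List.isChain_ofFn]
    exact fun i hi => h (by simp [pathGraph_adj])
  refine ⟨_, _, Walk.ofSupport _ hne hchain, ?_, fun w => ?_⟩ <;>
    simp only [Walk.isPath_def, Walk.support_ofSupport, List.nodup_finRange, List.mem_finRange]

end SimpleGraph

lemma HasInducedPathOfSize.nonempty_embedding {V : Type} {G : SimpleGraph V} {m : ℕ}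
    (h : HasInducedPathOfSize G m) : Nonempty (pathGraph m ↪g G) :=
  let ⟨S, _, ⟨φ⟩⟩ := h
  ⟨(Embedding.induce S).comp φ.symm.toEmbedding⟩

section KTree

variable {V W : Type}

lemma mem_earlierNbrs {G : SimpleGraph V} {p : ℕ} {e : Fin p ≃ V} {i : Fin p} {v : V} :
    v ∈ earlierNbrs G e i ↔ e.symm v < i ∧ G.Adj (e i) v := by
  constructor
  · rintro ⟨j, hj, rfl, hadj⟩
    simpa using ⟨hj, hadj⟩
  · rintro ⟨hv, hadj⟩
    exact ⟨e.symm v, hv, by simp, hadj⟩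

lemma IsKTree.of_iso [Fintype V] [Fintype W] {k : ℕ} {G : SimpleGraph V} {H : SimpleGraph W}
    (φ : G ≃g H) (hG : IsKTree k G) : IsKTree k H := by
  obtain ⟨hk, e, hinit, hstep⟩ := hG
  have hcard := Fintype.card_congr φ.toEquiv
  have hφ : ∀ u, φ.toEquiv.symm (φ u) = u := φ.toEquiv.symm_apply_apply
  let c : Fin (Fintype.card W) ≃ Fin (Fintype.card V) := finCongr hcard.symm
  have hnbrs : ∀ i, earlierNbrs H (c.trans (e.trans φ.toEquiv)) i =
      φ '' earlierNbrs G e (c i) := by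
    intro i
    ext v
    obtain ⟨u, rfl⟩ := φ.surjective v
    simp [mem_earlierNbrs, c, Fin.lt_def, φ.injective.mem_set_image, Iso.map_adj_iff, hφ]
  refine ⟨hcard ▸ hk, c.trans (e.trans φ.toEquiv), ?_, fun i hi => ?_⟩
  · have : c.trans (e.trans φ.toEquiv) '' {i | (i : ℕ) < k} = φ '' (e '' {i | (i : ℕ) < k}) := by
      simp only [Equiv.image_eq_preimage_symm]
      ext v
      obtain ⟨u, rfl⟩ := φ.surjective v
      simp [c, φ.injective.mem_set_image, hφ]
    rw [this]
    exact hinit.image_embedding φ.toEmbedding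
  · obtain ⟨hclique, hncard⟩ := hstep (c i) hi
    rw [hnbrs]
    exact ⟨hclique.image_embedding φ.toEmbedding,
      by rw [Set.ncard_image_of_injective _ φ.injective, hncard]⟩

lemma isKTree_top [Fintype V] {k : ℕ} (hV : Fintype.card V = k + 1) :
    IsKTree k (⊤ : SimpleGraph V) := by
  refine ⟨by omega, (Fintype.equivFin V).symm, fun _ _ _ _ h => h,
    fun i hi => ⟨fun _ _ _ _ h => h, ?_⟩⟩
  have : earlierNbrs ⊤ (Fintype.equivFin V).symm i =
      (Fintype.equivFin V).symm '' ↑(Finset.Iio i) := by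
    ext v
    simp only [mem_earlierNbrs, Set.mem_image_equiv, top_adj, Finset.coe_Iio, Set.mem_Iio,
      Equiv.symm_symm, and_iff_left_iff_imp]
    rintro h rfl
    simp at h
  rw [this, Set.ncard_image_of_injective _ (Equiv.injective _), Set.ncard_coe_finset, Fin.card_Iio]
  omega

noncomputable def sumOrder [Fintype V] [Fintype W] (e : Fin (Fintype.card V) ≃ V) :
    Fin (Fintype.card (V ⊕ W)) ≃ V ⊕ W :=
  (finCongr Fintype.card_sum).trans <|
    finSumFinEquiv.symm.trans (e.sumCongr (Fintype.equivFin W).symm)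

variable [Fintype V] [Fintype W] (e : Fin (Fintype.card V) ≃ V)

@[simp]
lemma sumOrder_symm_inl (a : V) : ((sumOrder (W := W) e).symm (.inl a) : ℕ) = e.symm a := by
  simp [sumOrder]

lemma card_le_sumOrder_symm_inr (w : W) : Fintype.card V ≤ ((sumOrder e).symm (.inr w) : ℕ) := by
  simp [sumOrder]

lemma sumOrder_symm_inl_lt_inl {a b : V} :
    (sumOrder (W := W) e).symm (.inl a) < (sumOrder e).symm (.inl b) ↔ e.symm a < e.symm b := by
  rw [Fin.lt_def, Fin.lt_def, sumOrder_symm_inl, sumOrder_symm_inl]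

lemma sumOrder_symm_inl_lt_inr (a : V) (w : W) :
    (sumOrder e).symm (.inl a) < (sumOrder e).symm (.inr w) := by
  rw [Fin.lt_def, sumOrder_symm_inl]
  exact (e.symm a).isLt.trans_le (card_le_sumOrder_symm_inr e w)

end KTree

namespace SimpleGraph

section Attach

variable {V W : Type} (G : SimpleGraph V) (f : W → Set V)

def attach : SimpleGraph (V ⊕ W) where
  Adj
    | .inl a, .inl b => G.Adj a b
    | .inl a, .inr w | .inr w, .inl a => a ∈ f w
    | .inr _, .inr _ => False
  symm := ⟨by rintro (a | w) (b | w') h; exacts [G.adj_symm h, h, h, h]⟩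
  loopless := ⟨by rintro (a | w) h; exacts [G.loopless.irrefl a h, h]⟩

@[simp] lemma attach_adj_inl_inl {a b : V} : (G.attach f).Adj (.inl a) (.inl b) ↔ G.Adj a b :=
  Iff.rfl

@[simp] lemma attach_adj_inl_inr {a : V} {w : W} : (G.attach f).Adj (.inl a) (.inr w) ↔ a ∈ f w :=
  Iff.rfl

@[simp] lemma attach_adj_inr_inl {a : V} {w : W} : (G.attach f).Adj (.inr w) (.inl a) ↔ a ∈ f w :=
  Iff.rfl

@[simp] lemma not_attach_adj_inr_inr {w w' : W} : ¬ (G.attach f).Adj (.inr w) (.inr w') :=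
  id

def attachInl : G ↪g G.attach f := ⟨Function.Embedding.inl, Iff.rfl⟩

lemma neighborSet_attach_inr (w : W) : (G.attach f).neighborSet (.inr w) = .inl '' f w := by
  ext (a | w') <;> simp

variable {G f}

lemma isClique_neighborSet_attach_inr {w : W} (hf : G.IsClique (f w)) :
    (G.attach f).IsClique ((G.attach f).neighborSet (.inr w)) := by
  rw [neighborSet_attach_inr]
  exact hf.image_embedding (attachInl G f)

lemma le_add_two_of_embedding_attach {L m : ℕ} (hf : ∀ w, G.IsClique (f w))
    (hL : ∀ m, Nonempty (pathGraph m ↪g G) → m ≤ L) (φ : pathGraph m ↪g G.attach f) :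
    m ≤ L + 2 := by
  rcases lt_or_ge m 2 with hm | hm
  · omega
  obtain ⟨n, rfl⟩ := Nat.exists_eq_add_of_le' hm
  suffices n ≤ L by omega
  refine hL n <| nonempty_embedding_of_range_subset (φ.comp (pathGraphInnerEmbedding n))
    (attachInl G f) ?_
  rintro _ ⟨j, rfl⟩
  rcases hx : φ (pathGraphInnerEmbedding n j) with a | w
  · exact ⟨a, hx.symm⟩
  · exact absurd (hx ▸ isClique_neighborSet_attach_inr (hf w))
      (not_isClique_neighborSet_pathGraphInnerEmbedding φ j)

variable [Fintype V] [Fintype W] (e : Fin (Fintype.card V) ≃ V)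

lemma earlierNbrs_attach_sumOrder_inl (a : V) :
    earlierNbrs (G.attach f) (sumOrder e) ((sumOrder e).symm (.inl a)) =
      .inl '' earlierNbrs G e (e.symm a) := by
  ext (b | w)
  · simp [mem_earlierNbrs, sumOrder_symm_inl_lt_inl]
  · simp [mem_earlierNbrs, (sumOrder_symm_inl_lt_inr e a w).not_gt]

lemma earlierNbrs_attach_sumOrder_inr (w : W) :
    earlierNbrs (G.attach f) (sumOrder e) ((sumOrder e).symm (.inr w)) = .inl '' f w := by
  ext (b | w')
  · simp [mem_earlierNbrs, sumOrder_symm_inl_lt_inr]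
  · simp [mem_earlierNbrs]

omit e in
lemma isKTree_attach {k : ℕ} (hG : IsKTree k G) (hf : ∀ w, G.IsClique (f w) ∧ (f w).ncard = k) :
    IsKTree k (G.attach f) := by
  obtain ⟨hk, e, hinit, hstep⟩ := hG
  refine ⟨by rw [Fintype.card_sum]; omega, sumOrder e, ?_, fun i hi => ?_⟩
  · have : sumOrder (W := W) e '' {i | (i : ℕ) < k} = .inl '' (e '' {i | (i : ℕ) < k}) := by
      simp only [Equiv.image_eq_preimage_symm]
      ext (a | w)
      · simp
      · simpa using hk.trans (card_le_sumOrder_symm_inr e w)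
    rw [this]
    exact hinit.image_embedding (attachInl G f)
  obtain ⟨a | w, rfl⟩ := (sumOrder e).symm.surjective i
  · obtain ⟨hclique, hcard⟩ := hstep (e.symm a) (by simpa using hi)
    rw [earlierNbrs_attach_sumOrder_inl]
    exact ⟨hclique.image_embedding (attachInl G f),
      by rw [Set.ncard_image_of_injective _ Sum.inl_injective, hcard]⟩
  · rw [earlierNbrs_attach_sumOrder_inr]
    exact ⟨(hf w).1.image_embedding (attachInl G f),
      by rw [Set.ncard_image_of_injective _ Sum.inl_injective, (hf w).2]⟩

end Attach

section Double

variable {n : ℕ}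

/-- The edge `{j, j+1}` of the path `0, 1, …, n-1`, and the last edge `{n-2, n-1}` for
`j = n-1`. -/
def pathEdge (n : ℕ) (j : Fin n) : Set (Fin n) :=
  {v | (v : ℕ) = min (j : ℕ) (n - 2) ∨ (v : ℕ) = min (j : ℕ) (n - 2) + 1}

lemma isClique_pathEdge {G : SimpleGraph (Fin n)} (h : pathGraph n ≤ G) (j : Fin n) :
    G.IsClique (pathEdge n j) := by
  intro a ha b hb hne
  apply h
  simp only [pathEdge, Set.mem_ofPred_eq] at ha hb
  rw [pathGraph_adj]
  have := Fin.val_ne_of_ne hne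
  omega

lemma ncard_pathEdge (hn : 2 ≤ n) (j : Fin n) : (pathEdge n j).ncard = 2 := by
  have : pathEdge n j = {⟨min (j : ℕ) (n - 2), by omega⟩, ⟨min (j : ℕ) (n - 2) + 1, by omega⟩} := by
    ext v
    simp [pathEdge, Fin.ext_iff]
  rw [this, Set.ncard_pair (by simp [Fin.ext_iff])]

def interleave (n : ℕ) : Fin n ⊕ Fin n ≃ Fin (n * 2) :=
  (Equiv.boolProdEquivSum (Fin n)).symm.trans <| (Equiv.prodComm _ _).trans <|
    (Equiv.prodCongr (Equiv.refl _) finTwoEquiv.symm).trans finProdFinEquiv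

@[simp] lemma interleave_inl (j : Fin n) : (interleave n (.inl j) : ℕ) = 2 * j := by
  simp [interleave, finTwoEquiv, mul_comm]

@[simp] lemma interleave_inr (j : Fin n) : (interleave n (.inr j) : ℕ) = 2 * j + 1 := by
  simp [interleave, finTwoEquiv, mul_comm, add_comm]

/-- Vertex `2j` is the old vertex `j` and vertex `2j+1` is a new vertex attached to
`pathEdge n j`, so that `0, 1, …, 2n-1` is again a path. -/
def double (G : SimpleGraph (Fin n)) : SimpleGraph (Fin (n * 2)) :=
  (G.attach (pathEdge n)).map (interleave n).toEmbedding

lemma pathGraph_le_double (G : SimpleGraph (Fin n)) : pathGraph (n * 2) ≤ double G := by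
  intro u v huv
  obtain ⟨x, rfl⟩ := (interleave n).surjective u
  obtain ⟨y, rfl⟩ := (interleave n).surjective v
  rw [pathGraph_adj] at huv
  rw [double, ← Equiv.coe_toEmbedding, map_adj_apply]
  rcases x with a | a <;> rcases y with b | b <;>
    simp only [interleave_inl, interleave_inr] at huv <;>
    simp [pathEdge] <;> omega

lemma isKTree_double {G : SimpleGraph (Fin n)} (hn : 2 ≤ n) (hpath : pathGraph n ≤ G)
    (hG : IsKTree 2 G) : IsKTree 2 (double G) :=
  (isKTree_attach hG fun j => ⟨isClique_pathEdge hpath j, ncard_pathEdge hn j⟩).of_iso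
    (Iso.map _ _)

lemma le_add_two_of_embedding_double {G : SimpleGraph (Fin n)} {L m : ℕ}
    (hpath : pathGraph n ≤ G) (hL : ∀ m, Nonempty (pathGraph m ↪g G) → m ≤ L)
    (φ : pathGraph m ↪g double G) : m ≤ L + 2 :=
  le_add_two_of_embedding_attach (isClique_pathEdge hpath) hL
    ((Iso.map _ _).symm.toEmbedding.comp φ)

end Double

lemma exists_twoTree_pathGraph_le (i : ℕ) :
    ∃ G : SimpleGraph (Fin (3 * 2 ^ i)), pathGraph _ ≤ G ∧ IsKTree 2 G ∧
      ∀ m, Nonempty (pathGraph m ↪g G) → m ≤ 2 * (i + 1) := by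
  induction i with
  | zero => exact ⟨⊤, le_top, isKTree_top (by simp), fun m ⟨φ⟩ => le_two_of_embedding_top φ⟩
  | succ i ih =>
    obtain ⟨G, hpath, hG, hL⟩ := ih
    have hn : 2 ≤ 3 * 2 ^ i := by have := Nat.one_le_two_pow (n := i); omega
    rw [pow_succ, ← mul_assoc]
    exact ⟨double G, pathGraph_le_double G, isKTree_double hn hpath hG,
      fun m ⟨φ⟩ => le_add_two_of_embedding_double hpath hL φ⟩

end SimpleGraph

/-- For every `i ≥ 0` there is a 2-tree on `n = 3·2^i` vertices with a Hamiltonian path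
in which every induced path has size at most `2(i+1)`. -/
theorem exists_two_tree_short_induced_paths (i : ℕ) :
    ∃ G : SimpleGraph (Fin (3 * 2 ^ i)),
      IsKTree 2 G ∧
      (∃ (u v : Fin (3 * 2 ^ i)) (p : G.Walk u v), p.IsPath ∧ ∀ w, w ∈ p.support) ∧
      ∀ m : ℕ, HasInducedPathOfSize G m → m ≤ 2 * (i + 1) := by
  obtain ⟨G, hpath, hG, hL⟩ := exists_twoTree_pathGraph_le i
  exact ⟨G, hG, exists_isPath_forall_mem_support_of_pathGraph_le hpath (by positivity),
    fun m hm => hL m hm.nonempty_embedding⟩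
end

section
/- For all integers k ≥ 2 and i ≥ 1, there exists a k-tree G on n = 3·2^i + k − 2 vertices that contains a Hamiltonian path and in which every induced path has size at most 2·log n. -/
/-!
The witness is the balanced triangulation of the `3 * 2 ^ i`-gon joined to `k - 2` apex vertices
adjacent to everything. The triangulation of level `i + 1` arises from that of level `i`, placed
on the even vertices, by inserting an odd vertex (an ear) into every edge of the outer cycle.
Listing the even vertices first (recursively) and then the odd ones shows that the
triangulation is a 2-tree, hence that the whole graph is a `k`-tree, and the outer cycle gives
the Hamiltonian path. An induced path through an apex has at most three vertices. Otherwise its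
interior vertices are even, since the two neighbours of an odd vertex are adjacent; removing
the two endpoints and halving gives an induced path of level `i`, so induced paths have at most
`2 i + 3 ≤ 2 log (3 * 2 ^ i)` vertices.
-/

open SimpleGraph

def cycleAdj (N a b : ℕ) : Prop :=
  a + 1 = b ∨ b + 1 = a ∨ (a = 0 ∧ b + 1 = N) ∨ (b = 0 ∧ a + 1 = N)

/-- Adjacency in the balanced triangulation of the polygon `0, 1, …, 3 * 2 ^ i - 1`. -/
def triAdj : ℕ → ℕ → ℕ → Prop
  | 0, a, b => cycleAdj 3 a b
  | i + 1, a, b => cycleAdj (3 * 2 ^ (i + 1)) a b ∨ (2 ∣ a ∧ 2 ∣ b ∧ triAdj i (a / 2) (b / 2))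

/-- Position of a vertex in a 2-simplicial ordering of the triangulation: the even vertices
first, in the order of the previous level, then the odd ones. -/
def triRank : ℕ → ℕ → ℕ
  | 0, a => a
  | i + 1, a => if 2 ∣ a then triRank i (a / 2) else 3 * 2 ^ i + a / 2

lemma three_mul_two_pow_succ (i : ℕ) : 3 * 2 ^ (i + 1) = 2 * (3 * 2 ^ i) := by ring

lemma cycleAdj_comm {N a b : ℕ} : cycleAdj N a b ↔ cycleAdj N b a := by
  unfold cycleAdj; tauto

lemma triAdj_comm {i a b : ℕ} : triAdj i a b ↔ triAdj i b a := by
  induction i generalizing a b with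
  | zero => exact cycleAdj_comm
  | succ i ih => simp only [triAdj, cycleAdj_comm (a := a), ih (a := a / 2)]; tauto

lemma triAdj_of_cycleAdj {i a b : ℕ} (h : cycleAdj (3 * 2 ^ i) a b) : triAdj i a b := by
  cases i with
  | zero => exact h
  | succ i => exact Or.inl h

lemma triAdj_succ_iff_of_odd {i a b : ℕ} (ha : ¬ 2 ∣ a) :
    triAdj (i + 1) a b ↔ cycleAdj (2 * (3 * 2 ^ i)) a b := by
  simp [triAdj, three_mul_two_pow_succ, ha]

lemma triAdj_succ_iff_of_even {i a b : ℕ} (ha : 2 ∣ a) (hb : 2 ∣ b) :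
    triAdj (i + 1) a b ↔ triAdj i (a / 2) (b / 2) := by
  simp only [triAdj, ha, hb, true_and]
  rw [or_iff_right]
  simp only [three_mul_two_pow_succ, cycleAdj]
  omega

lemma triAdj_of_cycleAdj_odd {i a b b' : ℕ} (ha : ¬ 2 ∣ a) (hb : b < 2 * (3 * 2 ^ i))
    (hb' : b' < 2 * (3 * 2 ^ i)) (hbb' : b ≠ b')
    (hab : cycleAdj (2 * (3 * 2 ^ i)) a b) (hab' : cycleAdj (2 * (3 * 2 ^ i)) a b') :
    triAdj (i + 1) b b' := by
  unfold cycleAdj at hab hab'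
  rw [triAdj_succ_iff_of_even (by omega) (by omega)]
  apply triAdj_of_cycleAdj
  unfold cycleAdj
  omega

lemma triRank_lt {i a : ℕ} (ha : a < 3 * 2 ^ i) : triRank i a < 3 * 2 ^ i := by
  induction i generalizing a with
  | zero => exact ha
  | succ i ih =>
    rw [three_mul_two_pow_succ] at ha ⊢
    unfold triRank
    split_ifs
    · have := ih (a := a / 2) (by omega); omega
    · omega

lemma triRank_inj {i a b : ℕ} (ha : a < 3 * 2 ^ i) (hb : b < 3 * 2 ^ i)
    (h : triRank i a = triRank i b) : a = b := by
  induction i generalizing a b with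
  | zero => exact h
  | succ i ih =>
    rw [three_mul_two_pow_succ] at ha hb
    unfold triRank at h
    have ha' := triRank_lt (i := i) (a := a / 2) (by omega)
    have hb' := triRank_lt (i := i) (a := b / 2) (by omega)
    split_ifs at h
    · have := ih (by omega) (by omega) h; omega
    all_goals omega

lemma triAdj_of_triRank_lt_two {i a b : ℕ} (ha : a < 3 * 2 ^ i) (hb : b < 3 * 2 ^ i)
    (hra : triRank i a < 2) (hrb : triRank i b < 2) (hab : a ≠ b) : triAdj i a b := by
  induction i generalizing a b with
  | zero => simp only [triRank] at hra hrb; simp only [triAdj, cycleAdj]; omega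
  | succ i ih =>
    rw [three_mul_two_pow_succ] at ha hb
    have h3 : 3 ≤ 3 * 2 ^ i := Nat.le_mul_of_pos_right 3 (by positivity)
    unfold triRank at hra hrb
    split_ifs at hra hrb with hea heb
    · rw [triAdj_succ_iff_of_even hea heb]
      exact ih (by omega) (by omega) hra hrb (by omega)
    all_goals omega

lemma exists_cycleAdj_iff_of_odd {n a : ℕ} (hn : 2 ≤ n) (ha : ¬ 2 ∣ a) (han : a < 2 * n) :
    ∃ b', b' < 2 * n ∧ 2 ∣ b' ∧ a - 1 ≠ b' ∧
      ∀ x < 2 * n, cycleAdj (2 * n) a x ↔ x = a - 1 ∨ x = b' := by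
  unfold cycleAdj
  by_cases hlast : a + 1 = 2 * n
  · exact ⟨0, by omega, by omega, by omega, fun x _ => by omega⟩
  · exact ⟨a + 1, by omega, by omega, by omega, fun x _ => by omega⟩

lemma exists_earlier_triAdj {i a : ℕ} (ha : a < 3 * 2 ^ i) (hr : 2 ≤ triRank i a) :
    ∃ b b', b < 3 * 2 ^ i ∧ b' < 3 * 2 ^ i ∧ b ≠ b' ∧ triAdj i b b' ∧
      ∀ x < 3 * 2 ^ i, (triRank i x < triRank i a ∧ triAdj i a x) ↔ x = b ∨ x = b' := by
  induction i generalizing a with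
  | zero =>
    refine ⟨0, 1, by simp, by simp, by simp, by simp [triAdj, cycleAdj], fun x hx => ?_⟩
    simp only [triRank] at hr ⊢
    simp only [triAdj, cycleAdj]
    omega
  | succ i ih =>
    rw [three_mul_two_pow_succ] at ha ⊢
    by_cases hea : 2 ∣ a
    · have hr' : 2 ≤ triRank i (a / 2) := by simpa [triRank, hea] using hr
      obtain ⟨b, b', hb, hb', hbb', hadj, hearlier⟩ := ih (by omega) hr'
      refine ⟨2 * b, 2 * b', by omega, by omega, by omega, ?_, fun x hx => ?_⟩
      · rw [triAdj_succ_iff_of_even (by omega) (by omega)]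
        simpa using hadj
      · by_cases hex : 2 ∣ x
        · rw [triAdj_succ_iff_of_even hea hex]
          simp only [triRank, hea, hex, if_true]
          rw [hearlier (x / 2) (by omega)]
          omega
        · have := triRank_lt (i := i) (a := a / 2) (by omega)
          simp only [triRank, hea, hex, if_true, if_false]
          omega
    · have h3 : 3 ≤ 3 * 2 ^ i := Nat.le_mul_of_pos_right 3 (by positivity)
      obtain ⟨b', hb', heb', hbb', hcycle⟩ := exists_cycleAdj_iff_of_odd (by omega) hea ha
      refine ⟨a - 1, b', by omega, hb', hbb', ?_, fun x hx => ?_⟩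
      · exact triAdj_of_cycleAdj_odd hea (by omega) hb' hbb'
          ((hcycle _ (by omega)).2 (Or.inl rfl)) ((hcycle _ hb').2 (Or.inr rfl))
      rw [triAdj_succ_iff_of_odd hea, hcycle x hx, and_iff_right_of_imp]
      intro hx'
      have hex : 2 ∣ x := by omega
      have := triRank_lt (i := i) (a := x / 2) (by omega)
      simp only [triRank, hea, hex, if_true, if_false]
      omega

structure IsInducedPathSeq (r : ℕ → ℕ → Prop) (m : ℕ) (f : ℕ → ℕ) : Prop where
  ne : ∀ j l, j < l → l < m → f j ≠ f l
  adj : ∀ j, j + 1 < m → r (f j) (f (j + 1))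
  not_adj : ∀ j l, j + 2 ≤ l → l < m → ¬ r (f j) (f l)

namespace IsInducedPathSeq

variable {i m : ℕ} {f : ℕ → ℕ}

lemma two_dvd_of_interior (hp : IsInducedPathSeq (triAdj (i + 1)) m f)
    (hf : ∀ j < m, f j < 2 * (3 * 2 ^ i)) {j : ℕ} (hj : 0 < j) (hjm : j + 1 < m) : 2 ∣ f j := by
  by_contra hodd
  have hprev : cycleAdj (2 * (3 * 2 ^ i)) (f j) (f (j - 1)) := by
    rw [← triAdj_succ_iff_of_odd hodd, triAdj_comm]
    simpa [Nat.sub_add_cancel hj] using hp.adj (j - 1) (by omega)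
  have hnext := (triAdj_succ_iff_of_odd hodd).1 (hp.adj j hjm)
  exact hp.not_adj (j - 1) (j + 1) (by omega) hjm <|
    triAdj_of_cycleAdj_odd hodd (hf _ (by omega)) (hf _ hjm) (hp.ne _ _ (by omega) hjm) hprev hnext

lemma halve (hp : IsInducedPathSeq (triAdj (i + 1)) m f) (hf : ∀ j < m, f j < 2 * (3 * 2 ^ i)) :
    IsInducedPathSeq (triAdj i) (m - 2) (fun j => f (j + 1) / 2) := by
  have heven : ∀ j < m - 2, 2 ∣ f (j + 1) := fun j hj =>
    hp.two_dvd_of_interior hf (by omega) (by omega)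
  refine ⟨fun j l hjl hl => ?_, fun j hj => ?_, fun j l hjl hl => ?_⟩
  · have := heven j (by omega)
    have := heven l hl
    have := hp.ne (j + 1) (l + 1) (by omega) (by omega)
    omega
  · exact (triAdj_succ_iff_of_even (heven j (by omega)) (heven (j + 1) hj)).1
      (hp.adj (j + 1) (by omega))
  · rw [← triAdj_succ_iff_of_even (heven j (by omega)) (heven l hl)]
    exact hp.not_adj _ _ (by omega) (by omega)

theorem length_le (hp : IsInducedPathSeq (triAdj i) m f) (hf : ∀ j < m, f j < 3 * 2 ^ i) :
    m ≤ 2 * i + 3 := by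
  induction i generalizing m f with
  | zero =>
    have hinj : Set.InjOn f (Finset.range m) := fun j hj l hl hjl => by
      simp only [Finset.coe_range, Set.mem_Iio] at hj hl
      by_contra hne
      rcases Nat.lt_or_gt_of_ne hne with h | h
      exacts [hp.ne j l h hl hjl, hp.ne l j h hj hjl.symm]
    have hmaps : Set.MapsTo f (Finset.range m) (Finset.range 3) := fun j hj => by
      simpa using hf j (by simpa using hj)
    simpa using Finset.card_le_card_of_injOn f hmaps hinj
  | succ i ih =>
    simp only [three_mul_two_pow_succ] at hf
    have := ih (hp.halve hf) fun j hj => by have := hf (j + 1) (by omega); omega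
    omega

end IsInducedPathSeq

lemma le_three_of_pathGraph_embedding_of_forall_adj {V : Type} {G : SimpleGraph V} {m : ℕ}
    (ψ : pathGraph m ↪g G) {j : Fin m} (hj : ∀ w, w ≠ ψ j → G.Adj (ψ j) w) : m ≤ 3 := by
  by_contra! hm
  obtain ⟨l, hl⟩ : ∃ l : Fin m, (j : ℕ) + 2 ≤ l ∨ (l : ℕ) + 2 ≤ j :=
    if h : (j : ℕ) + 2 < m then ⟨⟨j + 2, h⟩, Or.inl le_rfl⟩
    else ⟨⟨j - 2, by omega⟩, Or.inr (by simp only; omega)⟩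
  have hadj := hj (ψ l) (ψ.injective.ne fun h => by rw [h] at hl; omega)
  rw [ψ.map_adj_iff, pathGraph_adj] at hadj
  omega

theorem isKTree_of_equiv {V : Type} [Fintype V] {k N : ℕ} {G : SimpleGraph V} (κ : V ≃ Fin N)
    (hk : k ≤ N) (hinit : G.IsClique {v | (κ v : ℕ) < k})
    (hlater : ∀ v, k ≤ (κ v : ℕ) → G.IsClique {w | κ w < κ v ∧ G.Adj v w} ∧
      {w | κ w < κ v ∧ G.Adj v w}.ncard = k) :
    IsKTree k G := by
  have hN : Fintype.card V = N := by simp [Fintype.card_congr κ]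
  let e : Fin (Fintype.card V) ≃ V := (finCongr hN).trans κ.symm
  have he : ∀ j, (κ (e j) : ℕ) = j := fun j => by simp [e]
  have hnbrs : ∀ j, earlierNbrs G e j = {w | κ w < κ (e j) ∧ G.Adj (e j) w} := by
    intro j
    ext w
    simp only [earlierNbrs, Set.mem_ofPred_eq, Fin.lt_def, he]
    constructor
    · rintro ⟨j', hj', rfl, hadj⟩
      exact ⟨by rwa [he], hadj⟩
    · rintro ⟨hw, hadj⟩
      refine ⟨e.symm w, ?_, by simp, hadj⟩
      rwa [← he, Equiv.apply_symm_apply]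
  refine ⟨hN ▸ hk, e, ?_, fun j hj => ?_⟩
  · convert hinit
    ext v
    simp only [Set.mem_image, Set.mem_ofPred_eq]
    constructor
    · rintro ⟨j, hj, rfl⟩
      rwa [he]
    · intro hv
      exact ⟨e.symm v, by rwa [← he, Equiv.apply_symm_apply], by simp⟩
  · rw [hnbrs]
    exact hlater (e j) (by rwa [he])

lemma cycleAdj_of_cycleGraph_adj {N : ℕ} {u v : Fin N} (h : (cycleGraph N).Adj u v) :
    cycleAdj N u v := by
  have hsub : ∀ a b : Fin N, ((a - b : Fin N) : ℕ) = 1 →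
      (a : ℕ) = b + 1 ∨ ((a : ℕ) = 0 ∧ (b : ℕ) + 1 = N) := by
    intro a b hab
    rcases le_or_gt b a with hba | hab'
    · rw [Fin.coe_sub_iff_le.2 hba] at hab; omega
    · rw [Fin.coe_sub_iff_lt.2 hab'] at hab; omega
  rw [cycleGraph_adj'] at h
  unfold cycleAdj
  rcases h with h | h
  · have := hsub u v h; omega
  · have := hsub v u h; omega

lemma exists_isHamiltonian_of_cycleGraph_le {N : ℕ} (hN : 3 ≤ N) {G : SimpleGraph (Fin N)}
    (h : cycleGraph N ≤ G) : ∃ (u v : Fin N) (p : G.Walk u v), p.IsHamiltonian := by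
  obtain ⟨M, rfl⟩ : ∃ M, N = M + 3 := ⟨N - 3, by omega⟩
  refine ⟨_, _, (cycleGraph.cycle M).tail.mapLe h, ?_⟩
  rw [Walk.isHamiltonian_iff_isPath_and_length_eq]
  exact ⟨cycleGraph.isPath_tail_cycle.mapLe h, by simp⟩

def apexGraph (c i : ℕ) : SimpleGraph (Fin (3 * 2 ^ i + c)) where
  Adj u v := u ≠ v ∧ (3 * 2 ^ i ≤ (u : ℕ) ∨ 3 * 2 ^ i ≤ (v : ℕ) ∨ triAdj i u v)
  symm := ⟨fun _ _ h => ⟨h.1.symm, by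
    rcases h.2 with h | h | h
    exacts [Or.inr (Or.inl h), Or.inl h, Or.inr (Or.inr (triAdj_comm.1 h))]⟩⟩
  loopless := ⟨fun _ h => h.1 rfl⟩

section apexGraph

variable {c i : ℕ}

lemma apexGraph_adj_of_lt {u v : Fin (3 * 2 ^ i + c)} (hu : (u : ℕ) < 3 * 2 ^ i)
    (hv : (v : ℕ) < 3 * 2 ^ i) : (apexGraph c i).Adj u v ↔ u ≠ v ∧ triAdj i u v := by
  simp only [apexGraph, not_le.2 hu, not_le.2 hv, false_or]

lemma apexGraph_adj_of_apex {u v : Fin (3 * 2 ^ i + c)} (hu : 3 * 2 ^ i ≤ (u : ℕ)) (huv : u ≠ v) :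
    (apexGraph c i).Adj u v :=
  ⟨huv, Or.inl hu⟩

lemma cycleGraph_le_apexGraph : cycleGraph (3 * 2 ^ i + c) ≤ apexGraph c i := by
  intro u v h
  have hcyc := cycleAdj_of_cycleGraph_adj h
  by_cases hu : 3 * 2 ^ i ≤ (u : ℕ)
  · exact apexGraph_adj_of_apex hu h.ne
  by_cases hv : 3 * 2 ^ i ≤ (v : ℕ)
  · exact (apexGraph_adj_of_apex hv h.ne.symm).symm
  refine (apexGraph_adj_of_lt (not_le.1 hu) (not_le.1 hv)).2 ⟨h.ne, triAdj_of_cycleAdj ?_⟩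
  unfold cycleAdj at hcyc ⊢
  omega

variable (c i) in
def apexRank (v : Fin (3 * 2 ^ i + c)) : Fin (3 * 2 ^ i + c) :=
  if h : 3 * 2 ^ i ≤ (v : ℕ) then ⟨v - 3 * 2 ^ i, by omega⟩
  else ⟨c + triRank i v, by have := triRank_lt (not_le.1 h); omega⟩

lemma apexRank_of_apex {v : Fin (3 * 2 ^ i + c)} (hv : 3 * 2 ^ i ≤ (v : ℕ)) :
    (apexRank c i v : ℕ) = v - 3 * 2 ^ i := by
  simp [apexRank, hv]

lemma apexRank_of_lt {v : Fin (3 * 2 ^ i + c)} (hv : (v : ℕ) < 3 * 2 ^ i) :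
    (apexRank c i v : ℕ) = c + triRank i v := by
  simp [apexRank, not_le.2 hv]

lemma apexRank_injective : Function.Injective (apexRank c i) := by
  intro u v h
  have h' := congrArg Fin.val h
  apply Fin.ext
  by_cases hu : 3 * 2 ^ i ≤ (u : ℕ) <;> by_cases hv : 3 * 2 ^ i ≤ (v : ℕ)
  · rw [apexRank_of_apex hu, apexRank_of_apex hv] at h'; omega
  · rw [apexRank_of_apex hu, apexRank_of_lt (not_le.1 hv)] at h'; omega
  · rw [apexRank_of_lt (not_le.1 hu), apexRank_of_apex hv] at h'; omega
  · rw [apexRank_of_lt (not_le.1 hu), apexRank_of_lt (not_le.1 hv)] at h'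
    exact triRank_inj (not_le.1 hu) (not_le.1 hv) (by omega)

lemma apexGraph_isClique_apices_union {b b' : Fin (3 * 2 ^ i + c)} (hb : (b : ℕ) < 3 * 2 ^ i)
    (hb' : (b' : ℕ) < 3 * 2 ^ i) (hbb' : b ≠ b') (hadj : triAdj i b b') :
    (apexGraph c i).IsClique (Set.range (Fin.natAdd (3 * 2 ^ i)) ∪ {b, b'}) ∧
      (Set.range (Fin.natAdd (3 * 2 ^ i)) ∪ {b, b'}).ncard = c + 2 := by
  refine ⟨fun x hx y hy hxy => ?_, ?_⟩
  · rw [Fin.range_natAdd] at hx hy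
    rcases hx with hx | hx
    · exact apexGraph_adj_of_apex hx hxy
    rcases hy with hy | hy
    · exact (apexGraph_adj_of_apex hy hxy.symm).symm
    simp only [Set.mem_insert_iff, Set.mem_singleton_iff] at hx hy
    rcases hx with rfl | rfl <;> rcases hy with rfl | rfl
    · exact absurd rfl hxy
    · exact (apexGraph_adj_of_lt hb hb').2 ⟨hbb', hadj⟩
    · exact (apexGraph_adj_of_lt hb' hb).2 ⟨hbb'.symm, triAdj_comm.1 hadj⟩
    · exact absurd rfl hxy
  · have hdisj : Disjoint (Set.range (Fin.natAdd (3 * 2 ^ i) : Fin c → _)) {b, b'} := by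
      rw [Fin.range_natAdd, Set.disjoint_right]
      rintro x (rfl | rfl | -) <;> simp only [Set.mem_ofPred_eq, not_le] <;> omega
    rw [Set.ncard_union_eq hdisj, Set.ncard_range_of_injective (Fin.natAdd_injective _ _),
      Set.ncard_pair hbb', Nat.card_eq_fintype_card, Fintype.card_fin]

lemma apexGraph_earlier_eq {v : Fin (3 * 2 ^ i + c)} {b b' : ℕ} (hv : (v : ℕ) < 3 * 2 ^ i)
    (hb : b < 3 * 2 ^ i) (hb' : b' < 3 * 2 ^ i)
    (hearlier : ∀ x < 3 * 2 ^ i, (triRank i x < triRank i v ∧ triAdj i v x) ↔ x = b ∨ x = b') :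
    {w | apexRank c i w < apexRank c i v ∧ (apexGraph c i).Adj v w} =
      Set.range (Fin.natAdd (3 * 2 ^ i)) ∪ {⟨b, by omega⟩, ⟨b', by omega⟩} := by
  ext w
  rw [Fin.range_natAdd]
  simp only [Set.mem_union, Set.mem_ofPred_eq, Set.mem_insert_iff, Set.mem_singleton_iff,
    Fin.lt_def, apexRank_of_lt hv, Fin.ext_iff]
  by_cases hw : 3 * 2 ^ i ≤ (w : ℕ)
  · rw [apexRank_of_apex hw]
    exact iff_of_true ⟨by omega, (apexGraph_adj_of_apex hw (by rintro rfl; omega)).symm⟩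
      (Or.inl hw)
  · rw [apexRank_of_lt (not_le.1 hw), apexGraph_adj_of_lt hv (not_le.1 hw),
      ← hearlier w (not_le.1 hw)]
    constructor
    · rintro ⟨hlt, -, hadj⟩
      exact Or.inr ⟨by omega, hadj⟩
    · rintro (h | ⟨hlt, hadj⟩)
      · omega
      · exact ⟨by omega, fun h => by rw [h] at hlt; omega, hadj⟩

theorem apexGraph_isKTree : IsKTree (c + 2) (apexGraph c i) := by
  have h3 : 3 ≤ 3 * 2 ^ i := Nat.le_mul_of_pos_right 3 (by positivity)
  refine isKTree_of_equiv (Equiv.ofBijective _ (Finite.injective_iff_bijective.1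
    (apexRank_injective (c := c) (i := i)))) (by omega) ?_ fun v hv => ?_
  · intro u hu v hv huv
    by_cases hua : 3 * 2 ^ i ≤ (u : ℕ)
    · exact apexGraph_adj_of_apex hua huv
    by_cases hva : 3 * 2 ^ i ≤ (v : ℕ)
    · exact (apexGraph_adj_of_apex hva huv.symm).symm
    simp only [Set.mem_ofPred_eq, Equiv.ofBijective_apply, apexRank_of_lt (not_le.1 hua),
      apexRank_of_lt (not_le.1 hva)] at hu hv
    exact (apexGraph_adj_of_lt (not_le.1 hua) (not_le.1 hva)).2 ⟨huv,
      triAdj_of_triRank_lt_two (not_le.1 hua) (not_le.1 hva) (by omega) (by omega)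
        (Fin.val_injective.ne huv)⟩
  · simp only [Equiv.ofBijective_apply] at hv ⊢
    have hva : (v : ℕ) < 3 * 2 ^ i := by
      by_contra h
      rw [apexRank_of_apex (not_lt.1 h)] at hv
      omega
    rw [apexRank_of_lt hva] at hv
    obtain ⟨b, b', hb, hb', hbb', hadj, hearlier⟩ := exists_earlier_triAdj hva (by omega)
    rw [apexGraph_earlier_eq hva hb hb' hearlier]
    exact apexGraph_isClique_apices_union hb hb' (Fin.ne_of_val_ne hbb') hadj

theorem apexGraph_pathGraph_embedding_le {m : ℕ} (ψ : pathGraph m ↪g apexGraph c i) :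
    m ≤ 2 * i + 3 := by
  by_cases hapex : ∃ j, 3 * 2 ^ i ≤ (ψ j : ℕ)
  · obtain ⟨j, hj⟩ := hapex
    have := le_three_of_pathGraph_embedding_of_forall_adj ψ (j := j) fun w hw =>
      apexGraph_adj_of_apex hj hw.symm
    omega
  simp only [not_exists, not_le] at hapex
  let f : ℕ → ℕ := fun j => if h : j < m then ψ ⟨j, h⟩ else 0
  have hf : ∀ j (h : j < m), f j = ψ ⟨j, h⟩ := fun j h => dif_pos h
  have hadj : ∀ j l (hj : j < m) (hl : l < m), j ≠ l →
      (triAdj i (f j) (f l) ↔ (pathGraph m).Adj ⟨j, hj⟩ ⟨l, hl⟩) := by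
    intro j l hj hl hjl
    rw [← ψ.map_adj_iff, apexGraph_adj_of_lt (hapex _) (hapex _), hf j hj, hf l hl,
      and_iff_right (ψ.injective.ne (by simpa [Fin.ext_iff] using hjl))]
  refine IsInducedPathSeq.length_le (f := f)
    ⟨fun j l hjl hl => ?_, fun j hj => ?_, fun j l hjl hl => ?_⟩ fun j hj => hf j hj ▸ hapex _
  · rw [hf j (by omega), hf l hl]
    exact fun h => (by omega : j ≠ l) (by simpa using ψ.injective (Fin.ext h))
  · rw [hadj j (j + 1) (by omega) hj (by omega), pathGraph_adj]
    simp
  · rw [hadj j l (by omega) hl (by omega), pathGraph_adj]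
    dsimp only
    omega

end apexGraph

lemma natCast_le_two_mul_logb {m N : ℕ} (h : 2 ^ m ≤ N ^ 2) : (m : ℝ) ≤ 2 * Real.logb 2 N := by
  have hN : 0 < N := Nat.pos_of_ne_zero (by rintro rfl; simp at h)
  calc (m : ℝ) = Real.logb 2 ((2 : ℝ) ^ m) := by
        rw [Real.logb_pow, Real.logb_self_eq_one one_lt_two, mul_one]
    _ ≤ Real.logb 2 ((N : ℝ) ^ 2) :=
        Real.logb_le_logb_of_le one_lt_two (by positivity) (by exact_mod_cast h)
    _ = 2 * Real.logb 2 N := by rw [Real.logb_pow]; push_cast; ring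

lemma two_pow_two_mul_add_three_le_sq (i c : ℕ) : 2 ^ (2 * i + 3) ≤ (3 * 2 ^ i + c) ^ 2 :=
  calc 2 ^ (2 * i + 3) = 8 * (2 ^ i) ^ 2 := by ring
    _ ≤ 9 * (2 ^ i) ^ 2 := Nat.mul_le_mul_right _ (by norm_num)
    _ = (3 * 2 ^ i) ^ 2 := by ring
    _ ≤ (3 * 2 ^ i + c) ^ 2 := Nat.pow_le_pow_left (Nat.le_add_right _ _) 2

theorem exists_ktree_short_induced_paths_general (k : ℕ) (hk : 2 ≤ k) (i : ℕ) :
    ∃ G : SimpleGraph (Fin (3 * 2 ^ i + k - 2)),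
      IsKTree k G ∧
      (∃ (u v : Fin (3 * 2 ^ i + k - 2)) (p : G.Walk u v), p.IsPath ∧ ∀ w, w ∈ p.support) ∧
      ∀ m : ℕ, HasInducedPathOfSize G m →
        (m : ℝ) ≤ 2 * Real.logb 2 ((3 * 2 ^ i + k - 2 : ℕ) : ℝ) := by
  obtain ⟨c, rfl⟩ : ∃ c, k = c + 2 := ⟨k - 2, by omega⟩
  have h3 : 3 ≤ 3 * 2 ^ i + c := le_add_right (Nat.le_mul_of_pos_right 3 (by positivity))
  obtain ⟨u, v, p, hp⟩ := exists_isHamiltonian_of_cycleGraph_le h3 cycleGraph_le_apexGraph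
  refine ⟨apexGraph c i, apexGraph_isKTree, ⟨u, v, p, hp.isPath, hp.mem_support⟩, fun m hm => ?_⟩
  obtain ⟨ψ⟩ := hm.nonempty_embedding
  exact natCast_le_two_mul_logb <| (Nat.pow_le_pow_right two_pos
    (apexGraph_pathGraph_embedding_le ψ)).trans (two_pow_two_mul_add_three_le_sq i c)

/-- For all `k ≥ 2` and `i ≥ 1` there is a `k`-tree on `n = 3·2^i + k - 2` vertices with
a Hamiltonian path in which every induced path has size at most `2·log n`
(logarithm in base 2). -/
theorem exists_ktree_short_induced_paths (k : ℕ) (hk : 2 ≤ k) (i : ℕ) (hi : 1 ≤ i) :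
    ∃ G : SimpleGraph (Fin (3 * 2 ^ i + k - 2)),
      IsKTree k G ∧
      (∃ (u v : Fin (3 * 2 ^ i + k - 2)) (p : G.Walk u v), p.IsPath ∧ ∀ w, w ∈ p.support) ∧
      ∀ m : ℕ, HasInducedPathOfSize G m →
        (m : ℝ) ≤ 2 * Real.logb 2 ((3 * 2 ^ i + k - 2 : ℕ) : ℝ) :=
  exists_ktree_short_induced_paths_general k hk i
end
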